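/- arXiv:2404.19185 — 12 statements merged into one kernel-verified Lean document; each statement's English description precedes it below -/
import Mathlib

section
/- Strong duality for the φ-divergence mode-probability problem (Theorem 1, inner problem). Let L be a positive natural number, ψ : Fin L → ℝ, and let p̂ : Fin L → ℝ satisfy p̂ l > 0 for all l and ∑ l, p̂ l = 1. Let ρ > 0 be real and let φ : ℝ → ℝ be convex on [0,∞) (ConvexOn ℝ (Set.Ici 0) φ) with φ 1 = 0. Define the primal value v := sSup { ∑ l, p l * ψ l | p : Fin L → ℝ, (∀ l, 0 ≤ p l), ∑ l, p l = 1, ∑ l, p̂ l * φ (p l / p̂ l) ≤ ρ } (this set is nonempty, containing p̂, and bounded above). Then in the extended reals, (v : EReal) = ⨅ (λ : ℝ) (_ : 0 ≤ λ) (η : ℝ), ( (η : EReal) + ((ρ * λ : ℝ) : EReal) + ∑ l, ((p̂ l : ℝ) : EReal) * ⨆ (t : ℝ) (_ : 0 ≤ t), (((t * (ψ l - η) - λ * φ t) : ℝ) : EReal) ). -/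
open scoped BigOperators

private lemma real_le_of_forall_pos {a b : ℝ} (h : ∀ ε : ℝ, 0 < ε → a ≤ b + ε) : a ≤ b := by
  by_contra hc
  push_neg at hc
  have := h ((a - b) / 2) (by linarith)
  linarith

private lemma coe_sum' {α : Type*} (s : Finset α) (f : α → ℝ) :
    ((∑ x ∈ s, f x : ℝ) : EReal) = ∑ x ∈ s, ((f x : ℝ) : EReal) :=
  map_sum (⟨⟨Real.toEReal, EReal.coe_zero⟩, EReal.coe_add⟩ : ℝ →+ EReal) f s

private lemma ereal_sum_ne_bot {α : Type*} (s : Finset α) (f : α → EReal)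
    (h : ∀ a ∈ s, f a ≠ ⊥) : ∑ a ∈ s, f a ≠ ⊥ := by
  induction s using Finset.cons_induction with
  | empty => simp
  | cons a s ha ih =>
    rw [Finset.sum_cons]
    intro hbot
    rcases EReal.add_eq_bot_iff.1 hbot with h1 | h1
    · exact h a (Finset.mem_cons_self a s) h1
    · exact ih (fun b hb => h b (Finset.mem_cons_of_mem hb)) h1

private lemma ereal_sum_eq_top {α : Type*} [DecidableEq α] (s : Finset α) (f : α → EReal)
    (h : ∀ a ∈ s, f a ≠ ⊥) {a₀ : α} (ha₀ : a₀ ∈ s) (htop : f a₀ = ⊤) :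
    ∑ a ∈ s, f a = ⊤ := by
  rw [← Finset.add_sum_erase s f ha₀, htop]
  exact EReal.top_add_of_ne_bot
    (ereal_sum_ne_bot _ _ fun b hb => h b (Finset.mem_of_mem_erase hb))

private lemma exists_supergrad {f : ℝ → ℝ} (hf : ConcaveOn ℝ (Set.Ici (0 : ℝ)) f)
    {x : ℝ} (hx : 0 < x) :
    ∃ g : ℝ, (∀ y, 0 ≤ y → f y ≤ f x + g * (y - x)) ∧
      ((∀ y, x ≤ y → f x ≤ f y) → 0 ≤ g) := by
  set T : Set ℝ := {z | ∃ y : ℝ, x < y ∧ z = (f y - f x) / (y - x)} with hT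
  have hmemT : ∀ y, x < y → (f y - f x) / (y - x) ∈ T := fun y hy => ⟨y, hy, rfl⟩
  have hne : T.Nonempty := ⟨_, hmemT (x + 1) (by linarith)⟩
  have hub : ∀ z ∈ T, z ≤ (f x - f 0) / (x - 0) := by
    rintro z ⟨y, hy, rfl⟩
    exact hf.slope_anti_adjacent (Set.mem_Ici.2 le_rfl)
      (Set.mem_Ici.2 (by linarith)) hx hy
  have hbdd : BddAbove T := ⟨_, hub⟩
  refine ⟨sSup T, ?_, ?_⟩
  · intro y hy
    rcases lt_trichotomy y x with h | h | h
    · -- y < x : slope (y,x) is an upper bound of T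
      have hub2 : ∀ z ∈ T, z ≤ (f x - f y) / (x - y) := by
        rintro z ⟨y', hy', rfl⟩
        exact hf.slope_anti_adjacent (Set.mem_Ici.2 hy)
          (Set.mem_Ici.2 (by linarith)) h hy'
      have h1 : sSup T ≤ (f x - f y) / (x - y) := csSup_le hne hub2
      have h2 : sSup T * (x - y) ≤ f x - f y := by
        rw [← le_div_iff₀ (by linarith : (0:ℝ) < x - y)]
        exact h1
      nlinarith [h2]
    · subst h; simp
    · have h1 : (f y - f x) / (y - x) ≤ sSup T := le_csSup hbdd (hmemT y h)
      have h2 : f y - f x ≤ sSup T * (y - x) := by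
        rw [div_le_iff₀ (by linarith : (0:ℝ) < y - x)] at h1
        linarith [h1]
      linarith
  · intro hmono
    have h1 : (f (x + 1) - f x) / (x + 1 - x) ≤ sSup T := le_csSup hbdd (hmemT (x+1) (by linarith))
    have h2 : 0 ≤ (f (x + 1) - f x) / (x + 1 - x) := by
      have h3 := hmono (x + 1) (by linarith)
      have h4 : 0 ≤ f (x + 1) - f x := by linarith
      have h5 : x + 1 - x = 1 := by ring
      rw [h5]
      linarith
    linarith

private lemma mix_sSup_le {A B : Set ℝ} (hA : A.Nonempty) (hB : B.Nonempty)
    {θ κ c : ℝ} (hθ : 0 < θ) (hκ : 0 < κ)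
    (h : ∀ a ∈ A, ∀ b ∈ B, θ * a + κ * b ≤ c) :
    θ * sSup A + κ * sSup B ≤ c := by
  have hsB : ∀ a ∈ A, κ * sSup B ≤ c - θ * a := by
    intro a ha
    have h1 : sSup B ≤ (c - θ * a) / κ :=
      csSup_le hB fun b hb => by rw [le_div_iff₀ hκ]; nlinarith [h a ha b hb]
    have := (le_div_iff₀ hκ).mp h1
    linarith
  have h2 : sSup A ≤ (c - κ * sSup B) / θ :=
    csSup_le hA fun a ha => by rw [le_div_iff₀ hθ]; nlinarith [hsB a ha]
  have := (le_div_iff₀ hθ).mp h2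
  linarith

section

variable {L : ℕ} {ψ pHat : Fin L → ℝ} {φ : ℝ → ℝ}

private lemma support_line (hφConv : ConvexOn ℝ (Set.Ici (0 : ℝ)) φ) (hφOne : φ 1 = 0) :
    ∃ c : ℝ, ∀ t, 0 ≤ t → c * (t - 1) ≤ φ t := by
  obtain ⟨g, hg, -⟩ := exists_supergrad hφConv.neg one_pos
  refine ⟨-g, fun t ht => ?_⟩
  have := hg t ht
  simp only [Pi.neg_apply, hφOne] at this
  linarith

private lemma divergence_lb (hpHatPos : ∀ l, 0 < pHat l) (hpHatSum : ∑ l, pHat l = 1)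
    {c : ℝ} (hc : ∀ t, 0 ≤ t → c * (t - 1) ≤ φ t)
    (q : Fin L → ℝ) (hq : ∀ l, 0 ≤ q l) :
    c * ((∑ l, q l) - 1) ≤ ∑ l, pHat l * φ (q l / pHat l) := by
  calc c * ((∑ l, q l) - 1)
      = ∑ l, (c * q l - c * pHat l) := by
        rw [Finset.sum_sub_distrib, ← Finset.mul_sum, ← Finset.mul_sum, hpHatSum]; ring
    _ = ∑ l, pHat l * (c * (q l / pHat l - 1)) := Finset.sum_congr rfl fun l _ => by
        have h := (hpHatPos l).ne'
        field_simp
    _ ≤ ∑ l, pHat l * φ (q l / pHat l) := Finset.sum_le_sum fun l _ =>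
        mul_le_mul_of_nonneg_left (hc _ (div_nonneg (hq l) (hpHatPos l).le)) (hpHatPos l).le

private lemma obj_ub (q : Fin L → ℝ) (hq : ∀ l, 0 ≤ q l) :
    ∑ l, q l * ψ l ≤ (∑ l, q l) * ∑ l, |ψ l| := by
  calc ∑ l, q l * ψ l ≤ ∑ l, q l * |ψ l| :=
        Finset.sum_le_sum fun l _ => mul_le_mul_of_nonneg_left (le_abs_self _) (hq l)
    _ ≤ ∑ l, (∑ j, q j) * |ψ l| := Finset.sum_le_sum fun l _ =>
        mul_le_mul_of_nonneg_right
          (Finset.single_le_sum (fun j _ => hq j) (Finset.mem_univ l)) (abs_nonneg _)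
    _ = (∑ l, q l) * ∑ l, |ψ l| := by rw [Finset.mul_sum]

private lemma pHat_divergence (hpHatPos : ∀ l, 0 < pHat l) (hφOne : φ 1 = 0) :
    ∑ l, pHat l * φ (pHat l / pHat l) = 0 := by
  refine Finset.sum_eq_zero fun l _ => ?_
  rw [div_self (hpHatPos l).ne', hφOne, mul_zero]

end

section

variable {L : ℕ} {ψ pHat : Fin L → ℝ} {φ : ℝ → ℝ}

private lemma stepA (hpHatPos : ∀ l, 0 < pHat l) (hpHatSum : ∑ l, pHat l = 1)
    {ρ : ℝ} (hρ : 0 < ρ)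
    (hφConv : ConvexOn ℝ (Set.Ici (0 : ℝ)) φ) (hφOne : φ 1 = 0)
    {v : ℝ}
    (hv : v = sSup { x : ℝ | ∃ p : Fin L → ℝ, (∀ l, 0 ≤ p l) ∧ (∑ l, p l = 1) ∧
        (∑ l, pHat l * φ (p l / pHat l) ≤ ρ) ∧ x = ∑ l, p l * ψ l }) :
    ∃ lam : ℝ, 0 ≤ lam ∧ ∀ p : Fin L → ℝ, (∀ l, 0 ≤ p l) → (∑ l, p l = 1) →
      ∑ l, p l * ψ l ≤ v + lam * ((∑ l, pHat l * φ (p l / pHat l)) - ρ) := by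
  obtain ⟨c, hc⟩ := support_line hφConv hφOne
  set F : ℝ → Set ℝ := fun u => { x : ℝ | ∃ p : Fin L → ℝ, (∀ l, 0 ≤ p l) ∧ (∑ l, p l = 1) ∧
      (∑ l, pHat l * φ (p l / pHat l) ≤ u) ∧ x = ∑ l, p l * ψ l } with hF
  have hFBdd : ∀ u, BddAbove (F u) := by
    intro u
    refine ⟨∑ l, |ψ l|, ?_⟩
    rintro x ⟨p, hp, hps, -, rfl⟩
    have h1 := obj_ub (ψ := ψ) p hp
    rw [hps, one_mul] at h1
    exact h1
  have hFne : ∀ u, 0 ≤ u → (F u).Nonempty := by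
    intro u hu
    exact ⟨∑ l, pHat l * ψ l, pHat, fun l => (hpHatPos l).le, hpHatSum,
      by rw [pHat_divergence hpHatPos hφOne]; exact hu, rfl⟩
  have hVconc : ConcaveOn ℝ (Set.Ici (0 : ℝ)) (fun u => sSup (F u)) := by
    constructor
    · exact convex_Ici 0
    intro u₁ hu₁ u₂ hu₂ θ κ hθ hκ hθκ
    simp only [smul_eq_mul]
    rcases eq_or_lt_of_le hθ with h0 | hθ'
    · have hκ1 : κ = 1 := by linarith
      rw [← h0, hκ1]; norm_num
    rcases eq_or_lt_of_le hκ with k0 | hκ'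
    · have hθ1 : θ = 1 := by linarith
      rw [← k0, hθ1]; norm_num
    apply mix_sSup_le (hFne u₁ (Set.mem_Ici.1 hu₁)) (hFne u₂ (Set.mem_Ici.1 hu₂)) hθ' hκ'
    rintro a ⟨p₁, hp₁, hps₁, hd₁, rfl⟩ b ⟨p₂, hp₂, hps₂, hd₂, rfl⟩
    apply le_csSup (hFBdd _)
    refine ⟨fun l => θ * p₁ l + κ * p₂ l,
      fun l => add_nonneg (mul_nonneg hθ'.le (hp₁ l)) (mul_nonneg hκ'.le (hp₂ l)), ?_, ?_, ?_⟩
    · rw [Finset.sum_add_distrib, ← Finset.mul_sum, ← Finset.mul_sum, hps₁, hps₂]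
      linarith
    · calc ∑ l, pHat l * φ ((θ * p₁ l + κ * p₂ l) / pHat l)
          ≤ ∑ l, (θ * (pHat l * φ (p₁ l / pHat l)) + κ * (pHat l * φ (p₂ l / pHat l))) := by
            refine Finset.sum_le_sum fun l _ => ?_
            have harg : (θ * p₁ l + κ * p₂ l) / pHat l
                = θ * (p₁ l / pHat l) + κ * (p₂ l / pHat l) := by
              field_simp
            have hcv := hφConv.2 (Set.mem_Ici.2 (div_nonneg (hp₁ l) (hpHatPos l).le))
              (Set.mem_Ici.2 (div_nonneg (hp₂ l) (hpHatPos l).le)) hθ hκ hθκ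
            simp only [smul_eq_mul] at hcv
            rw [harg]
            calc pHat l * φ (θ * (p₁ l / pHat l) + κ * (p₂ l / pHat l))
                ≤ pHat l * (θ * φ (p₁ l / pHat l) + κ * φ (p₂ l / pHat l)) :=
                  mul_le_mul_of_nonneg_left hcv (hpHatPos l).le
              _ = θ * (pHat l * φ (p₁ l / pHat l)) + κ * (pHat l * φ (p₂ l / pHat l)) := by
                  ring
        _ = θ * (∑ l, pHat l * φ (p₁ l / pHat l)) + κ * (∑ l, pHat l * φ (p₂ l / pHat l)) := by
            rw [Finset.sum_add_distrib, ← Finset.mul_sum, ← Finset.mul_sum]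
        _ ≤ θ * u₁ + κ * u₂ := by
            have t1 := mul_le_mul_of_nonneg_left hd₁ hθ'.le
            have t2 := mul_le_mul_of_nonneg_left hd₂ hκ'.le
            linarith
    · rw [Finset.sum_congr rfl (fun l _ => (by ring :
        (θ * p₁ l + κ * p₂ l) * ψ l = θ * (p₁ l * ψ l) + κ * (p₂ l * ψ l))),
        Finset.sum_add_distrib, ← Finset.mul_sum, ← Finset.mul_sum]
  have hVmono : ∀ u, ρ ≤ u → sSup (F ρ) ≤ sSup (F u) := by
    intro u hu
    refine csSup_le_csSup (hFBdd u) (hFne ρ hρ.le) ?_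
    rintro x ⟨p, h1, h2, h3, h4⟩
    exact ⟨p, h1, h2, h3.trans hu, h4⟩
  obtain ⟨lam, hgrad, hnn⟩ := exists_supergrad hVconc hρ
  have hlam0 : 0 ≤ lam := hnn fun y hy => hVmono y hy
  refine ⟨lam, hlam0, ?_⟩
  intro p hp hps
  have hu0 : 0 ≤ ∑ l, pHat l * φ (p l / pHat l) := by
    have h1 := divergence_lb hpHatPos hpHatSum hc p hp
    rw [hps] at h1
    simpa using h1
  have h1 : (∑ l, p l * ψ l) ≤ sSup (F (∑ l, pHat l * φ (p l / pHat l))) :=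
    le_csSup (hFBdd _) ⟨p, hp, hps, le_rfl, rfl⟩
  have h2 := hgrad _ hu0
  have hvF : v = sSup (F ρ) := hv
  linarith

end

section

variable {L : ℕ} {ψ pHat : Fin L → ℝ} {φ : ℝ → ℝ}

private lemma stepB (hpHatPos : ∀ l, 0 < pHat l) (hpHatSum : ∑ l, pHat l = 1)
    {ρ : ℝ} (hρ : 0 < ρ)
    (hφConv : ConvexOn ℝ (Set.Ici (0 : ℝ)) φ) (hφOne : φ 1 = 0)
    {v lam : ℝ} (hlam0 : 0 ≤ lam)
    (hA : ∀ p : Fin L → ℝ, (∀ l, 0 ≤ p l) → (∑ l, p l = 1) →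
      ∑ l, p l * ψ l ≤ v + lam * ((∑ l, pHat l * φ (p l / pHat l)) - ρ)) :
    ∃ eta : ℝ, ∀ q : Fin L → ℝ, (∀ l, 0 ≤ q l) →
      (∑ l, q l * ψ l) - lam * (∑ l, pHat l * φ (q l / pHat l))
        ≤ (v - lam * ρ) + eta * ((∑ l, q l) - 1) := by
  obtain ⟨c, hc⟩ := support_line hφConv hφOne
  set G : ℝ → Set ℝ := fun s => { x : ℝ | ∃ q : Fin L → ℝ, (∀ l, 0 ≤ q l) ∧ (∑ l, q l = s) ∧
      x = (∑ l, q l * ψ l) - lam * (∑ l, pHat l * φ (q l / pHat l)) } with hG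
  have hGBdd : ∀ s, BddAbove (G s) := by
    intro s
    refine ⟨s * (∑ l, |ψ l|) - lam * (c * (s - 1)), ?_⟩
    rintro x ⟨q, hq, hqs, rfl⟩
    have h1 := obj_ub (ψ := ψ) q hq
    rw [hqs] at h1
    have h2 := divergence_lb hpHatPos hpHatSum hc q hq
    rw [hqs] at h2
    have h3 := mul_le_mul_of_nonneg_left h2 hlam0
    linarith
  have hGne : ∀ s, 0 ≤ s → (G s).Nonempty := by
    intro s hs
    exact ⟨_, fun l => s * pHat l, fun l => mul_nonneg hs (hpHatPos l).le,
      by rw [← Finset.mul_sum, hpHatSum, mul_one], rfl⟩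
  have hWconc : ConcaveOn ℝ (Set.Ici (0 : ℝ)) (fun s => sSup (G s)) := by
    constructor
    · exact convex_Ici 0
    intro u₁ hu₁ u₂ hu₂ θ κ hθ hκ hθκ
    simp only [smul_eq_mul]
    rcases eq_or_lt_of_le hθ with h0 | hθ'
    · have hκ1 : κ = 1 := by linarith
      rw [← h0, hκ1]; norm_num
    rcases eq_or_lt_of_le hκ with k0 | hκ'
    · have hθ1 : θ = 1 := by linarith
      rw [← k0, hθ1]; norm_num
    apply mix_sSup_le (hGne u₁ (Set.mem_Ici.1 hu₁)) (hGne u₂ (Set.mem_Ici.1 hu₂)) hθ' hκ'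
    rintro a ⟨q₁, hq₁, hqs₁, rfl⟩ b ⟨q₂, hq₂, hqs₂, rfl⟩
    have hmem : ((∑ l, (θ * q₁ l + κ * q₂ l) * ψ l)
        - lam * (∑ l, pHat l * φ ((θ * q₁ l + κ * q₂ l) / pHat l))) ∈ G (θ * u₁ + κ * u₂) := by
      refine ⟨fun l => θ * q₁ l + κ * q₂ l,
        fun l => add_nonneg (mul_nonneg hθ'.le (hq₁ l)) (mul_nonneg hκ'.le (hq₂ l)), ?_, rfl⟩
      rw [Finset.sum_add_distrib, ← Finset.mul_sum, ← Finset.mul_sum, hqs₁, hqs₂]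
    refine le_trans ?_ (le_csSup (hGBdd _) hmem)
    -- linear part
    have hlin : ∑ l, (θ * q₁ l + κ * q₂ l) * ψ l
        = θ * (∑ l, q₁ l * ψ l) + κ * (∑ l, q₂ l * ψ l) := by
      rw [Finset.sum_congr rfl (fun l _ => (by ring :
        (θ * q₁ l + κ * q₂ l) * ψ l = θ * (q₁ l * ψ l) + κ * (q₂ l * ψ l))),
        Finset.sum_add_distrib, ← Finset.mul_sum, ← Finset.mul_sum]
    -- divergence convexity
    have hdiv : ∑ l, pHat l * φ ((θ * q₁ l + κ * q₂ l) / pHat l)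
        ≤ θ * (∑ l, pHat l * φ (q₁ l / pHat l)) + κ * (∑ l, pHat l * φ (q₂ l / pHat l)) := by
      calc ∑ l, pHat l * φ ((θ * q₁ l + κ * q₂ l) / pHat l)
          ≤ ∑ l, (θ * (pHat l * φ (q₁ l / pHat l)) + κ * (pHat l * φ (q₂ l / pHat l))) := by
            refine Finset.sum_le_sum fun l _ => ?_
            have harg : (θ * q₁ l + κ * q₂ l) / pHat l
                = θ * (q₁ l / pHat l) + κ * (q₂ l / pHat l) := by
              field_simp
            have hcv := hφConv.2 (Set.mem_Ici.2 (div_nonneg (hq₁ l) (hpHatPos l).le))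
              (Set.mem_Ici.2 (div_nonneg (hq₂ l) (hpHatPos l).le)) hθ hκ hθκ
            simp only [smul_eq_mul] at hcv
            rw [harg]
            calc pHat l * φ (θ * (q₁ l / pHat l) + κ * (q₂ l / pHat l))
                ≤ pHat l * (θ * φ (q₁ l / pHat l) + κ * φ (q₂ l / pHat l)) :=
                  mul_le_mul_of_nonneg_left hcv (hpHatPos l).le
              _ = θ * (pHat l * φ (q₁ l / pHat l)) + κ * (pHat l * φ (q₂ l / pHat l)) := by
                  ring
        _ = θ * (∑ l, pHat l * φ (q₁ l / pHat l)) + κ * (∑ l, pHat l * φ (q₂ l / pHat l)) := by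
            rw [Finset.sum_add_distrib, ← Finset.mul_sum, ← Finset.mul_sum]
    have hdiv2 := mul_le_mul_of_nonneg_left hdiv hlam0
    rw [hlin]
    nlinarith [hdiv2]
  have hW1 : sSup (G 1) ≤ v - lam * ρ := by
    refine csSup_le (hGne 1 zero_le_one) ?_
    rintro x ⟨q, hq, hqs, rfl⟩
    have := hA q hq hqs
    linarith
  obtain ⟨eta, hgrad, -⟩ := exists_supergrad hWconc one_pos
  refine ⟨eta, fun q hq => ?_⟩
  have hs0 : 0 ≤ ∑ l, q l := Finset.sum_nonneg fun l _ => hq l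
  have h1 : ((∑ l, q l * ψ l) - lam * (∑ l, pHat l * φ (q l / pHat l)))
      ≤ sSup (G (∑ l, q l)) := le_csSup (hGBdd _) ⟨q, hq, rfl, rfl⟩
  have h2 := hgrad _ hs0
  linarith

end

/-- Strong duality for the φ-divergence mode-probability problem
(Theorem 1, inner problem). -/
theorem phi_divergence_strong_duality
    (L : ℕ) (hL : 0 < L) (ψ pHat : Fin L → ℝ)
    (hpHatPos : ∀ l, 0 < pHat l) (hpHatSum : ∑ l, pHat l = 1)
    (ρ : ℝ) (hρ : 0 < ρ) (φ : ℝ → ℝ)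
    (hφConv : ConvexOn ℝ (Set.Ici (0 : ℝ)) φ) (hφOne : φ 1 = 0)
    (v : ℝ)
    (hv : v = sSup { x : ℝ | ∃ p : Fin L → ℝ, (∀ l, 0 ≤ p l) ∧ (∑ l, p l = 1) ∧
        (∑ l, pHat l * φ (p l / pHat l) ≤ ρ) ∧ x = ∑ l, p l * ψ l }) :
    (v : EReal) = ⨅ (lam : ℝ) (_ : 0 ≤ lam) (η : ℝ),
      ((η : EReal) + ((ρ * lam : ℝ) : EReal)
        + ∑ l, ((pHat l : ℝ) : EReal) *
            ⨆ (t : ℝ) (_ : 0 ≤ t), (((t * (ψ l - η) - lam * φ t) : ℝ) : EReal)) := by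
  obtain ⟨lam, hlam0, hA⟩ := stepA hpHatPos hpHatSum hρ hφConv hφOne hv
  obtain ⟨eta, hB⟩ := stepB hpHatPos hpHatSum hρ hφConv hφOne hlam0 hA
  refine le_antisymm ?_ ?_
  · -- weak duality
    refine le_iInf fun lam' => le_iInf fun hlam' => le_iInf fun η => ?_
    set S : Fin L → EReal := fun l =>
      ⨆ (t : ℝ) (_ : 0 ≤ t), (((t * (ψ l - η) - lam' * φ t) : ℝ) : EReal) with hSdef
    have hSlb : ∀ l, ((ψ l - η : ℝ) : EReal) ≤ S l := by
      intro l
      have h0 : ((ψ l - η : ℝ) : EReal)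
          = ((((1:ℝ) * (ψ l - η) - lam' * φ 1) : ℝ) : EReal) := by
        rw [hφOne]; norm_num
      rw [h0]
      exact le_iSup_of_le 1 (le_iSup_of_le zero_le_one le_rfl)
    have hSnb : ∀ l, S l ≠ ⊥ :=
      fun l => ((EReal.bot_lt_coe _).trans_le (hSlb l)).ne'
    by_cases htop : ∀ l, S l ≠ ⊤
    · have hS : ∀ l, S l = (((S l).toReal : ℝ) : EReal) :=
        fun l => (EReal.coe_toReal (htop l) (hSnb l)).symm
      set r : Fin L → ℝ := fun l => (S l).toReal with hrdef
      have hrge : ∀ l, ∀ t : ℝ, 0 ≤ t → t * (ψ l - η) - lam' * φ t ≤ r l := by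
        intro l t ht
        have h1 : (((t * (ψ l - η) - lam' * φ t : ℝ)) : EReal) ≤ S l :=
          le_iSup_of_le t (le_iSup_of_le ht le_rfl)
        rw [hS l] at h1
        exact EReal.coe_le_coe_iff.1 h1
      have hRHS : (η : EReal) + ((ρ * lam' : ℝ) : EReal) + ∑ l, ((pHat l : ℝ) : EReal) * S l
          = (((η + ρ * lam' + ∑ l, pHat l * r l : ℝ)) : EReal) := by
        rw [EReal.coe_add, EReal.coe_add, coe_sum']
        congr 1
        refine Finset.sum_congr rfl fun l _ => ?_
        rw [EReal.coe_mul, ← hS l]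
      rw [hRHS, EReal.coe_le_coe_iff, hv]
      refine csSup_le ⟨∑ l, pHat l * ψ l, pHat, fun l => (hpHatPos l).le, hpHatSum,
        by rw [pHat_divergence hpHatPos hφOne]; exact hρ.le, rfl⟩ ?_
      rintro x ⟨p, hp, hps, hd, rfl⟩
      have key : ∀ l, p l * (ψ l - η) - lam' * (pHat l * φ (p l / pHat l)) ≤ pHat l * r l := by
        intro l
        have h1 := hrge l (p l / pHat l) (div_nonneg (hp l) (hpHatPos l).le)
        have h2 := mul_le_mul_of_nonneg_left h1 (hpHatPos l).le
        have h3 : pHat l * (p l / pHat l * (ψ l - η) - lam' * φ (p l / pHat l))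
            = p l * (ψ l - η) - lam' * (pHat l * φ (p l / pHat l)) := by
          have hne := (hpHatPos l).ne'
          field_simp
        rw [h3] at h2
        exact h2
      have hsum := Finset.sum_le_sum (fun l (_ : l ∈ Finset.univ) => key l)
      have hexp : ∑ l, (p l * (ψ l - η) - lam' * (pHat l * φ (p l / pHat l)))
          = (∑ l, p l * ψ l) - η - lam' * (∑ l, pHat l * φ (p l / pHat l)) := by
        calc ∑ l, (p l * (ψ l - η) - lam' * (pHat l * φ (p l / pHat l)))
            = (∑ l, (p l * ψ l - η * p l)) - lam' * ∑ l, pHat l * φ (p l / pHat l) := by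
              rw [Finset.sum_sub_distrib, ← Finset.mul_sum]
              congr 1
              exact Finset.sum_congr rfl fun l _ => by ring
          _ = (∑ l, p l * ψ l) - η - lam' * (∑ l, pHat l * φ (p l / pHat l)) := by
              rw [Finset.sum_sub_distrib, ← Finset.mul_sum, hps, mul_one]
      rw [hexp] at hsum
      have hlast : lam' * (∑ l, pHat l * φ (p l / pHat l)) ≤ lam' * ρ :=
        mul_le_mul_of_nonneg_left hd hlam'
      linarith
    · push_neg at htop
      obtain ⟨l₀, hl₀⟩ := htop
      have hterm_ne_bot : ∀ l, ((pHat l : ℝ) : EReal) * S l ≠ ⊥ := by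
        intro l
        have h1 : ((pHat l : ℝ) : EReal) * ((ψ l - η : ℝ) : EReal)
            ≤ ((pHat l : ℝ) : EReal) * S l :=
          mul_le_mul_of_nonneg_left (hSlb l)
            (by exact_mod_cast (hpHatPos l).le)
        rw [← EReal.coe_mul] at h1
        exact ((EReal.bot_lt_coe _).trans_le h1).ne'
      have hsumtop : ∑ l, ((pHat l : ℝ) : EReal) * S l = ⊤ :=
        ereal_sum_eq_top _ _ (fun l _ => hterm_ne_bot l) (Finset.mem_univ l₀)
          (by rw [hl₀]; exact EReal.mul_top_of_pos (by exact_mod_cast hpHatPos l₀))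
      rw [hsumtop]
      have h2 : (η : EReal) + ((ρ * lam' : ℝ) : EReal) + ⊤ = ⊤ :=
        EReal.add_top_of_ne_bot (by rw [← EReal.coe_add]; exact EReal.coe_ne_bot _)
      rw [h2]
      exact le_top
  · -- strong duality
    refine (iInf_le _ lam).trans ((iInf_le _ hlam0).trans ((iInf_le _ eta).trans ?_))
    set S : Fin L → EReal := fun l =>
      ⨆ (t : ℝ) (_ : 0 ≤ t), (((t * (ψ l - eta) - lam * φ t) : ℝ) : EReal) with hSdef
    have hSlb : ∀ l, ((ψ l - eta : ℝ) : EReal) ≤ S l := by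
      intro l
      have h0 : ((ψ l - eta : ℝ) : EReal)
          = ((((1:ℝ) * (ψ l - eta) - lam * φ 1) : ℝ) : EReal) := by
        rw [hφOne]; norm_num
      rw [h0]
      exact le_iSup_of_le 1 (le_iSup_of_le zero_le_one le_rfl)
    have hSnb : ∀ l, S l ≠ ⊥ :=
      fun l => ((EReal.bot_lt_coe _).trans_le (hSlb l)).ne'
    have hC : ∀ l, ∀ t : ℝ, 0 ≤ t → t * (ψ l - eta) - lam * φ t
        ≤ (v - lam * ρ + eta * ((∑ j ∈ Finset.univ.erase l, pHat j) - 1)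
            - ∑ j ∈ Finset.univ.erase l, pHat j * ψ j) / pHat l := by
      intro l t ht
      have hupd_same : Function.update pHat l (pHat l * t) l = pHat l * t :=
        Function.update_self _ _ _
      have hupd_ne : ∀ j, j ≠ l → Function.update pHat l (pHat l * t) j = pHat j :=
        fun j hj => Function.update_of_ne hj _ _
      have hq : ∀ j, 0 ≤ Function.update pHat l (pHat l * t) j := by
        intro j
        by_cases hj : j = l
        · subst hj; rw [hupd_same]; exact mul_nonneg (hpHatPos j).le ht
        · rw [hupd_ne j hj]; exact (hpHatPos j).le
      have hsum_q : ∑ j, Function.update pHat l (pHat l * t) j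
          = pHat l * t + ∑ j ∈ Finset.univ.erase l, pHat j := by
        rw [← Finset.add_sum_erase _ _ (Finset.mem_univ l), hupd_same]
        congr 1
        exact Finset.sum_congr rfl fun j hj => hupd_ne j (Finset.ne_of_mem_erase hj)
      have hD_q : ∑ j, pHat j * φ (Function.update pHat l (pHat l * t) j / pHat j)
          = pHat l * φ t := by
        rw [← Finset.add_sum_erase _
          (fun j => pHat j * φ (Function.update pHat l (pHat l * t) j / pHat j))
          (Finset.mem_univ l)]
        have h1 : pHat l * φ (Function.update pHat l (pHat l * t) l / pHat l)
            = pHat l * φ t := by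
          rw [hupd_same, mul_div_cancel_left₀ _ (hpHatPos l).ne']
        have h2 : ∑ j ∈ Finset.univ.erase l,
            pHat j * φ (Function.update pHat l (pHat l * t) j / pHat j) = 0 :=
          Finset.sum_eq_zero fun j hj => by
            rw [hupd_ne j (Finset.ne_of_mem_erase hj), div_self (hpHatPos j).ne',
              hφOne, mul_zero]
        rw [h1, h2, add_zero]
      have hobj_q : ∑ j, Function.update pHat l (pHat l * t) j * ψ j
          = pHat l * t * ψ l + ∑ j ∈ Finset.univ.erase l, pHat j * ψ j := by
        rw [← Finset.add_sum_erase _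
          (fun j => Function.update pHat l (pHat l * t) j * ψ j) (Finset.mem_univ l),
          hupd_same]
        congr 1
        exact Finset.sum_congr rfl fun j hj => by
          rw [hupd_ne j (Finset.ne_of_mem_erase hj)]
      have hkey := hB (Function.update pHat l (pHat l * t)) hq
      rw [hsum_q, hD_q, hobj_q] at hkey
      rw [le_div_iff₀ (hpHatPos l)]
      nlinarith [hkey]
    have hStop : ∀ l, S l ≠ ⊤ := by
      intro l
      have h1 : S l ≤ (((v - lam * ρ + eta * ((∑ j ∈ Finset.univ.erase l, pHat j) - 1)
          - ∑ j ∈ Finset.univ.erase l, pHat j * ψ j) / pHat l : ℝ) : EReal) :=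
        iSup_le fun t => iSup_le fun ht => EReal.coe_le_coe_iff.2 (hC l t ht)
      exact ne_top_of_le_ne_top (EReal.coe_ne_top _) h1
    have hS : ∀ l, S l = (((S l).toReal : ℝ) : EReal) :=
      fun l => (EReal.coe_toReal (hStop l) (hSnb l)).symm
    set r : Fin L → ℝ := fun l => (S l).toReal with hrdef
    have hfin : ∑ l, pHat l * r l ≤ v - lam * ρ - eta := by
      apply real_le_of_forall_pos
      intro ε hε
      have hex : ∀ l, ∃ t : ℝ, 0 ≤ t ∧ r l - ε < t * (ψ l - eta) - lam * φ t := by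
        intro l
        by_contra hcon
        push_neg at hcon
        have h1 : S l ≤ (((r l - ε : ℝ)) : EReal) :=
          iSup_le fun t => iSup_le fun ht => EReal.coe_le_coe_iff.2 (hcon t ht)
        rw [hS l] at h1
        have := EReal.coe_le_coe_iff.1 h1
        linarith
      choose tf htf0 htf using hex
      have hkey := hB (fun j => pHat j * tf j) (fun j => mul_nonneg (hpHatPos j).le (htf0 j))
      have hDq : ∑ j, pHat j * φ (pHat j * tf j / pHat j) = ∑ j, pHat j * φ (tf j) :=
        Finset.sum_congr rfl fun j _ => by rw [mul_div_cancel_left₀ _ (hpHatPos j).ne']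
      rw [hDq] at hkey
      have hstep : ∑ l, pHat l * r l
          ≤ ∑ l, pHat l * (tf l * (ψ l - eta) - lam * φ (tf l) + ε) :=
        Finset.sum_le_sum fun l _ =>
          mul_le_mul_of_nonneg_left (by linarith [htf l]) (hpHatPos l).le
      have hexp : ∑ l, pHat l * (tf l * (ψ l - eta) - lam * φ (tf l) + ε)
          = (∑ l, pHat l * tf l * ψ l) - eta * (∑ l, pHat l * tf l)
            - lam * (∑ l, pHat l * φ (tf l)) + ε := by
        calc ∑ l, pHat l * (tf l * (ψ l - eta) - lam * φ (tf l) + ε)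
            = ∑ l, (pHat l * tf l * ψ l - eta * (pHat l * tf l)
                - lam * (pHat l * φ (tf l)) + ε * pHat l) :=
              Finset.sum_congr rfl fun l _ => by ring
          _ = _ := by
              rw [Finset.sum_add_distrib, Finset.sum_sub_distrib, Finset.sum_sub_distrib,
                ← Finset.mul_sum, ← Finset.mul_sum, ← Finset.mul_sum, hpHatSum, mul_one]
      rw [hexp] at hstep
      nlinarith [hkey, hstep]
    have hRHS : (eta : EReal) + ((ρ * lam : ℝ) : EReal) + ∑ l, ((pHat l : ℝ) : EReal) * S l
        = (((eta + ρ * lam + ∑ l, pHat l * r l : ℝ)) : EReal) := by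
      rw [EReal.coe_add, EReal.coe_add, coe_sum']
      congr 1
      refine Finset.sum_congr rfl fun l _ => ?_
      rw [EReal.coe_mul, ← hS l]
    rw [hRHS, EReal.coe_le_coe_iff]
    nlinarith [hfin]
end

section
/- Weak Lagrangian duality for the φ-divergence mode-probability problem. Let L be a positive natural number, ψ : Fin L → ℝ, p̂ : Fin L → ℝ with p̂ l > 0 for all l and ∑ l, p̂ l = 1, φ : ℝ → ℝ, and ρ, η, λ ∈ ℝ with λ ≥ 0. For every p : Fin L → ℝ with p l ≥ 0 for all l, ∑ l, p l = 1, and ∑ l, p̂ l * φ (p l / p̂ l) ≤ ρ, one has in the extended reals: ((∑ l, p l * ψ l : ℝ) : EReal) ≤ (η : EReal) + ((ρ * λ : ℝ) : EReal) + ∑ l, ((p̂ l : ℝ) : EReal) * ⨆ (t : ℝ) (_ : 0 ≤ t), (((t * (ψ l - η) - λ * φ t) : ℝ) : EReal). -/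
open scoped BigOperators

/-- Weak Lagrangian duality for the φ-divergence mode-probability problem. -/
theorem phi_divergence_weak_duality
    (L : ℕ) (hL : 0 < L) (ψ pHat : Fin L → ℝ)
    (hpHatPos : ∀ l, 0 < pHat l) (hpHatSum : ∑ l, pHat l = 1)
    (φ : ℝ → ℝ) (ρ η lam : ℝ) (hlam : 0 ≤ lam)
    (p : Fin L → ℝ) (hp : ∀ l, 0 ≤ p l) (hp1 : ∑ l, p l = 1)
    (hpρ : ∑ l, pHat l * φ (p l / pHat l) ≤ ρ) :
    ((∑ l, p l * ψ l : ℝ) : EReal) ≤ (η : EReal) + ((ρ * lam : ℝ) : EReal)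
      + ∑ l, ((pHat l : ℝ) : EReal) *
          ⨆ (t : ℝ) (_ : 0 ≤ t), (((t * (ψ l - η) - lam * φ t) : ℝ) : EReal) := by
  set c : Fin L → ℝ := fun l => (p l / pHat l) * (ψ l - η) - lam * φ (p l / pHat l) with hc
  have key : (∑ l, p l * ψ l : ℝ) ≤ η + ρ * lam + ∑ l, pHat l * c l := by
    have hsum : ∑ l, pHat l * c l
        = ∑ l, p l * (ψ l - η) - lam * ∑ l, pHat l * φ (p l / pHat l) := by
      rw [Finset.mul_sum, ← Finset.sum_sub_distrib]
      refine Finset.sum_congr rfl fun l _ => ?_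
      have h := (hpHatPos l).ne'
      simp only [hc]
      field_simp
    have h1 : ∑ l, p l * (ψ l - η) = (∑ l, p l * ψ l) - η := by
      simp [mul_sub, Finset.sum_sub_distrib, ← Finset.sum_mul, hp1]
    have h2 : lam * ∑ l, pHat l * φ (p l / pHat l) ≤ lam * ρ :=
      mul_le_mul_of_nonneg_left hpρ hlam
    rw [hsum, h1]
    nlinarith [h2]
  calc ((∑ l, p l * ψ l : ℝ) : EReal)
      ≤ ((η + ρ * lam + ∑ l, pHat l * c l : ℝ) : EReal) := EReal.coe_le_coe_iff.2 key
    _ = (η : EReal) + ((ρ * lam : ℝ) : EReal) + ((∑ l, pHat l * c l : ℝ) : EReal) := by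
        push_cast; rfl
    _ ≤ (η : EReal) + ((ρ * lam : ℝ) : EReal)
        + ∑ l, ((pHat l : ℝ) : EReal) *
            ⨆ (t : ℝ) (_ : 0 ≤ t), (((t * (ψ l - η) - lam * φ t) : ℝ) : EReal) := by
        refine add_le_add_right ?_ _
        have hmap : ((∑ l, pHat l * c l : ℝ) : EReal)
            = ∑ l, ((pHat l * c l : ℝ) : EReal) :=
          map_sum (⟨⟨Real.toEReal, rfl⟩, fun x y => EReal.coe_add x y⟩ : ℝ →+ EReal) _ _
        rw [hmap]
        refine Finset.sum_le_sum fun l _ => ?_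
        rw [EReal.coe_mul]
        refine mul_le_mul_of_nonneg_left ?_ (by exact_mod_cast (hpHatPos l).le)
        have h0 : (0:ℝ) ≤ p l / pHat l := div_nonneg (hp l) (hpHatPos l).le
        exact le_iSup_of_le (p l / pHat l) (le_iSup_of_le h0 le_rfl)
end

section
/- Variation-distance reformulation (Theorem 2, inner problem). Let L be a positive natural number, ψ : Fin L → ℝ, p̂ : Fin L → ℝ with p̂ l ≥ 0 for all l and ∑ l, p̂ l = 1, and ρ ≥ 0 real. Then sSup { ∑ l, p l * ψ l | p : Fin L → ℝ, (∀ l, 0 ≤ p l), ∑ l, p l = 1, ∑ l, |p l - p̂ l| ≤ ρ } = sInf { η + ρ * λ + ∑ l, p̂ l * r l | η : ℝ, λ : ℝ, r : Fin L → ℝ, 0 ≤ λ, ∀ l, (ψ l - η ≤ r l ∧ -λ ≤ r l ∧ ψ l - η ≤ λ) }. Both sets of real numbers are nonempty, the first is bounded above and the second is bounded below, and the two conditional supremum/infimum values coincide. -/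
/-!
Weak duality holds term by term:
`p l * ψ l ≤ p l * η + p̂ l * r l + λ * |p l - p̂ l|` for every `l`.
For strong duality let `M = ψ m` be the largest value of `ψ`. The worst-case distribution moves
mass `ρ / 2` (or all the mass below `M`, if that is less) from the lowest values of `ψ` to `m`:
it removes from `p̂` everything strictly below some level `β` and a fraction of the mass at `β`.
It attains `∑ l, p̂ l * max (ψ l) β + ρ / 2 * (M - β)`, and so does the dual point
`η = (M + β) / 2`, `λ = (M - β) / 2`, `r l = max (ψ l) β - η`.
-/

open Finset

section WeakDuality

theorem mul_le_of_dual_feasible {p pHat ψ η lam r : ℝ} (hp : 0 ≤ p) (hpHat : 0 ≤ pHat)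
    (hr : ψ - η ≤ r) (hlam_r : -lam ≤ r) (hlam : ψ - η ≤ lam) :
    p * ψ ≤ p * η + pHat * r + lam * |p - pHat| := by
  rcases le_total pHat p with h | h
  · rw [abs_of_nonneg (sub_nonneg.2 h)]
    nlinarith [mul_nonneg (sub_nonneg.2 h) (sub_nonneg.2 hlam),
      mul_nonneg hpHat (sub_nonneg.2 hr)]
  · rw [abs_of_nonpos (sub_nonpos.2 h)]
    nlinarith [mul_nonneg hp (sub_nonneg.2 hr),
      mul_nonneg (sub_nonneg.2 h) (neg_le_iff_add_nonneg.1 hlam_r)]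

theorem sum_mul_le_of_dual_feasible {ι : Type*} [Fintype ι] {p pHat ψ r : ι → ℝ}
    {ρ η lam : ℝ}
    (hp0 : ∀ l, 0 ≤ p l) (hp1 : ∑ l, p l = 1) (hpρ : ∑ l, |p l - pHat l| ≤ ρ)
    (hpHat0 : ∀ l, 0 ≤ pHat l) (hlam : 0 ≤ lam)
    (hfeas : ∀ l, ψ l - η ≤ r l ∧ -lam ≤ r l ∧ ψ l - η ≤ lam) :
    ∑ l, p l * ψ l ≤ η + ρ * lam + ∑ l, pHat l * r l :=
  calc ∑ l, p l * ψ l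
      ≤ ∑ l, (p l * η + pHat l * r l + lam * |p l - pHat l|) :=
        sum_le_sum fun l _ =>
          mul_le_of_dual_feasible (hp0 l) (hpHat0 l) (hfeas l).1 (hfeas l).2.1 (hfeas l).2.2
    _ = (∑ l, p l) * η + ∑ l, pHat l * r l + lam * ∑ l, |p l - pHat l| := by
        rw [sum_add_distrib, sum_add_distrib, sum_mul, mul_sum]
    _ ≤ η + ρ * lam + ∑ l, pHat l * r l := by
        rw [hp1, one_mul]
        nlinarith [mul_le_mul_of_nonneg_left hpρ hlam]

end WeakDuality

section Truncation

variable {ι : Type*} (ψ w : ι → ℝ)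

def IsLowerTruncation (β : ℝ) (q : ι → ℝ) : Prop :=
  (∀ l, 0 ≤ q l ∧ q l ≤ w l) ∧ (∀ l, ψ l < β → q l = w l) ∧
    (∀ l, β < ψ l → q l = 0)

variable {ψ w}

theorem IsLowerTruncation.sub_mul_eq {β : ℝ} {q : ι → ℝ} (hq : IsLowerTruncation ψ w β q)
    (l : ι) : (w l - q l) * ψ l = w l * max (ψ l) β - q l * β := by
  rcases lt_trichotomy (ψ l) β with h | h | h
  · rw [hq.2.1 l h, max_eq_right h.le]; ring
  · rw [h, max_self]; ring
  · rw [hq.2.2 l h, max_eq_left h.le]; ring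

variable [Fintype ι]

theorem exists_quantile [Nonempty ι] (hw : ∀ l, 0 ≤ w l) {t : ℝ} (ht0 : 0 ≤ t)
    (ht : t ≤ ∑ l, w l) :
    ∃ k, ∑ l with ψ l < ψ k, w l ≤ t ∧ t ≤ ∑ l with ψ l ≤ ψ k, w l := by
  obtain ⟨m, hm⟩ := Finite.exists_max ψ
  have hT : ({k | t ≤ ∑ l with ψ l ≤ ψ k, w l} : Finset ι).Nonempty :=
    ⟨m, by simpa [filter_true_of_mem fun l _ => hm l] using ht⟩
  obtain ⟨k, hkT, hk⟩ := exists_min_image _ ψ hT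
  refine ⟨k, ?_, (mem_filter.1 hkT).2⟩
  by_contra! hlt
  have hU : ({l | ψ l < ψ k} : Finset ι).Nonempty := by
    by_contra hU
    rw [not_nonempty_iff_eq_empty] at hU
    rw [hU, sum_empty] at hlt
    linarith
  -- the largest value below `ψ k` would be a lower level with the same property
  obtain ⟨j, hjU, hj⟩ := exists_max_image _ ψ hU
  have hsub : ∑ l with ψ l < ψ k, w l ≤ ∑ l with ψ l ≤ ψ j, w l :=
    sum_le_sum_of_subset_of_nonneg (fun l hl => mem_filter.2 ⟨mem_univ l, hj l hl⟩)
      fun l _ _ => hw l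
  have := hk j (mem_filter.2 ⟨mem_univ j, by linarith⟩)
  linarith [(mem_filter.1 hjU).2]

theorem exists_isLowerTruncation_sum_eq [Nonempty ι] (hw : ∀ l, 0 ≤ w l) {t : ℝ}
    (ht0 : 0 ≤ t) (ht : t ≤ ∑ l, w l) :
    ∃ k q, IsLowerTruncation ψ w (ψ k) q ∧ ∑ l, q l = t := by
  obtain ⟨k, hlow, hhigh⟩ := exists_quantile hw ht0 ht
  have hsum (c : ℝ) :
      ∑ l, (if ψ l < ψ k then w l else if ψ l = ψ k then c * w l else 0)
        = ∑ l with ψ l < ψ k, w l + c * ∑ l with ψ l = ψ k, w l := by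
    rw [sum_filter, sum_filter, mul_sum, ← sum_add_distrib]
    refine sum_congr rfl fun l _ => ?_
    rcases lt_trichotomy (ψ l) (ψ k) with h | h | h
    · simp [h, h.ne]
    · simp [h]
    · simp [h.not_gt, h.ne']
  have hle : ∑ l with ψ l ≤ ψ k, w l
      = ∑ l with ψ l < ψ k, w l + ∑ l with ψ l = ψ k, w l := by
    rw [← one_mul (∑ l with ψ l = ψ k, w l), ← hsum, sum_filter]
    refine sum_congr rfl fun l _ => ?_
    rcases lt_trichotomy (ψ l) (ψ k) with h | h | h
    · simp [h, h.le]
    · simp [h]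
    · simp [h.not_ge, h.not_gt, h.ne']
  set a := ∑ l with ψ l < ψ k, w l
  set b := ∑ l with ψ l = ψ k, w l
  have hb : 0 ≤ b := sum_nonneg fun l _ => hw l
  have hc0 : 0 ≤ (t - a) / b := div_nonneg (by linarith) hb
  have hc1 : (t - a) / b ≤ 1 := div_le_one_of_le₀ (by linarith) hb
  refine ⟨k, fun l => if ψ l < ψ k then w l else if ψ l = ψ k then (t - a) / b * w l else 0,
    ⟨fun l => ?_, fun l h => if_pos h, fun l h => by simp [h.not_gt, h.ne']⟩, ?_⟩
  · dsimp only
    split_ifs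
    · exact ⟨hw l, le_rfl⟩
    · exact ⟨mul_nonneg hc0 (hw l), mul_le_of_le_one_left (hw l) hc1⟩
    · exact ⟨le_rfl, hw l⟩
  · rw [hsum, div_mul_cancel_of_imp fun hb0 => by linarith]
    ring

theorem exists_isLowerTruncation_of_le_max [Nonempty ι] (hw : ∀ l, 0 ≤ w l) {s : ℝ}
    (hs : 0 ≤ s) {m : ι} (hm : ∀ l, ψ l ≤ ψ m) :
    ∃ β q, IsLowerTruncation ψ w β q ∧ β ≤ ψ m ∧ ∑ l, q l ≤ s ∧
      (∑ l, q l) * (ψ m - β) = s * (ψ m - β) := by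
  by_cases hsF : s ≤ ∑ l with ψ l < ψ m, w l
  · have hF : ∑ l with ψ l < ψ m, w l ≤ ∑ l, w l :=
      sum_le_sum_of_subset_of_nonneg (subset_univ _) fun l _ _ => hw l
    obtain ⟨k, q, hq, hqs⟩ := exists_isLowerTruncation_sum_eq hw hs (hsF.trans hF)
    exact ⟨ψ k, q, hq, hm k, hqs.le, by rw [hqs]⟩
  · refine ⟨ψ m, fun l => if ψ l < ψ m then w l else 0,
      ⟨fun l => ?_, fun l h => if_pos h, fun l h => absurd (hm l) h.not_ge⟩, le_rfl, ?_,
      by rw [sub_self, mul_zero, mul_zero]⟩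
    · dsimp only
      split_ifs
      · exact ⟨hw l, le_rfl⟩
      · exact ⟨le_rfl, hw l⟩
    · rw [← sum_filter]
      linarith

/-- Moving the truncated mass `q` of `w` to the point `m`. -/
theorem IsLowerTruncation.exists_transport {β : ℝ} {q : ι → ℝ}
    (hq : IsLowerTruncation ψ w β q) (m : ι) :
    ∃ p : ι → ℝ, (∀ l, 0 ≤ p l) ∧ ∑ l, p l = ∑ l, w l ∧
      ∑ l, |p l - w l| ≤ 2 * ∑ l, q l ∧
      ∑ l, p l * ψ l = ∑ l, w l * max (ψ l) β + (∑ l, q l) * (ψ m - β) := by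
  classical
  have hQ : 0 ≤ ∑ l, q l := sum_nonneg fun l _ => (hq.1 l).1
  refine ⟨fun l => w l - q l + if l = m then ∑ l, q l else 0, fun l => ?_, ?_, ?_, ?_⟩
  · have := (hq.1 l).2
    dsimp only
    split_ifs <;> linarith
  · simp [sum_add_distrib, sum_sub_distrib]
  · calc ∑ l, |w l - q l + (if l = m then ∑ l, q l else 0) - w l|
        ≤ ∑ l, (q l + if l = m then ∑ l, q l else 0) := by
          refine sum_le_sum fun l _ => ?_
          rw [show w l - q l + (if l = m then ∑ l, q l else 0) - w l
            = -q l + (if l = m then ∑ l, q l else 0) by ring]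
          refine (abs_add_le _ _).trans ?_
          rw [abs_neg, abs_of_nonneg (hq.1 l).1, abs_of_nonneg (by split_ifs <;> simp [hQ])]
      _ = 2 * ∑ l, q l := by simp [sum_add_distrib]; ring
  · simp only [add_mul, sum_add_distrib, hq.sub_mul_eq, sum_sub_distrib, ← sum_mul, ite_mul,
      zero_mul, sum_ite_eq', mem_univ, if_true]
    ring

end Truncation

theorem exists_dual_feasible_of_le_max {ι : Type*} [Fintype ι] {ψ pHat : ι → ℝ}
    (hpHatSum : ∑ l, pHat l = 1) (ρ : ℝ) {β : ℝ} {m : ι} (hm : ∀ l, ψ l ≤ ψ m)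
    (hβ : β ≤ ψ m) :
    ∃ η lam : ℝ, ∃ r : ι → ℝ, 0 ≤ lam ∧
      (∀ l, ψ l - η ≤ r l ∧ -lam ≤ r l ∧ ψ l - η ≤ lam) ∧
      ∑ l, pHat l * max (ψ l) β + ρ / 2 * (ψ m - β) =
        η + ρ * lam + ∑ l, pHat l * r l := by
  refine ⟨(ψ m + β) / 2, (ψ m - β) / 2, fun l => max (ψ l) β - (ψ m + β) / 2, by linarith,
    fun l => ⟨?_, ?_, ?_⟩, ?_⟩
  · linarith [le_max_left (ψ l) β]
  · linarith [le_max_right (ψ l) β]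
  · linarith [hm l]
  · simp only [mul_sub, sum_sub_distrib, ← sum_mul, hpHatSum]
    ring

open scoped BigOperators

/-- Variation-distance reformulation (Theorem 2, inner problem). -/
theorem variation_distance_inner_duality
    (L : ℕ) (hL : 0 < L) (ψ pHat : Fin L → ℝ)
    (hpHat0 : ∀ l, 0 ≤ pHat l) (hpHatSum : ∑ l, pHat l = 1)
    (ρ : ℝ) (hρ : 0 ≤ ρ) :
    let S1 : Set ℝ := { x | ∃ p : Fin L → ℝ, (∀ l, 0 ≤ p l) ∧ (∑ l, p l = 1) ∧
        (∑ l, |p l - pHat l| ≤ ρ) ∧ x = ∑ l, p l * ψ l }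
    let S2 : Set ℝ := { x | ∃ η lam : ℝ, ∃ r : Fin L → ℝ, 0 ≤ lam ∧
        (∀ l, ψ l - η ≤ r l ∧ -lam ≤ r l ∧ ψ l - η ≤ lam) ∧
        x = η + ρ * lam + ∑ l, pHat l * r l }
    S1.Nonempty ∧ BddAbove S1 ∧ S2.Nonempty ∧ BddBelow S2 ∧ sSup S1 = sInf S2 := by
  intro S1 S2
  have : Nonempty (Fin L) := ⟨⟨0, hL⟩⟩
  obtain ⟨m, hm⟩ := Finite.exists_max ψ
  obtain ⟨β, q, hq, hβ, hqs, hqs'⟩ :=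
    exists_isLowerTruncation_of_le_max hpHat0 (s := ρ / 2) (by positivity) hm
  obtain ⟨p, hp0, hp1, hpρ, hpval⟩ := hq.exists_transport m
  set x := ∑ l, pHat l * max (ψ l) β + ρ / 2 * (ψ m - β)
  have hx1 : x ∈ S1 := ⟨p, hp0, hp1.trans hpHatSum, by linarith, by rw [hpval, hqs']⟩
  have hx2 : x ∈ S2 := exists_dual_feasible_of_le_max hpHatSum ρ hm hβ
  have weak : ∀ y ∈ S1, ∀ z ∈ S2, y ≤ z := by
    rintro y ⟨p, hp0, hp1, hpρ, rfl⟩ z ⟨η, lam, r, hlam, hfeas, rfl⟩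
    exact sum_mul_le_of_dual_feasible hp0 hp1 hpρ hpHat0 hlam hfeas
  have hmax : IsGreatest S1 x := ⟨hx1, fun y hy => weak y hy x hx2⟩
  have hmin : IsLeast S2 x := ⟨hx2, fun z hz => weak x hx1 z hz⟩
  exact ⟨hmax.nonempty, hmax.bddAbove, hmin.nonempty, hmin.bddBelow,
    hmax.csSup_eq.trans hmin.csInf_eq.symm⟩
end

section
/- χ²-distance reformulation (Theorem 3, inner problem). Let L be a positive natural number, ψ : Fin L → ℝ, p̂ : Fin L → ℝ with p̂ l > 0 for all l and ∑ l, p̂ l = 1, and ρ ≥ 0 real. Then sSup { ∑ l, p l * ψ l | p : Fin L → ℝ, (∀ l, 0 < p l), ∑ l, p l = 1, ∑ l, (p l - p̂ l)^2 / p l ≤ ρ } = sInf { η + ρ * λ + 2 * λ - 2 * ∑ l, p̂ l * r l | η : ℝ, λ : ℝ, r : Fin L → ℝ, 0 ≤ λ, ∀ l, ( Real.sqrt ((r l)^2 + (ψ l - η)^2 / 4) ≤ λ - (ψ l - η) / 2 ∧ ψ l - η ≤ λ ) }. Both sets of real numbers are nonempty, the first is bounded above and the second is bounded below, and the two conditional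 supremum/infimum values coincide. -/
open scoped BigOperators

private lemma sqrtAux {x y : ℝ} (hx : 0 ≤ x) (h : Real.sqrt x ≤ y) : x ≤ y ^ 2 := by
  nlinarith [Real.sq_sqrt hx, Real.sqrt_nonneg x]

private lemma weakDuality {L : ℕ} (ψ pHat : Fin L → ℝ)
    (hpHatPos : ∀ l, 0 < pHat l) (hpHatSum : ∑ l, pHat l = 1) (ρ : ℝ)
    (p : Fin L → ℝ) (hp : ∀ l, 0 < p l) (hp1 : ∑ l, p l = 1)
    (hpχ : ∑ l, (p l - pHat l) ^ 2 / p l ≤ ρ)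
    (η lam : ℝ) (r : Fin L → ℝ) (hlam : 0 ≤ lam)
    (hfeas : ∀ l, Real.sqrt ((r l) ^ 2 + (ψ l - η) ^ 2 / 4) ≤ lam - (ψ l - η) / 2 ∧
      ψ l - η ≤ lam) :
    ∑ l, p l * ψ l ≤ η + ρ * lam + 2 * lam - 2 * ∑ l, pHat l * r l := by
  have key : ∀ l, p l * ψ l ≤ p l * η + p l * lam + lam * (pHat l) ^ 2 / p l - 2 * (pHat l * r l) := by
    intro l
    obtain ⟨h1, h2⟩ := hfeas l
    have hc : 0 ≤ lam + η - ψ l := by linarith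
    have hsq' : r l ^ 2 + (ψ l - η) ^ 2 / 4 ≤ (lam - (ψ l - η) / 2) ^ 2 :=
      sqrtAux (by positivity) h1
    have hr2 : r l ^ 2 ≤ lam * (lam + η - ψ l) := by nlinarith
    have hs2 : Real.sqrt lam ^ 2 = lam := Real.sq_sqrt hlam
    have ht2 : Real.sqrt (lam + η - ψ l) ^ 2 = lam + η - ψ l := Real.sq_sqrt hc
    have hrst : r l ≤ Real.sqrt lam * Real.sqrt (lam + η - ψ l) := by
      calc r l ≤ |r l| := le_abs_self _
      _ = Real.sqrt (r l ^ 2) := (Real.sqrt_sq_eq_abs _).symm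
      _ ≤ Real.sqrt (lam * (lam + η - ψ l)) := Real.sqrt_le_sqrt hr2
      _ = Real.sqrt lam * Real.sqrt (lam + η - ψ l) := Real.sqrt_mul hlam _
    have hmain : 2 * (pHat l * r l) - p l * (lam + η - ψ l) ≤ lam * (pHat l) ^ 2 / p l := by
      rw [le_div_iff₀ (hp l)]
      have hexp2 : (Real.sqrt lam * pHat l - Real.sqrt (lam + η - ψ l) * p l) ^ 2
          = lam * pHat l ^ 2 + (lam + η - ψ l) * p l ^ 2
            - 2 * (Real.sqrt lam * Real.sqrt (lam + η - ψ l)) * (pHat l * p l) := by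
        rw [sub_sq, mul_pow, mul_pow, hs2, ht2]; ring
      have e1 : 2 * (Real.sqrt lam * Real.sqrt (lam + η - ψ l)) * (pHat l * p l)
          ≤ lam * pHat l ^ 2 + (lam + η - ψ l) * p l ^ 2 := by
        have h := sq_nonneg (Real.sqrt lam * pHat l - Real.sqrt (lam + η - ψ l) * p l)
        linarith [hexp2 ▸ h]
      have e2 := mul_le_mul_of_nonneg_left hrst (le_of_lt (mul_pos (hpHatPos l) (hp l)))
      nlinarith [e1, e2]
    nlinarith [hmain]
  have hsum := Finset.sum_le_sum (fun l (_ : l ∈ Finset.univ) => key l)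
  have hexp : ∑ l, (p l * η + p l * lam + lam * (pHat l) ^ 2 / p l - 2 * (pHat l * r l))
      = η + lam + lam * (∑ l, (pHat l) ^ 2 / p l) - 2 * ∑ l, pHat l * r l := by
    simp only [mul_div_assoc]
    rw [Finset.sum_sub_distrib, Finset.sum_add_distrib, Finset.sum_add_distrib,
      ← Finset.sum_mul, ← Finset.sum_mul, ← Finset.mul_sum, ← Finset.mul_sum, hp1]
    ring
  have hchi : ∑ l, (pHat l) ^ 2 / p l ≤ ρ + 1 := by
    have hid : ∀ l ∈ Finset.univ, (pHat l : ℝ) ^ 2 / p l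
        = (p l - pHat l) ^ 2 / p l + 2 * pHat l - p l := by
      intro l _
      field_simp [(hp l).ne']
      ring
    rw [Finset.sum_congr rfl hid, Finset.sum_sub_distrib, Finset.sum_add_distrib,
      ← Finset.mul_sum, hpHatSum, hp1]
    linarith
  have := mul_le_mul_of_nonneg_left hchi hlam
  rw [hexp] at hsum
  linarith

private lemma dualFeas {L : ℕ} (ψ : Fin L → ℝ) (η lam : ℝ) (hlam : 0 ≤ lam)
    (hc : ∀ l, ψ l - η ≤ lam) :
    ∀ l, Real.sqrt ((Real.sqrt (lam * (lam + η - ψ l))) ^ 2 + (ψ l - η) ^ 2 / 4)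
        ≤ lam - (ψ l - η) / 2 ∧ ψ l - η ≤ lam := by
  intro l
  refine ⟨?_, hc l⟩
  have h0 : 0 ≤ lam + η - ψ l := by linarith [hc l]
  rw [Real.sq_sqrt (mul_nonneg hlam h0)]
  have he : lam * (lam + η - ψ l) + (ψ l - η) ^ 2 / 4 = (lam - (ψ l - η) / 2) ^ 2 := by ring
  rw [he, Real.sqrt_sq (by linarith [hc l])]

set_option maxHeartbeats 1000000 in
/-- χ²-distance reformulation (Theorem 3, inner problem). -/
theorem chi_square_inner_duality
    (L : ℕ) (hL : 0 < L) (ψ pHat : Fin L → ℝ)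
    (hpHatPos : ∀ l, 0 < pHat l) (hpHatSum : ∑ l, pHat l = 1)
    (ρ : ℝ) (hρ : 0 ≤ ρ) :
    let S1 : Set ℝ := { x | ∃ p : Fin L → ℝ, (∀ l, 0 < p l) ∧ (∑ l, p l = 1) ∧
        (∑ l, (p l - pHat l) ^ 2 / p l ≤ ρ) ∧ x = ∑ l, p l * ψ l }
    let S2 : Set ℝ := { x | ∃ η lam : ℝ, ∃ r : Fin L → ℝ, 0 ≤ lam ∧
        (∀ l, Real.sqrt ((r l) ^ 2 + (ψ l - η) ^ 2 / 4) ≤ lam - (ψ l - η) / 2 ∧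
          ψ l - η ≤ lam) ∧
        x = η + ρ * lam + 2 * lam - 2 * ∑ l, pHat l * r l }
    S1.Nonempty ∧ BddAbove S1 ∧ S2.Nonempty ∧ BddBelow S2 ∧ sSup S1 = sInf S2 := by
  intro S1 S2
  -- S1 membership of the nominal value
  have hS1mem : (∑ l, pHat l * ψ l) ∈ S1 :=
    ⟨pHat, hpHatPos, hpHatSum, by simpa using hρ, rfl⟩
  -- max of ψ
  obtain ⟨l₀, -, hl₀⟩ := Finset.exists_max_image Finset.univ ψ ⟨⟨0, hL⟩, Finset.mem_univ _⟩
  have hl₀' : ∀ l, ψ l ≤ ψ l₀ := fun l => hl₀ l (Finset.mem_univ l)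
  set M := ψ l₀ with hM
  have hS2mem : M ∈ S2 := by
    refine ⟨M, 0, fun _ => 0, le_refl 0, fun l => ⟨?_, by linarith [hl₀' l]⟩, by simp⟩
    have he : (0:ℝ) ^ 2 + (ψ l - M) ^ 2 / 4 = ((ψ l - M) / 2) ^ 2 := by ring
    rw [he, Real.sqrt_sq_eq_abs, abs_of_nonpos (by linarith [hl₀' l])]
    linarith
  have hweak : ∀ x ∈ S1, ∀ y ∈ S2, x ≤ y := by
    rintro x ⟨p, hp, h1, h2, rfl⟩ y ⟨η, lam, r, hlam, hfeas, rfl⟩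
    exact weakDuality ψ pHat hpHatPos hpHatSum ρ p hp h1 h2 η lam r hlam hfeas
  have hbddA : BddAbove S1 := ⟨M, fun x hx => hweak x hx M hS2mem⟩
  have hbddB : BddBelow S2 := ⟨_, fun y hy => hweak _ hS1mem y hy⟩
  refine ⟨⟨_, hS1mem⟩, hbddA, ⟨_, hS2mem⟩, hbddB, le_antisymm ?_ ?_⟩
  · exact csSup_le ⟨_, hS1mem⟩ fun x hx => le_csInf ⟨_, hS2mem⟩ fun y hy => hweak x hx y hy
  · obtain ⟨lm, -, hlm⟩ := Finset.exists_min_image Finset.univ ψ ⟨⟨0, hL⟩, Finset.mem_univ _⟩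
    have hlm' : ∀ l, ψ lm ≤ ψ l := fun l => hlm l (Finset.mem_univ l)
    set m := ψ lm with hm
    have hmM : m ≤ M := hlm' l₀
    have hkey : ∀ ε > (0:ℝ), ∃ x ∈ S1, ∃ y ∈ S2, y ≤ x + ε := by
      intro ε hε
      by_cases hconst : ∀ l, ψ l = ψ ⟨0, hL⟩
      · -- constant case
        refine ⟨∑ l, pHat l * ψ l, hS1mem, ψ ⟨0, hL⟩,
          ⟨ψ ⟨0, hL⟩, 0, fun _ => 0, le_refl 0, fun l => ?_, by simp⟩, ?_⟩
        · rw [hconst l]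
          constructor <;> simp
        · have : ∑ l, pHat l * ψ l = ψ ⟨0, hL⟩ := by
            rw [Finset.sum_congr rfl fun l _ => by rw [hconst l], ← Finset.sum_mul, hpHatSum,
              one_mul]
          linarith
      · -- nonconstant case
        have hlt : ∃ l₁, ψ l₁ < M := by
          by_contra h
          push_neg at h
          exact hconst fun l => by
            rw [le_antisymm (hl₀' l) (h l), le_antisymm (hl₀' ⟨0, hL⟩) (h ⟨0, hL⟩)]
        obtain ⟨l₁, hl₁⟩ := hlt
        by_cases hρ0 : ρ = 0
        · -- rho = 0 : limiting argument
          subst hρ0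
          refine ⟨∑ l, pHat l * ψ l, hS1mem, ?_⟩
          set B := ∑ l, pHat l * (M + 1 - ψ l) ^ 2 with hB
          have hBnn : 0 ≤ B := Finset.sum_nonneg fun l _ =>
            mul_nonneg (hpHatPos l).le (sq_nonneg _)
          set lam := max (M + 1 - m) (B / (4 * ε) + 1) with hlamdef
          have hlamge : ∀ l, M + 1 - ψ l ≤ lam :=
            fun l => le_trans (by linarith [hlm' l]) (le_max_left _ _)
          have hlampos : 0 < lam := lt_of_lt_of_le (by linarith) (le_max_left _ _)
          have hlamB : B / (4 * lam) ≤ ε := by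
            rw [div_le_iff₀ (by positivity)]
            have h1 : B / (4 * ε) + 1 ≤ lam := le_max_right _ _
            have h2 : B / (4 * ε) * (4 * ε) = B := div_mul_cancel₀ _ (by positivity)
            nlinarith
          set r : Fin L → ℝ := fun l => Real.sqrt (lam * (lam + (M + 1) - ψ l)) with hrdef
          refine ⟨(M + 1) + 0 * lam + 2 * lam - 2 * ∑ l, pHat l * r l,
            ⟨M + 1, lam, r, hlampos.le,
              dualFeas ψ (M + 1) lam hlampos.le fun l => by linarith [hl₀' l], rfl⟩, ?_⟩
          have hlb : ∀ l, lam + (M + 1 - ψ l) / 2 - (M + 1 - ψ l) ^ 2 / (8 * lam) ≤ r l := by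
            intro l
            set av := M + 1 - ψ l with hav
            have havnn : (0:ℝ) ≤ av := by
              have := hl₀' l
              rw [hav]
              linarith
            have havlam : av ≤ lam := hlamge l
            apply Real.le_sqrt_of_sq_le
            have hq8 : av ^ 2 / (8 * lam) * (8 * lam) = av ^ 2 :=
              div_mul_cancel₀ _ (by positivity)
            have hqn : 0 ≤ av ^ 2 / (8 * lam) := by positivity
            have hqa : av ^ 2 / (8 * lam) ≤ av := by
              rw [div_le_iff₀ (by positivity)]
              nlinarith
            have he3 : lam * (lam + (M + 1) - ψ l) = lam * (lam + av) := by rw [hav]; ring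
            rw [he3]
            nlinarith [mul_nonneg hqn (sub_nonneg.2 hqa), hq8]
          have hsum2 : ∑ l, pHat l * (lam + (M + 1 - ψ l) / 2 - (M + 1 - ψ l) ^ 2 / (8 * lam))
              ≤ ∑ l, pHat l * r l :=
            Finset.sum_le_sum fun l _ => mul_le_mul_of_nonneg_left (hlb l) (hpHatPos l).le
          have heq2 : ∑ l, pHat l * (lam + (M + 1 - ψ l) / 2 - (M + 1 - ψ l) ^ 2 / (8 * lam))
              = lam + (M + 1) / 2 - (∑ l, pHat l * ψ l) / 2 - B / (8 * lam) := by
            have hterm : ∀ l ∈ Finset.univ,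
                pHat l * (lam + (M + 1 - ψ l) / 2 - (M + 1 - ψ l) ^ 2 / (8 * lam))
                = (lam + (M + 1) / 2) * pHat l - pHat l * ψ l / 2
                  - pHat l * (M + 1 - ψ l) ^ 2 / (8 * lam) := fun l _ => by ring
            rw [Finset.sum_congr rfl hterm, Finset.sum_sub_distrib, Finset.sum_sub_distrib,
              ← Finset.mul_sum, hpHatSum, ← Finset.sum_div, ← Finset.sum_div, ← hB]
            ring
          rw [heq2] at hsum2
          have hdiv : B / (4 * lam) = 2 * (B / (8 * lam)) := by ring
          linarith
        · -- rho > 0 : exact construction via IVT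
          have hρpos : 0 < ρ := lt_of_le_of_ne hρ (Ne.symm hρ0)
          have hρ1 : (0:ℝ) < ρ + 1 := by linarith
          set G : ℝ → ℝ := fun t => (∑ l, pHat l * Real.sqrt (t - ψ l))
            * (∑ l, pHat l / Real.sqrt (t - ψ l)) with hGdef
          have hsq1 : 0 < Real.sqrt (M - ψ l₁) := Real.sqrt_pos.2 (by linarith)
          set δ := (pHat l₀ * pHat l₁ * Real.sqrt (M - ψ l₁) / (ρ + 1)) ^ 2 with hδdef
          have hδpos : 0 < δ :=
            pow_pos (div_pos (mul_pos (mul_pos (hpHatPos l₀) (hpHatPos l₁)) hsq1) hρ1) 2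
          set a := M + δ with hadef
          have haM : M < a := lt_add_of_pos_right _ hδpos
          have hGa : ρ + 1 ≤ G a := by
            have t1 : pHat l₁ * Real.sqrt (a - ψ l₁) ≤ ∑ l, pHat l * Real.sqrt (a - ψ l) :=
              Finset.single_le_sum (f := fun l => pHat l * Real.sqrt (a - ψ l))
                (fun l _ => mul_nonneg (hpHatPos l).le (Real.sqrt_nonneg _))
                (Finset.mem_univ l₁)
            have t2 : pHat l₀ / Real.sqrt (a - ψ l₀) ≤ ∑ l, pHat l / Real.sqrt (a - ψ l) :=
              Finset.single_le_sum (f := fun l => pHat l / Real.sqrt (a - ψ l))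
                (fun l _ => div_nonneg (hpHatPos l).le (Real.sqrt_nonneg _))
                (Finset.mem_univ l₀)
            have hsδ : Real.sqrt (a - ψ l₀)
                = pHat l₀ * pHat l₁ * Real.sqrt (M - ψ l₁) / (ρ + 1) := by
              have he4 : a - ψ l₀ = δ := by rw [hadef, hM]; ring
              rw [he4, hδdef, Real.sqrt_sq
                (le_of_lt (div_pos (mul_pos (mul_pos (hpHatPos l₀) (hpHatPos l₁)) hsq1) hρ1))]
            have t3 : ρ + 1
                ≤ pHat l₁ * Real.sqrt (a - ψ l₁) * (pHat l₀ / Real.sqrt (a - ψ l₀)) := by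
              have hmono : Real.sqrt (M - ψ l₁) ≤ Real.sqrt (a - ψ l₁) :=
                Real.sqrt_le_sqrt (by linarith)
              have heqv : pHat l₁ * Real.sqrt (M - ψ l₁) * (pHat l₀ / Real.sqrt (a - ψ l₀))
                  = ρ + 1 := by
                rw [hsδ]
                field_simp [(hpHatPos l₀).ne', (hpHatPos l₁).ne', hsq1.ne', hρ1.ne']
              have hnn : 0 ≤ pHat l₀ / Real.sqrt (a - ψ l₀) :=
                div_nonneg (hpHatPos l₀).le (Real.sqrt_nonneg _)
              nlinarith [mul_le_mul_of_nonneg_right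
                (mul_le_mul_of_nonneg_left hmono (hpHatPos l₁).le) hnn]
            rw [hGdef]
            calc ρ + 1 ≤ pHat l₁ * Real.sqrt (a - ψ l₁) * (pHat l₀ / Real.sqrt (a - ψ l₀)) := t3
              _ ≤ _ := by
                refine mul_le_mul t1 t2
                  (div_nonneg (hpHatPos l₀).le (Real.sqrt_nonneg _)) ?_
                exact Finset.sum_nonneg fun l _ =>
                  mul_nonneg (hpHatPos l).le (Real.sqrt_nonneg _)
          set K := (ρ + 1) ^ 2 with hKdef
          have hK1 : 1 < K := by nlinarith
          set b := max (max (M + 1) a) ((K * M - m) / (K - 1)) with hbdef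
          have hbM1 : M + 1 ≤ b := le_trans (le_max_left _ _) (le_max_left _ _)
          have hab : a ≤ b := le_trans (le_max_right _ _) (le_max_left _ _)
          have hbK : (K * M - m) / (K - 1) ≤ b := le_max_right _ _
          have hbMpos : 0 < b - M := by linarith
          have hGb : G b ≤ ρ + 1 := by
            have hmb : m ≤ b := by linarith
            have s1 : ∑ l, pHat l * Real.sqrt (b - ψ l) ≤ Real.sqrt (b - m) := by
              calc ∑ l, pHat l * Real.sqrt (b - ψ l) ≤ ∑ l, pHat l * Real.sqrt (b - m) :=
                  Finset.sum_le_sum fun l _ => mul_le_mul_of_nonneg_left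
                    (Real.sqrt_le_sqrt (by linarith [hlm' l])) (hpHatPos l).le
                _ = Real.sqrt (b - m) := by rw [← Finset.sum_mul, hpHatSum, one_mul]
            have s2 : ∑ l, pHat l / Real.sqrt (b - ψ l) ≤ 1 / Real.sqrt (b - M) := by
              have hbMsq : 0 < Real.sqrt (b - M) := Real.sqrt_pos.2 hbMpos
              calc ∑ l, pHat l / Real.sqrt (b - ψ l) ≤ ∑ l, pHat l / Real.sqrt (b - M) :=
                  Finset.sum_le_sum fun l _ =>
                    div_le_div_of_nonneg_left (hpHatPos l).le hbMsq
                      (Real.sqrt_le_sqrt (by linarith [hl₀' l]))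
                _ = 1 / Real.sqrt (b - M) := by rw [← Finset.sum_div, hpHatSum]
            have hKb : (b - m) / (b - M) ≤ K := by
              rw [div_le_iff₀ hbMpos]
              have h5 : K * M - m ≤ (K - 1) * b := by
                rw [div_le_iff₀ (by linarith : (0:ℝ) < K - 1)] at hbK
                linarith
              nlinarith
            rw [hGdef]
            calc (∑ l, pHat l * Real.sqrt (b - ψ l)) * (∑ l, pHat l / Real.sqrt (b - ψ l))
                ≤ Real.sqrt (b - m) * (1 / Real.sqrt (b - M)) := by
                  refine mul_le_mul s1 s2 ?_ (Real.sqrt_nonneg _)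
                  exact Finset.sum_nonneg fun l _ =>
                    div_nonneg (hpHatPos l).le (Real.sqrt_nonneg _)
              _ = Real.sqrt ((b - m) / (b - M)) := by
                rw [Real.sqrt_div (by linarith : (0:ℝ) ≤ b - m)]
                ring
              _ ≤ Real.sqrt K := Real.sqrt_le_sqrt hKb
              _ = ρ + 1 := by rw [hKdef, Real.sqrt_sq hρ1.le]
          have hcont : ContinuousOn G (Set.Icc a b) := by
            apply ContinuousOn.mul
            · exact (continuous_finset_sum _ fun l _ =>
                continuous_const.mul
                  (Real.continuous_sqrt.comp (continuous_id.sub continuous_const))).continuousOn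
            · apply continuousOn_finset_sum
              intro l _
              apply ContinuousOn.div continuousOn_const
              · exact (Real.continuous_sqrt.comp
                  (continuous_id.sub continuous_const)).continuousOn
              · intro u hu
                refine Real.sqrt_ne_zero'.2 ?_
                have h6 := hu.1
                have h7 := hl₀' l
                linarith
          obtain ⟨t, htmem, hGt⟩ := intermediate_value_Icc' hab hcont ⟨hGb, hGa⟩
          have htM : M < t := lt_of_lt_of_le haM htmem.1
          have htψ : ∀ l, ψ l < t := fun l => lt_of_le_of_lt (hl₀' l) htM
          have hsqt : ∀ l, 0 < Real.sqrt (t - ψ l) :=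
            fun l => Real.sqrt_pos.2 (by linarith [htψ l])
          set S := ∑ l, pHat l * Real.sqrt (t - ψ l) with hSdef
          set s := ∑ l, pHat l / Real.sqrt (t - ψ l) with hsdef
          have hGts : S * s = ρ + 1 := hGt
          have hSpos : 0 < S := Finset.sum_pos
            (fun l _ => mul_pos (hpHatPos l) (hsqt l)) ⟨⟨0, hL⟩, Finset.mem_univ _⟩
          have hspos : 0 < s := Finset.sum_pos
            (fun l _ => div_pos (hpHatPos l) (hsqt l)) ⟨⟨0, hL⟩, Finset.mem_univ _⟩
          set p : Fin L → ℝ := fun l => pHat l / (s * Real.sqrt (t - ψ l)) with hpdef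
          have hppos : ∀ l, 0 < p l :=
            fun l => div_pos (hpHatPos l) (mul_pos hspos (hsqt l))
          have hpsum : ∑ l, p l = 1 := by
            have hterm : ∀ l ∈ Finset.univ,
                p l = pHat l / Real.sqrt (t - ψ l) * s⁻¹ := fun l _ => by
              rw [hpdef]; ring
            rw [Finset.sum_congr rfl hterm, ← Finset.sum_mul, ← hsdef,
              mul_inv_cancel₀ hspos.ne']
          have hchi2 : ∑ l, (p l - pHat l) ^ 2 / p l = ρ := by
            have hterm : ∀ l ∈ Finset.univ, (p l - pHat l) ^ 2 / p l
                = p l - 2 * pHat l + pHat l * (s * Real.sqrt (t - ψ l)) := by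
              intro l _
              have h1 : (p l - pHat l) ^ 2 / p l = p l - 2 * pHat l + pHat l ^ 2 / p l := by
                field_simp [(hppos l).ne']
                ring
              have h2 : pHat l ^ 2 / p l = pHat l * (s * Real.sqrt (t - ψ l)) := by
                rw [hpdef]
                field_simp [(hpHatPos l).ne', hspos.ne', (hsqt l).ne']
              rw [h1, h2]
            have hlast : ∑ l, pHat l * (s * Real.sqrt (t - ψ l)) = s * S := by
              rw [hSdef, Finset.mul_sum]
              exact Finset.sum_congr rfl fun l _ => by ring
            rw [Finset.sum_congr rfl hterm, Finset.sum_add_distrib, Finset.sum_sub_distrib,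
              hpsum, ← Finset.mul_sum, hpHatSum, hlast]
            linear_combination hGts
          set lam := (s⁻¹) ^ 2 with hlamdef2
          have hlamnn : 0 ≤ lam := sq_nonneg _
          set r : Fin L → ℝ := fun l => Real.sqrt (lam * (lam + (t - lam) - ψ l)) with hrdef2
          have hfeas2 := dualFeas ψ (t - lam) lam hlamnn fun l => by linarith [htψ l]
          have hr : ∀ l, r l = s⁻¹ * Real.sqrt (t - ψ l) := by
            intro l
            have he : lam * (lam + (t - lam) - ψ l) = lam * (t - ψ l) := by ring
            rw [hrdef2]
            simp only []
            rw [he, Real.sqrt_mul hlamnn, hlamdef2,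
              Real.sqrt_sq (inv_nonneg.2 hspos.le)]
          have hsumr : ∑ l, pHat l * r l = s⁻¹ * S := by
            rw [hSdef, Finset.mul_sum]
            exact Finset.sum_congr rfl fun l _ => by rw [hr l]; ring
          have hx : ∑ l, p l * ψ l = t - s⁻¹ * S := by
            have hterm : ∀ l ∈ Finset.univ,
                p l * ψ l = p l * t - s⁻¹ * (pHat l * Real.sqrt (t - ψ l)) := by
              intro l _
              have hss : Real.sqrt (t - ψ l) * Real.sqrt (t - ψ l) = t - ψ l :=
                Real.mul_self_sqrt (by linarith [htψ l])
              have hkey2 : p l * (t - ψ l) = s⁻¹ * (pHat l * Real.sqrt (t - ψ l)) := by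
                rw [hpdef]
                simp only []
                rw [div_mul_eq_mul_div, ← hss]
                field_simp [(hpHatPos l).ne', hspos.ne', (hsqt l).ne']
                rw [Real.sq_sqrt (sq_nonneg (Real.sqrt (t - ψ l)))]
              linear_combination -hkey2
            rw [Finset.sum_congr rfl hterm, Finset.sum_sub_distrib, ← Finset.sum_mul, hpsum,
              ← Finset.mul_sum, ← hSdef, one_mul]
          have hy : (t - lam) + ρ * lam + 2 * lam - 2 * ∑ l, pHat l * r l = t - s⁻¹ * S := by
            rw [hsumr]
            have h1 : (ρ + 1) * lam = s⁻¹ * S := by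
              rw [← hGts, hlamdef2]
              field_simp [hspos.ne']
            linear_combination h1
          refine ⟨∑ l, p l * ψ l, ⟨p, hppos, hpsum, le_of_eq hchi2, rfl⟩,
            (t - lam) + ρ * lam + 2 * lam - 2 * ∑ l, pHat l * r l,
            ⟨t - lam, lam, r, hlamnn, hfeas2, rfl⟩, ?_⟩
          rw [hy, hx]
          linarith
    apply le_of_forall_pos_le_add
    intro ε hε
    obtain ⟨x, hx, y, hy, hxy⟩ := hkey ε hε
    calc sInf S2 ≤ y := csInf_le hbddB hy
      _ ≤ x + ε := hxy
      _ ≤ sSup S1 + ε := add_le_add_left (le_csSup hbddA hx) ε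
end

section
/- Conjugate of the χ²-distance generator (claim in the proof of Theorem 3). For φ(t) = (t - 1)² / t and every s : ℝ, the extended-real supremum φ*(s) := ⨆ (t : ℝ) (_ : 0 < t), (((s * t - (t - 1)^2 / t) : ℝ) : EReal) satisfies: if s ≤ 1 then φ*(s) = ((2 - 2 * Real.sqrt (1 - s) : ℝ) : EReal), and if 1 < s then φ*(s) = ⊤. -/
/-! For `t > 0` we have `s t - (t - 1)² / t = (s - 1) t + 2 - 1 / t`. If `s > 1` this grows
linearly in `t`. If `s ≤ 1`, write `1 - s = a²` with `a = √(1 - s)`; then the objective is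
`2 - (a² t + 1 / t)`, and `a² t + 1 / t - 2a = (a t - 1)² / t ≥ 0`. At `t = 1 / (a + δ)` the
objective equals `2 - 2a - δ² / (a + δ) ≥ 2 - 2a - δ`, which also covers `a = 0`, where the
supremum is not attained. -/

namespace EReal

variable {ι : Type*} {p : ι → Prop} {f : ι → ℝ}

lemma biSup_coe_eq_top (h : ∀ r : ℝ, ∃ i, p i ∧ r < f i) :
    ⨆ (i) (_ : p i), (f i : EReal) = ⊤ := by
  refine (iSup₂_eq_top _).2 fun b hb => ?_
  obtain ⟨r, hbr, -⟩ := exists_between_coe_real hb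
  obtain ⟨i, hi, hrf⟩ := h r
  exact ⟨i, hi, hbr.trans (EReal.coe_lt_coe_iff.2 hrf)⟩

lemma biSup_coe_eq_coe {c : ℝ} (hle : ∀ i, p i → f i ≤ c)
    (happrox : ∀ ε > 0, ∃ i, p i ∧ c - ε ≤ f i) :
    ⨆ (i) (_ : p i), (f i : EReal) = c := by
  refine le_antisymm (iSup₂_le fun i hi => EReal.coe_le_coe_iff.2 (hle i hi)) ?_
  refine ge_of_forall_gt_iff_ge.1 fun b hb => ?_
  obtain ⟨i, hi, hf⟩ := happrox (c - b) (by linarith [EReal.coe_lt_coe_iff.1 hb])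
  exact le_iSup₂_of_le i hi (EReal.coe_le_coe_iff.2 (by linarith))

end EReal

lemma chiSq_objective_eq (s : ℝ) {t : ℝ} (ht : t ≠ 0) :
    s * t - (t - 1) ^ 2 / t = (s - 1) * t + 2 - t⁻¹ := by
  field_simp
  ring

lemma chiSq_objective_le {s t : ℝ} (hs : s ≤ 1) (ht : 0 < t) :
    s * t - (t - 1) ^ 2 / t ≤ 2 - 2 * √(1 - s) := by
  set a := √(1 - s)
  have ha : a ^ 2 = 1 - s := Real.sq_sqrt (by linarith)
  have hgap : 2 - 2 * a - (s * t - (t - 1) ^ 2 / t) = (a * t - 1) ^ 2 / t := by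
    rw [chiSq_objective_eq s ht.ne', show s - 1 = -a ^ 2 by linarith]
    field_simp
    ring
  linarith [div_nonneg (sq_nonneg (a * t - 1)) ht.le]

lemma chiSq_objective_ge {s δ : ℝ} (hs : s ≤ 1) (hδ : 0 < δ) :
    2 - 2 * √(1 - s) - δ ≤
      s * (√(1 - s) + δ)⁻¹ - ((√(1 - s) + δ)⁻¹ - 1) ^ 2 / (√(1 - s) + δ)⁻¹ := by
  set a := √(1 - s)
  have ha : a ^ 2 = 1 - s := Real.sq_sqrt (by linarith)
  have had : 0 < a + δ := by positivity
  have hval : s * (a + δ)⁻¹ - ((a + δ)⁻¹ - 1) ^ 2 / (a + δ)⁻¹ = 2 - 2 * a - δ ^ 2 / (a + δ) := by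
    rw [chiSq_objective_eq s (inv_ne_zero had.ne'), show s - 1 = -a ^ 2 by linarith]
    field_simp
    ring
  have hδ_bound : δ ^ 2 / (a + δ) ≤ δ := by
    rw [div_le_iff₀ had]
    nlinarith [Real.sqrt_nonneg (1 - s)]
  linarith

lemma chiSq_objective_unbounded {s : ℝ} (hs : 1 < s) (r : ℝ) :
    ∃ t, 0 < t ∧ r < s * t - (t - 1) ^ 2 / t := by
  set t := max 1 (r / (s - 1))
  have ht : 1 ≤ t := le_max_left _ _
  have hrt : r ≤ (s - 1) * t := by
    rw [← div_le_iff₀' (by linarith)]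
    exact le_max_right _ _
  refine ⟨t, by linarith, ?_⟩
  rw [chiSq_objective_eq s (by positivity)]
  linarith [inv_le_one_of_one_le₀ ht]

/-- Conjugate of the χ²-distance generator φ(t) = (t - 1)²/t
(claim in the proof of Theorem 3). -/
theorem chi_square_conjugate (s : ℝ) :
    (s ≤ 1 →
      (⨆ (t : ℝ) (_ : 0 < t), (((s * t - (t - 1) ^ 2 / t) : ℝ) : EReal))
        = ((2 - 2 * Real.sqrt (1 - s) : ℝ) : EReal)) ∧
    (1 < s →
      (⨆ (t : ℝ) (_ : 0 < t), (((s * t - (t - 1) ^ 2 / t) : ℝ) : EReal)) = ⊤) := by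
  constructor
  · intro hs
    exact EReal.biSup_coe_eq_coe (fun t ht => chiSq_objective_le hs ht)
      fun δ hδ => ⟨_, by positivity, chiSq_objective_ge hs hδ⟩
  · intro hs
    exact EReal.biSup_coe_eq_top (chiSq_objective_unbounded hs)
end

section
/- Strong duality for the moment-matching problem over a finite support (core of Theorems 4 and 5 in the finite-support setting). Let K and M be positive natural numbers, h : Fin K → ℝ (cost values at the K support points), f : Fin M → Fin K → ℝ (values of the M moment basis functions at the support points), and lower/upper moment bounds ul, uu : Fin M → ℝ. Assume the moment ambiguity set is nonempty: there exists q : Fin K → ℝ with q k ≥ 0 for all k, ∑ k, q k = 1, and ul m ≤ ∑ k, q k * f m k ≤ uu m for all m. Then sSup { ∑ k, q k * h k | q : Fin K → ℝ, (∀ k, 0 ≤ q k), ∑ k, q k = 1, ∀ m, ul m ≤ ∑ k, q k * f m k ∧ ∑ k, q k * f m k ≤ uu m } = sInf { α + ∑ m, bu m * uu m - ∑ m, bl m * ul m | α : ℝ, bl bu : Fin M → ℝ, (∀ m, 0 ≤ bl m ∧ 0 ≤ bu m), ∀ k, h k ≤ α + ∑ m, (bu m - bl m) * f m k }. Both sets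 are nonempty, the first is bounded above and the second is bounded below, and the two conditional supremum/infimum values coincide. -/
open scoped BigOperators

private lemma mm_weak (K M : ℕ) (h : Fin K → ℝ) (f : Fin M → Fin K → ℝ) (ul uu : Fin M → ℝ)
    (q : Fin K → ℝ) (α : ℝ) (bl bu : Fin M → ℝ)
    (hq0 : ∀ k, 0 ≤ q k) (hq1 : ∑ k, q k = 1)
    (hqm : ∀ m, ul m ≤ ∑ k, q k * f m k ∧ ∑ k, q k * f m k ≤ uu m)
    (hb : ∀ m, 0 ≤ bl m ∧ 0 ≤ bu m)
    (hcon : ∀ k, h k ≤ α + ∑ m, (bu m - bl m) * f m k) :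
    ∑ k, q k * h k ≤ α + ∑ m, bu m * uu m - ∑ m, bl m * ul m := by
  have step1 : ∑ k, q k * h k ≤ ∑ k, q k * (α + ∑ m, (bu m - bl m) * f m k) :=
    Finset.sum_le_sum fun k _ => mul_le_mul_of_nonneg_left (hcon k) (hq0 k)
  have step2 : ∑ k, q k * (α + ∑ m, (bu m - bl m) * f m k)
      = α + ∑ m, (bu m - bl m) * ∑ k, q k * f m k := by
    simp only [mul_add, Finset.sum_add_distrib, ← Finset.sum_mul, hq1, one_mul,
      Finset.mul_sum]
    rw [Finset.sum_comm]
    congr 1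
    refine Finset.sum_congr rfl fun m _ => ?_
    refine Finset.sum_congr rfl fun k _ => by ring
  have step3 : ∑ m, (bu m - bl m) * ∑ k, q k * f m k
      ≤ ∑ m, (bu m * uu m - bl m * ul m) := by
    refine Finset.sum_le_sum fun m _ => ?_
    have h1 := (hqm m).1; have h2 := (hqm m).2
    have := mul_le_mul_of_nonneg_left h2 (hb m).2
    have := mul_le_mul_of_nonneg_left h1 (hb m).1
    nlinarith [(hb m).1, (hb m).2]
  calc ∑ k, q k * h k ≤ α + ∑ m, (bu m - bl m) * ∑ k, q k * f m k := by
        rw [← step2]; exact step1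
    _ ≤ α + ∑ m, (bu m * uu m - bl m * ul m) := by linarith
    _ = α + ∑ m, bu m * uu m - ∑ m, bl m * ul m := by rw [Finset.sum_sub_distrib]; ring

private noncomputable def mmT (K M : ℕ) (h : Fin K → ℝ) (f : Fin M → Fin K → ℝ) :
    (Fin K → ℝ) →ₗ[ℝ] (Fin M → ℝ) × ℝ where
  toFun q := (fun m => ∑ k, q k * f m k, ∑ k, q k * h k)
  map_add' a b := by
    refine Prod.ext (funext fun m => ?_) ?_ <;> simp [add_mul, Finset.sum_add_distrib]
  map_smul' c a := by
    refine Prod.ext (funext fun m => ?_) ?_ <;> simp [Finset.mul_sum, mul_assoc]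

private lemma mm_decomp (K M : ℕ) (g : ((Fin M → ℝ) × ℝ) →L[ℝ] ℝ) (w : Fin M → ℝ) (t : ℝ) :
    g (w, t) = ∑ m, w m * g (Pi.single m 1, 0) + t * g (0, 1) := by
  have hw : (w, t) = (∑ m, w m • ((Pi.single m 1 : Fin M → ℝ), (0:ℝ)))
      + t • ((0:Fin M → ℝ), 1) := by
    refine Prod.ext ?_ ?_
    · simp only [Prod.fst_add, Prod.fst_sum, Prod.smul_fst, Prod.smul_snd]
      funext j
      simp [Finset.sum_apply, Pi.single_apply]
    · simp [Prod.snd_add, Prod.snd_sum]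
  rw [hw, map_add, map_sum, map_smul]
  simp only [map_smul, smul_eq_mul]

/-- Strong duality for the moment-matching problem over a finite support
(core of Theorems 4 and 5 in the finite-support setting). -/
theorem moment_matching_finite_support_duality
    (K M : ℕ) (hK : 0 < K) (hM : 0 < M)
    (h : Fin K → ℝ) (f : Fin M → Fin K → ℝ) (ul uu : Fin M → ℝ)
    (hne : ∃ q : Fin K → ℝ, (∀ k, 0 ≤ q k) ∧ (∑ k, q k = 1) ∧
      ∀ m, ul m ≤ ∑ k, q k * f m k ∧ ∑ k, q k * f m k ≤ uu m) :
    let S1 : Set ℝ := { x | ∃ q : Fin K → ℝ, (∀ k, 0 ≤ q k) ∧ (∑ k, q k = 1) ∧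
        (∀ m, ul m ≤ ∑ k, q k * f m k ∧ ∑ k, q k * f m k ≤ uu m) ∧
        x = ∑ k, q k * h k }
    let S2 : Set ℝ := { x | ∃ α : ℝ, ∃ bl bu : Fin M → ℝ,
        (∀ m, 0 ≤ bl m ∧ 0 ≤ bu m) ∧
        (∀ k, h k ≤ α + ∑ m, (bu m - bl m) * f m k) ∧
        x = α + ∑ m, bu m * uu m - ∑ m, bl m * ul m }
    S1.Nonempty ∧ BddAbove S1 ∧ S2.Nonempty ∧ BddBelow S2 ∧ sSup S1 = sInf S2 := by
  intro S1 S2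
  haveI : Nonempty (Fin K) := Fin.pos_iff_nonempty.mp hK
  obtain ⟨q₀, hq₀0, hq₀1, hq₀m⟩ := hne
  have hS1ne : S1.Nonempty := ⟨_, q₀, hq₀0, hq₀1, hq₀m, rfl⟩
  -- a dual feasible point with bl = bu = 0
  set α₀ : ℝ := Finset.univ.sup' Finset.univ_nonempty h with hα₀
  have hS2mem : α₀ ∈ S2 := by
    refine ⟨α₀, 0, 0, fun m => ⟨le_refl _, le_refl _⟩, fun k => ?_, by simp⟩
    simp only [Pi.zero_apply, sub_zero, zero_mul, Finset.sum_const_zero, add_zero]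
    exact Finset.le_sup' h (Finset.mem_univ k)
  have hS2ne : S2.Nonempty := ⟨α₀, hS2mem⟩
  -- weak duality
  have hweak : ∀ x ∈ S1, ∀ z ∈ S2, x ≤ z := by
    rintro x ⟨q, hq0, hq1, hqm, rfl⟩ z ⟨α, bl, bu, hb, hcon, rfl⟩
    exact mm_weak K M h f ul uu q α bl bu hq0 hq1 hqm hb hcon
  have hS1bdd : BddAbove S1 := ⟨α₀, fun x hx => by
    have := hweak x hx α₀ hS2mem
    simpa using this⟩
  have hS2bdd : BddBelow S2 := ⟨∑ k, q₀ k * h k, fun z hz =>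
    hweak _ ⟨q₀, hq₀0, hq₀1, hq₀m, rfl⟩ z hz⟩
  refine ⟨hS1ne, hS1bdd, hS2ne, hS2bdd, le_antisymm ?_ ?_⟩
  · exact csSup_le hS1ne fun x hx => le_csInf hS2ne fun z hz => hweak x hx z hz
  -- strong duality direction
  set p : ℝ := sSup S1 with hp
  have hmain : ∀ ε : ℝ, 0 < ε → sInf S2 ≤ p + ε := by
    intro ε hε
    set T := mmT K M h f with hT
    set D : Set ((Fin M → ℝ) × ℝ) := T '' stdSimplex ℝ (Fin K) with hD
    set B : Set ((Fin M → ℝ) × ℝ) :=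
      (Set.univ.pi fun m => Set.Icc (ul m) (uu m)) ×ˢ Set.Ici (p + ε) with hB
    have hDcvx : Convex ℝ D := (convex_stdSimplex ℝ (Fin K)).linear_image T
    have hDcp : IsCompact D :=
      (isCompact_stdSimplex ℝ (Fin K)).image T.continuous_of_finiteDimensional
    have hBcvx : Convex ℝ B :=
      (convex_pi fun m _ => convex_Icc _ _).prod (convex_Ici _)
    have hBcl : IsClosed B :=
      (isClosed_set_pi fun m _ => isClosed_Icc).prod isClosed_Ici
    have hdisj : Disjoint D B := by
      rw [Set.disjoint_left]
      rintro x ⟨q, hq, rfl⟩ hxB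
      obtain ⟨hq0, hq1⟩ := hq
      obtain ⟨hbox, hti⟩ := hxB
      have hmem1 : (∑ k, q k * h k) ∈ S1 := by
        refine ⟨q, hq0, hq1, fun m => ?_, rfl⟩
        have := hbox m (Set.mem_univ m)
        exact ⟨this.1, this.2⟩
      have hle : (∑ k, q k * h k) ≤ p := le_csSup hS1bdd hmem1
      have : p + ε ≤ ∑ k, q k * h k := hti
      linarith
    obtain ⟨g, u, v, hgD, huv, hgB⟩ :=
      geometric_hahn_banach_compact_closed hDcvx hDcp hBcvx hBcl hdisj
    set y : Fin M → ℝ := fun m => g (Pi.single m 1, 0) with hy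
    set γ : ℝ := g (0, 1) with hγ
    have hdec : ∀ (w : Fin M → ℝ) (t : ℝ), g (w, t) = ∑ m, w m * y m + t * γ :=
      fun w t => mm_decomp K M g w t
    set w₀ : Fin M → ℝ := fun m => ∑ k, q₀ k * f m k with hw₀
    have hw₀box : ∀ m, ul m ≤ w₀ m ∧ w₀ m ≤ uu m := fun m => hq₀m m
    have hulu : ∀ m, ul m ≤ uu m := fun m => le_trans (hw₀box m).1 (hw₀box m).2
    have hBmem : ∀ t : ℝ, p + ε ≤ t → (w₀, t) ∈ B := by
      intro t ht
      exact ⟨fun m _ => ⟨(hw₀box m).1, (hw₀box m).2⟩, ht⟩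
    have hq₀D : T q₀ ∈ D := ⟨q₀, ⟨hq₀0, hq₀1⟩, rfl⟩
    have hTq₀ : g (T q₀) = ∑ m, w₀ m * y m + (∑ k, q₀ k * h k) * γ := hdec w₀ _
    have hγpos : 0 < γ := by
      rcases lt_trichotomy γ 0 with hlt | heq | hpos
      · set t : ℝ := max (p + ε) ((v - ∑ m, w₀ m * y m) / γ) with hwt
        have h1 := hgB (w₀, t) (hBmem t (le_max_left _ _))
        rw [hdec] at h1
        have h2 : (v - ∑ m, w₀ m * y m) / γ ≤ t := le_max_right _ _
        have h3 : t * γ ≤ ((v - ∑ m, w₀ m * y m) / γ) * γ :=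
          mul_le_mul_of_nonpos_right h2 (le_of_lt hlt)
        rw [div_mul_cancel₀ _ (ne_of_lt hlt)] at h3
        linarith
      · have h1 := hgB (w₀, p + ε) (hBmem _ le_rfl)
        rw [hdec] at h1
        have h2 := hgD _ hq₀D
        rw [hTq₀] at h2
        rw [heq] at h1 h2
        linarith
      · exact hpos
    -- dual constraint from vertices of the simplex
    have hvert : ∀ k, ∑ m, f m k * y m + h k * γ < u := by
      intro k
      have hek : (Pi.single k 1 : Fin K → ℝ) ∈ stdSimplex ℝ (Fin K) := by
        constructor
        · intro j
          rcases eq_or_ne j k with rfl | hjk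
          · simp
          · simp [Pi.single_apply, hjk]
        · simp
      have h1 := hgD _ ⟨_, hek, rfl⟩
      have hTe : T (Pi.single k 1) = (fun m => f m k, h k) := by
        refine Prod.ext (funext fun m => ?_) ?_ <;>
          simp [hT, mmT, Pi.single_apply, Finset.sum_ite_eq', Finset.mem_univ]
      rw [hTe, hdec] at h1
      exact h1
    -- the minimizing corner of the box
    set wc : Fin M → ℝ := fun m => if 0 ≤ y m then ul m else uu m with hwc
    have hwcbox : (wc, p + ε) ∈ B := by
      refine ⟨fun m _ => ?_, Set.self_mem_Ici⟩
      dsimp [wc]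
      split_ifs
      · exact ⟨le_rfl, hulu m⟩
      · exact ⟨hulu m, le_rfl⟩
    have hwcsum : ∑ m, wc m * y m = ∑ m, (max (y m) 0 * ul m - max (-y m) 0 * uu m) := by
      refine Finset.sum_congr rfl fun m _ => ?_
      dsimp [wc]
      rcases le_or_gt 0 (y m) with hym | hym
      · rw [if_pos hym, max_eq_left hym, max_eq_right (by linarith : -y m ≤ 0)]
        ring
      · rw [if_neg (not_le.mpr hym), max_eq_right (le_of_lt hym),
          max_eq_left (by linarith : 0 ≤ -y m)]
        ring
    have hkey : u + ∑ m, max (-y m) 0 * uu m - ∑ m, max (y m) 0 * ul m < (p + ε) * γ := by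
      have h1 := hgB _ hwcbox
      rw [hdec, hwcsum, Finset.sum_sub_distrib] at h1
      linarith
    -- build the dual solution
    have hvalmem : (u / γ + ∑ m, max (-y m) 0 / γ * uu m - ∑ m, max (y m) 0 / γ * ul m) ∈ S2 := by
      refine ⟨u / γ, fun m => max (y m) 0 / γ, fun m => max (-y m) 0 / γ,
        fun m => ⟨div_nonneg (le_max_right _ _) hγpos.le,
          div_nonneg (le_max_right _ _) hγpos.le⟩,
        fun k => ?_, rfl⟩
      have hdiff : ∀ m, max (-y m) 0 / γ - max (y m) 0 / γ = -(y m) / γ := by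
        intro m
        rw [div_sub_div_same]
        congr 1
        rcases le_or_gt 0 (y m) with hym | hym
        · rw [max_eq_left hym, max_eq_right (by linarith : -y m ≤ 0)]; ring
        · rw [max_eq_right (le_of_lt hym), max_eq_left (by linarith : 0 ≤ -y m)]; ring
      have hsum : ∑ m, (max (-y m) 0 / γ - max (y m) 0 / γ) * f m k
          = -(∑ m, f m k * y m) / γ := by
        calc ∑ m, (max (-y m) 0 / γ - max (y m) 0 / γ) * f m k
            = ∑ m, -(f m k * y m) / γ :=
              Finset.sum_congr rfl fun m _ => by rw [hdiff m]; ring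
          _ = -(∑ m, f m k * y m) / γ := by
              rw [← Finset.sum_div, ← Finset.sum_neg_distrib]
      rw [hsum]
      have hrw : u / γ + -(∑ m, f m k * y m) / γ = (u - ∑ m, f m k * y m) / γ := by ring
      rw [hrw, le_div_iff₀ hγpos]
      have := hvert k
      linarith
    refine le_trans (csInf_le hS2bdd hvalmem) ?_
    · have e1 : ∑ m, max (-y m) 0 / γ * uu m = (∑ m, max (-y m) 0 * uu m) / γ := by
        rw [Finset.sum_div]
        exact Finset.sum_congr rfl fun m _ => by ring
      have e2 : ∑ m, max (y m) 0 / γ * ul m = (∑ m, max (y m) 0 * ul m) / γ := by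
        rw [Finset.sum_div]
        exact Finset.sum_congr rfl fun m _ => by ring
      rw [e1, e2]
      have hrw : u / γ + (∑ m, max (-y m) 0 * uu m) / γ - (∑ m, max (y m) 0 * ul m) / γ
          = (u + ∑ m, max (-y m) 0 * uu m - ∑ m, max (y m) 0 * ul m) / γ := by ring
      rw [hrw, div_le_iff₀ hγpos]
      linarith
  exact le_of_forall_pos_le_add hmain
end

section
/- Theorem 4 (Variation distance + moment-based ambiguity, finite support, inner problem). Let L, K, M be positive natural numbers, h : Fin L → Fin K → ℝ (cost values at the K support points of each mode), f : Fin L → Fin M → Fin K → ℝ (moment basis values at the support points of each mode), moment bounds ul, uu : Fin L → Fin M → ℝ, a reference probability vector p̂ : Fin L → ℝ (p̂ l ≥ 0, ∑ l, p̂ l = 1), and ρ ≥ 0. Assume for each mode l there exists q : Fin K → ℝ with q ≥ 0, ∑ k, q k = 1, and ul l m ≤ ∑ k, q k * f l m k ≤ uu l m for all m. Then sSup { ∑ l, p l * (∑ k, q l k * h l k) | p : Fin L → ℝ, (∀ l, 0 ≤ p l), ∑ l, p l = 1, ∑ l, |p l - p̂ l| ≤ ρ, q : Fin L → Fin K → ℝ,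 ∀ l, ((∀ k, 0 ≤ q l k) ∧ ∑ k, q l k = 1 ∧ ∀ m, ul l m ≤ ∑ k, q l k * f l m k ∧ ∑ k, q l k * f l m k ≤ uu l m) } = sInf { η + ρ * λ + ∑ l, p̂ l * r l | η λ : ℝ, 0 ≤ λ, r α : Fin L → ℝ, bl bu : Fin L → Fin M → ℝ, ∀ l, ( (∀ m, 0 ≤ bl l m ∧ 0 ≤ bu l m) ∧ α l + ∑ m, bu l m * uu l m - ∑ m, bl l m * ul l m - η ≤ r l ∧ α l + ∑ m, bu l m * uu l m - ∑ m, bl l m * ul l m - η ≤ λ ∧ -λ ≤ r l ∧ ∀ k, h l k ≤ α l + ∑ m, (bu l m - bl l m) * f l m k ) }. Both values are finite (the sets are nonempty and respectively bounded above and below) and they coincide. -/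
open Set Pointwise

lemma sum_comb {n : ℕ} (a b' : ℝ) (q₁ q₂ d : Fin n → ℝ) :
    ∑ k, (a * q₁ k + b' * q₂ k) * d k
      = a * ∑ k, q₁ k * d k + b' * ∑ k, q₂ k * d k := by
  simp [add_mul, mul_assoc, Finset.sum_add_distrib, Finset.mul_sum]

lemma genLP (n : ℕ) {ι : Type*} [Fintype ι] [DecidableEq ι]
    (c : Fin n → ℝ) (g : ι → Fin n → ℝ) (b : ι → ℝ)
    (hfeas : ∃ q : Fin n → ℝ, (∀ k, 0 ≤ q k) ∧ (∑ k, q k = 1) ∧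
      ∀ j, ∑ k, q k * g j k ≤ b j) :
    ∃ V : ℝ,
      IsGreatest {x | ∃ q : Fin n → ℝ, (∀ k, 0 ≤ q k) ∧ (∑ k, q k = 1) ∧
          (∀ j, ∑ k, q k * g j k ≤ b j) ∧ x = ∑ k, q k * c k} V ∧
      ∀ ε : ℝ, 0 < ε → ∃ μ : ι → ℝ, (∀ j, 0 ≤ μ j) ∧
        ∀ k, c k ≤ (V + ε - ∑ j, μ j * b j) + ∑ j, μ j * g j k := by
  classical
  obtain ⟨q₀, hq₀0, hq₀1, hq₀g⟩ := hfeas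
  set Δ : Set (Fin n → ℝ) := {q | (∀ k, 0 ≤ q k) ∧ ∑ k, q k = 1} with hΔdef
  set F : Set (Fin n → ℝ) := {q | q ∈ Δ ∧ ∀ j, ∑ k, q k * g j k ≤ b j} with hFdef
  have hsumc : ∀ d : Fin n → ℝ, Continuous fun q : Fin n → ℝ => ∑ k, q k * d k :=
    fun d => continuous_finset_sum _ fun k _ => (continuous_apply k).mul continuous_const
  have hΔclosed : IsClosed Δ := by
    have h1 : IsClosed {q : Fin n → ℝ | ∀ k, 0 ≤ q k} := by
      have e : {q : Fin n → ℝ | ∀ k, 0 ≤ q k} = ⋂ k, {q | 0 ≤ q k} := by ext; simp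
      rw [e]
      exact isClosed_iInter fun k => isClosed_le continuous_const (continuous_apply k)
    have h2 : IsClosed {q : Fin n → ℝ | ∑ k, q k = 1} :=
      isClosed_eq (by simpa using hsumc fun _ => (1:ℝ)) continuous_const
    exact h1.inter h2
  have hΔbox : Δ ⊆ Set.pi Set.univ fun _ : Fin n => Set.Icc (0:ℝ) 1 := by
    rintro q ⟨h0, h1⟩ k _
    refine ⟨h0 k, ?_⟩
    have := Finset.single_le_sum (f := q) (fun i _ => h0 i) (Finset.mem_univ k)
    linarith
  have hΔcpt : IsCompact Δ :=
    IsCompact.of_isClosed_subset (isCompact_univ_pi fun _ => isCompact_Icc) hΔclosed hΔbox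
  have hFclosed : IsClosed F := by
    have e : F = Δ ∩ ⋂ j, {q | ∑ k, q k * g j k ≤ b j} := by
      ext q
      simp only [hFdef, Set.mem_setOf_eq, Set.mem_inter_iff, Set.mem_iInter]
    rw [e]
    exact hΔclosed.inter (isClosed_iInter fun j => isClosed_le (hsumc (g j)) continuous_const)
  have hFcpt : IsCompact F :=
    IsCompact.of_isClosed_subset hΔcpt hFclosed fun q hq => hq.1
  have hFne : F.Nonempty := ⟨q₀, ⟨hq₀0, hq₀1⟩, hq₀g⟩
  obtain ⟨qs, hqsF, hqsmax⟩ := hFcpt.exists_isMaxOn hFne (hsumc c).continuousOn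
  set V : ℝ := ∑ k, qs k * c k with hVdef
  have hgreat : IsGreatest {x | ∃ q : Fin n → ℝ, (∀ k, 0 ≤ q k) ∧ (∑ k, q k = 1) ∧
      (∀ j, ∑ k, q k * g j k ≤ b j) ∧ x = ∑ k, q k * c k} V := by
    constructor
    · exact ⟨qs, hqsF.1.1, hqsF.1.2, hqsF.2, rfl⟩
    · rintro x ⟨q, h0, h1, h2, rfl⟩
      exact hqsmax (⟨⟨h0, h1⟩, h2⟩ : q ∈ F)
  refine ⟨V, hgreat, ?_⟩
  intro ε hε
  -- separation argument
  set φ : (Fin n → ℝ) → (ι → ℝ) × ℝ :=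
    fun q => ((fun j => ∑ k, q k * g j k - b j), ∑ k, q k * c k) with hφdef
  set P : Set ((ι → ℝ) × ℝ) := {z | (∀ j, 0 ≤ z.1 j) ∧ z.2 ≤ 0} with hPdef
  set C : Set ((ι → ℝ) × ℝ) := (φ '' Δ) + P with hCdef
  have hCmem : ∀ z : (ι → ℝ) × ℝ, z ∈ C ↔
      ∃ q ∈ Δ, (∀ j, ∑ k, q k * g j k - b j ≤ z.1 j) ∧ z.2 ≤ ∑ k, q k * c k := by
    intro z
    constructor
    · rintro ⟨a, ⟨q, hqΔ, rfl⟩, p, hp, rfl⟩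
      exact ⟨q, hqΔ, fun j => by
          have := hp.1 j
          simp only [hφdef, Prod.fst_add, Pi.add_apply]
          linarith,
        by have := hp.2; simp only [hφdef, Prod.snd_add]; linarith⟩
    · rintro ⟨q, hqΔ, hy, ht⟩
      refine ⟨φ q, ⟨q, hqΔ, rfl⟩, z - φ q, ⟨fun j => ?_, ?_⟩,
        by show φ q + (z - φ q) = z; abel⟩
      · have := hy j
        simp only [hφdef, Prod.fst_sub, Pi.sub_apply]
        linarith
      · simp only [hφdef, Prod.snd_sub]
        linarith
  have hCconv : Convex ℝ C := by
    intro z₁ hz₁ z₂ hz₂ a b' ha hb' hab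
    rw [hCmem] at hz₁ hz₂ ⊢
    obtain ⟨q₁, ⟨hq₁0, hq₁1⟩, hy₁, ht₁⟩ := hz₁
    obtain ⟨q₂, ⟨hq₂0, hq₂1⟩, hy₂, ht₂⟩ := hz₂
    have hbj : ∀ t : ℝ, a * t + b' * t = t := fun t => by rw [← add_mul, hab, one_mul]
    refine ⟨fun k => a * q₁ k + b' * q₂ k,
      ⟨fun k => add_nonneg (mul_nonneg ha (hq₁0 k)) (mul_nonneg hb' (hq₂0 k)), by
        rw [Finset.sum_add_distrib, ← Finset.mul_sum, ← Finset.mul_sum, hq₁1, hq₂1,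
          mul_one, mul_one, hab]⟩, fun j => ?_, ?_⟩
    · rw [sum_comb]
      have h1 : a * (∑ k, q₁ k * g j k) - a * b j ≤ a * z₁.1 j := by
        rw [← mul_sub]; exact mul_le_mul_of_nonneg_left (hy₁ j) ha
      have h2 : b' * (∑ k, q₂ k * g j k) - b' * b j ≤ b' * z₂.1 j := by
        rw [← mul_sub]; exact mul_le_mul_of_nonneg_left (hy₂ j) hb'
      have e : (a • z₁ + b' • z₂).1 j = a * z₁.1 j + b' * z₂.1 j := by
        simp [Prod.fst_add, Pi.add_apply, smul_eq_mul]
      rw [e]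
      have := hbj (b j)
      linarith
    · rw [sum_comb]
      have h1 := mul_le_mul_of_nonneg_left ht₁ ha
      have h2 := mul_le_mul_of_nonneg_left ht₂ hb'
      have e : (a • z₁ + b' • z₂).2 = a * z₁.2 + b' * z₂.2 := by
        simp [Prod.snd_add, smul_eq_mul]
      rw [e]
      linarith
  have hCclosed : IsClosed C := by
    have hφc : Continuous φ :=
      Continuous.prodMk
        (continuous_pi fun j => (hsumc (g j)).sub continuous_const) (hsumc c)
    have hScpt : IsCompact (φ '' Δ) := hΔcpt.image hφc
    have hPclosed : IsClosed P := by
      have h1 : IsClosed {z : (ι → ℝ) × ℝ | ∀ j, 0 ≤ z.1 j} := by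
        have e : {z : (ι → ℝ) × ℝ | ∀ j, 0 ≤ z.1 j} = ⋂ j, {z | 0 ≤ z.1 j} := by ext; simp
        rw [e]
        exact isClosed_iInter fun j =>
          isClosed_le continuous_const ((continuous_apply j).comp continuous_fst)
      exact h1.inter (isClosed_le continuous_snd continuous_const)
    have := hPclosed.vadd_left_of_isCompact hScpt
    exact this
  have hx₀ : ((0 : ι → ℝ) , V + ε) ∉ C := by
    rw [hCmem]
    rintro ⟨q, hqΔ, hy, ht⟩
    have hqF : q ∈ F := ⟨hqΔ, fun j => by simpa using hy j⟩
    have h1 : (∑ k, q k * c k) ≤ V := hqsmax hqF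
    have h2 : V + ε ≤ ∑ k, q k * c k := ht
    linarith
  obtain ⟨f, u, hfu, hux⟩ := geometric_hahn_banach_closed_point hCconv hCclosed hx₀
  set κ : ℝ := f ((0 : ι → ℝ), 1) with hκdef
  set μ' : ι → ℝ := fun j => f ((Pi.single j 1 : ι → ℝ), 0) with hμ'def
  have hdecomp : ∀ z : (ι → ℝ) × ℝ, f z = (∑ j, z.1 j * μ' j) + z.2 * κ := by
    intro z
    have hz : z = (∑ j, z.1 j • (((Pi.single j 1 : ι → ℝ), (0:ℝ)) : (ι → ℝ) × ℝ))
        + z.2 • (((0 : ι → ℝ), (1:ℝ)) : (ι → ℝ) × ℝ) := by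
      apply Prod.ext
      · simp only [Prod.fst_add, Prod.fst_sum, Prod.smul_fst]
        simp [← Pi.single_smul', Finset.univ_sum_single]
      · simp only [Prod.snd_add, Prod.snd_sum, Prod.smul_snd]
        simp
    have e : f z = f ((∑ j, z.1 j • (((Pi.single j 1 : ι → ℝ), (0:ℝ)) : (ι → ℝ) × ℝ))
        + z.2 • (((0 : ι → ℝ), (1:ℝ)) : (ι → ℝ) × ℝ)) := by rw [← hz]
    rw [e, map_add, map_sum, map_smul]
    simp only [map_smul, smul_eq_mul]
    rfl
  have hray : ∀ v : (ι → ℝ) × ℝ, (∀ w : ℝ, 0 ≤ w → φ q₀ + w • v ∈ C) → f v ≤ 0 := by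
    intro v hv
    by_contra hpos
    push_neg at hpos
    have hA : f (φ q₀) < u := by
      have h0 := hfu _ (hv 0 le_rfl)
      simpa using h0
    set w : ℝ := (u - f (φ q₀)) / f v with hwdef
    have hw0 : 0 ≤ w := le_of_lt (div_pos (by linarith) hpos)
    have := hfu _ (hv w hw0)
    rw [map_add, map_smul, smul_eq_mul, hwdef, div_mul_cancel₀ _ (ne_of_gt hpos)] at this
    linarith
  have hq₀Δ : q₀ ∈ Δ := ⟨hq₀0, hq₀1⟩
  have hmemray1 : ∀ w : ℝ, 0 ≤ w →
      φ q₀ + w • ((((0 : ι → ℝ) : ι → ℝ), (-1:ℝ)) : (ι → ℝ) × ℝ) ∈ C := by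
    intro w hw
    rw [hCmem]
    refine ⟨q₀, hq₀Δ, fun j => ?_, ?_⟩
    · simp [hφdef]
    · simp only [hφdef, Prod.snd_add, Prod.smul_snd, smul_eq_mul]
      nlinarith
  have hmemray2 : ∀ j : ι, ∀ w : ℝ, 0 ≤ w →
      φ q₀ + w • (((Pi.single j 1 : ι → ℝ), (0:ℝ)) : (ι → ℝ) × ℝ) ∈ C := by
    intro j w hw
    rw [hCmem]
    refine ⟨q₀, hq₀Δ, fun i => ?_, ?_⟩
    · simp only [hφdef, Prod.fst_add, Prod.smul_fst, Pi.add_apply, Pi.smul_apply,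
        smul_eq_mul]
      have : 0 ≤ w * (Pi.single j 1 : ι → ℝ) i := by
        apply mul_nonneg hw
        rcases eq_or_ne i j with rfl | hij
        · simp
        · simp [Pi.single_apply, hij]
      linarith
    · simp [hφdef]
  have hκ0 : 0 ≤ κ := by
    have := hray _ hmemray1
    have e : f ((((0 : ι → ℝ) : ι → ℝ), (-1:ℝ)) : (ι → ℝ) × ℝ) = -κ := by
      rw [hdecomp]; simp
    rw [e] at this
    linarith
  have hμ'le : ∀ j, μ' j ≤ 0 := fun j => hray _ (hmemray2 j)
  have hfx₀ : f ((0 : ι → ℝ), V + ε) = (V + ε) * κ := by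
    rw [hdecomp]; simp
  have hκne : κ ≠ 0 := by
    intro hzero
    have h1 : ((0 : ι → ℝ) , ∑ k, q₀ k * c k) ∈ C := by
      rw [hCmem]
      exact ⟨q₀, hq₀Δ, fun j => by simpa using sub_nonpos.mpr (hq₀g j), le_rfl⟩
    have h2 := hfu _ h1
    have e : f ((0 : ι → ℝ), ∑ k, q₀ k * c k) = (∑ k, q₀ k * c k) * κ := by
      rw [hdecomp]; simp
    rw [e, hzero, mul_zero] at h2
    rw [hfx₀, hzero, mul_zero] at hux
    linarith
  have hκpos : 0 < κ := lt_of_le_of_ne hκ0 (Ne.symm hκne)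
  refine ⟨fun j => -μ' j / κ, fun j => div_nonneg (neg_nonneg.2 (hμ'le j)) hκpos.le, ?_⟩
  intro k
  have hek : (Pi.single k 1 : Fin n → ℝ) ∈ Δ := by
    constructor
    · intro i
      rcases eq_or_ne i k with rfl | hik
      · simp
      · simp [Pi.single_apply, hik]
    · simp
  have hφek : φ (Pi.single k 1 : Fin n → ℝ) ∈ C := by
    rw [hCmem]
    exact ⟨_, hek, fun j => le_rfl, le_rfl⟩
  have hlt := lt_trans (hfu _ hφek) hux
  rw [hfx₀, hdecomp] at hlt
  have hsum1 : ∀ d : Fin n → ℝ, (∑ i, (Pi.single k 1 : Fin n → ℝ) i * d i) = d k := by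
    intro d; simp [Pi.single_apply]
  set μ : ι → ℝ := fun j => -μ' j / κ with hμdef
  have hμκ : ∀ j, μ j * κ = -μ' j := fun j => div_mul_cancel₀ _ hκne
  have h1 : (∑ j, μ j * b j) * κ = ∑ j, -μ' j * b j := by
    rw [Finset.sum_mul]
    exact Finset.sum_congr rfl fun j _ => by rw [mul_right_comm, hμκ]
  have h2 : (∑ j, μ j * g j k) * κ = ∑ j, -μ' j * g j k := by
    rw [Finset.sum_mul]
    exact Finset.sum_congr rfl fun j _ => by rw [mul_right_comm, hμκ]
  have hexp : ∑ j, (φ (Pi.single k 1 : Fin n → ℝ)).1 j * μ' j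
      = (∑ j, -μ' j * b j) - (∑ j, -μ' j * g j k) := by
    rw [← Finset.sum_sub_distrib]
    refine Finset.sum_congr rfl fun j _ => ?_
    simp only [hφdef, hsum1]
    ring
  have hsnd : (φ (Pi.single k 1 : Fin n → ℝ)).2 = c k := by
    simp only [hφdef, hsum1]
  rw [hexp, hsnd] at hlt
  have hfinal : c k * κ < ((V + ε - ∑ j, μ j * b j) + ∑ j, μ j * g j k) * κ := by
    have e : ((V + ε - ∑ j, μ j * b j) + ∑ j, μ j * g j k) * κ
        = (V + ε) * κ - (∑ j, μ j * b j) * κ + (∑ j, μ j * g j k) * κ := by ring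
    rw [e, h1, h2]
    linarith
  exact le_of_lt ((mul_lt_mul_iff_of_pos_right hκpos).mp hfinal)

open scoped BigOperators

/-- Theorem 4 (Variation distance + moment-based ambiguity, finite support,
inner problem). -/
theorem variation_moment_finite_support_duality
    (L K M : ℕ) (hL : 0 < L) (hK : 0 < K) (hM : 0 < M)
    (h : Fin L → Fin K → ℝ) (f : Fin L → Fin M → Fin K → ℝ)
    (ul uu : Fin L → Fin M → ℝ)
    (pHat : Fin L → ℝ) (hpHat0 : ∀ l, 0 ≤ pHat l) (hpHatSum : ∑ l, pHat l = 1)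
    (ρ : ℝ) (hρ : 0 ≤ ρ)
    (hne : ∀ l, ∃ q : Fin K → ℝ, (∀ k, 0 ≤ q k) ∧ (∑ k, q k = 1) ∧
      ∀ m, ul l m ≤ ∑ k, q k * f l m k ∧ ∑ k, q k * f l m k ≤ uu l m) :
    let S1 : Set ℝ := { x | ∃ p : Fin L → ℝ, (∀ l, 0 ≤ p l) ∧ (∑ l, p l = 1) ∧
        (∑ l, |p l - pHat l| ≤ ρ) ∧
        ∃ q : Fin L → Fin K → ℝ,
          (∀ l, (∀ k, 0 ≤ q l k) ∧ (∑ k, q l k = 1) ∧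
            ∀ m, ul l m ≤ ∑ k, q l k * f l m k ∧ ∑ k, q l k * f l m k ≤ uu l m) ∧
          x = ∑ l, p l * (∑ k, q l k * h l k) }
    let S2 : Set ℝ := { x | ∃ η lam : ℝ, 0 ≤ lam ∧
        ∃ r α : Fin L → ℝ, ∃ bl bu : Fin L → Fin M → ℝ,
          (∀ l, (∀ m, 0 ≤ bl l m ∧ 0 ≤ bu l m) ∧
            (α l + ∑ m, bu l m * uu l m - ∑ m, bl l m * ul l m - η ≤ r l) ∧
            (α l + ∑ m, bu l m * uu l m - ∑ m, bl l m * ul l m - η ≤ lam) ∧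
            (-lam ≤ r l) ∧
            ∀ k, h l k ≤ α l + ∑ m, (bu l m - bl l m) * f l m k) ∧
          x = η + ρ * lam + ∑ l, pHat l * r l }
    S1.Nonempty ∧ BddAbove S1 ∧ S2.Nonempty ∧ BddBelow S2 ∧ sSup S1 = sInf S2 := by
  classical
  intro S1 S2
  -- inner problems
  set gIn : Fin L → (Fin M ⊕ Fin M) → Fin K → ℝ :=
    fun l => Sum.elim (fun m k => f l m k) (fun m k => -f l m k) with hgIn
  set bIn : Fin L → (Fin M ⊕ Fin M) → ℝ :=
    fun l => Sum.elim (fun m => uu l m) (fun m => -ul l m) with hbIn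
  have hconv : ∀ (l : Fin L) (q : Fin K → ℝ),
      (∀ j, ∑ k, q k * gIn l j k ≤ bIn l j) ↔
      (∀ m, ul l m ≤ ∑ k, q k * f l m k ∧ ∑ k, q k * f l m k ≤ uu l m) := by
    intro l q
    have hneg : ∀ m, ∑ k, q k * (-(f l m k)) = -∑ k, q k * f l m k := by
      intro m; simp [mul_neg]
    constructor
    · intro hj m
      refine ⟨?_, hj (Sum.inl m)⟩
      have := hj (Sum.inr m)
      simp only [hgIn, hbIn, Sum.elim_inr] at this
      rw [hneg m] at this
      linarith
    · rintro hm (m | m)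
      · exact (hm m).2
      · simp only [hgIn, hbIn, Sum.elim_inr]
        rw [hneg m]
        have := (hm m).1
        linarith
  have hInner : ∀ l : Fin L, ∃ V : ℝ,
      IsGreatest {x | ∃ q : Fin K → ℝ, (∀ k, 0 ≤ q k) ∧ (∑ k, q k = 1) ∧
          (∀ j, ∑ k, q k * gIn l j k ≤ bIn l j) ∧ x = ∑ k, q k * h l k} V ∧
      ∀ ε : ℝ, 0 < ε → ∃ μ : (Fin M ⊕ Fin M) → ℝ, (∀ j, 0 ≤ μ j) ∧
        ∀ k, h l k ≤ (V + ε - ∑ j, μ j * bIn l j) + ∑ j, μ j * gIn l j k := by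
    intro l
    apply genLP K (h l) (gIn l) (bIn l)
    obtain ⟨q, hq0, hq1, hqm⟩ := hne l
    exact ⟨q, hq0, hq1, (hconv l q).mpr hqm⟩
  choose v hvGreat hvDual using hInner
  -- outer problem
  set sgn : (Fin L → Bool) → Fin L → ℝ := fun σ l => if σ l then 1 else -1 with hsgn
  set bOut : (Fin L → Bool) → ℝ := fun σ => ρ + ∑ l, sgn σ l * pHat l with hbOut
  have hVD : ∀ p : Fin L → ℝ,
      (∑ l, |p l - pHat l| ≤ ρ) ↔ (∀ σ, ∑ l, p l * sgn σ l ≤ bOut σ) := by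
    intro p
    constructor
    · intro habs σ
      have hpt : ∀ l, p l * sgn σ l - sgn σ l * pHat l ≤ |p l - pHat l| := by
        intro l
        rcases Bool.eq_false_or_eq_true (σ l) with hb | hb
        · have hs : sgn σ l = 1 := by simp [hsgn, hb]
          rw [hs]
          have := le_abs_self (p l - pHat l)
          linarith
        · have hs : sgn σ l = -1 := by simp [hsgn, hb]
          rw [hs]
          have := neg_abs_le (p l - pHat l)
          linarith
      have hsum : ∑ l, (p l * sgn σ l - sgn σ l * pHat l) ≤ ∑ l, |p l - pHat l| :=
        Finset.sum_le_sum fun l _ => hpt l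
      rw [Finset.sum_sub_distrib] at hsum
      simp only [hbOut]
      linarith
    · intro hσ
      set σ : Fin L → Bool := fun l => decide (pHat l ≤ p l) with hσdef
      have hpt : ∀ l, |p l - pHat l| = p l * sgn σ l - sgn σ l * pHat l := by
        intro l
        by_cases hc : pHat l ≤ p l
        · have hs : sgn σ l = 1 := by simp [hsgn, hσdef, hc]
          rw [hs, abs_of_nonneg (by linarith)]
          ring
        · have hs : sgn σ l = -1 := by simp [hsgn, hσdef, hc]
          rw [hs, abs_of_neg (by push_neg at hc; linarith)]
          ring
      have := hσ σ
      simp only [hbOut] at this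
      calc ∑ l, |p l - pHat l| = ∑ l, (p l * sgn σ l - sgn σ l * pHat l) :=
            Finset.sum_congr rfl fun l _ => hpt l
        _ = ∑ l, p l * sgn σ l - ∑ l, sgn σ l * pHat l := Finset.sum_sub_distrib _ _
        _ ≤ ρ := by linarith
  have hOuter : ∃ V : ℝ,
      IsGreatest {x | ∃ p : Fin L → ℝ, (∀ l, 0 ≤ p l) ∧ (∑ l, p l = 1) ∧
          (∀ σ, ∑ l, p l * sgn σ l ≤ bOut σ) ∧ x = ∑ l, p l * v l} V ∧
      ∀ ε : ℝ, 0 < ε → ∃ μ : (Fin L → Bool) → ℝ, (∀ σ, 0 ≤ μ σ) ∧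
        ∀ l, v l ≤ (V + ε - ∑ σ, μ σ * bOut σ) + ∑ σ, μ σ * sgn σ l := by
    apply genLP L v sgn bOut
    refine ⟨pHat, hpHat0, hpHatSum, fun σ => ?_⟩
    have e : ∑ l, pHat l * sgn σ l = ∑ l, sgn σ l * pHat l :=
      Finset.sum_congr rfl fun l _ => mul_comm _ _
    simp only [hbOut, e]
    linarith
  obtain ⟨V, hVGreat, hVDual⟩ := hOuter
  -- S1 is attained at V
  have hS1Great : IsGreatest S1 V := by
    constructor
    · obtain ⟨p, hp0, hp1, hpσ, hVp⟩ := hVGreat.1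
      choose qq hqq using fun l => (hvGreat l).1
      refine ⟨p, hp0, hp1, (hVD p).mpr hpσ, qq,
        fun l => ⟨(hqq l).1, (hqq l).2.1, (hconv l (qq l)).mp (hqq l).2.2.1⟩, ?_⟩
      rw [hVp]
      exact Finset.sum_congr rfl fun l _ => by rw [(hqq l).2.2.2]
    · rintro x ⟨p, hp0, hp1, hpρ, q, hq, rfl⟩
      have step1 : ∀ l, ∑ k, q l k * h l k ≤ v l := fun l =>
        (hvGreat l).2 ⟨q l, (hq l).1, (hq l).2.1, (hconv l (q l)).mpr (hq l).2.2, rfl⟩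
      have step2 : ∑ l, p l * (∑ k, q l k * h l k) ≤ ∑ l, p l * v l :=
        Finset.sum_le_sum fun l _ => mul_le_mul_of_nonneg_left (step1 l) (hp0 l)
      have step3 : ∑ l, p l * v l ≤ V := hVGreat.2 ⟨p, hp0, hp1, (hVD p).mp hpρ, rfl⟩
      linarith
  -- dual elements achieving V + ε
  have hS2eps : ∀ ε : ℝ, 0 < ε → (V + ε) ∈ S2 := by
    intro ε hε
    have hε2 : (0:ℝ) < ε / 2 := by linarith
    choose μIn hμIn0 hμInk using fun l => hvDual l (ε/2) hε2
    obtain ⟨μO, hμO0, hμOk⟩ := hVDual (ε/2) hε2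
    set bu : Fin L → Fin M → ℝ := fun l m => μIn l (Sum.inl m) with hbu
    set bl : Fin L → Fin M → ℝ := fun l m => μIn l (Sum.inr m) with hbl
    set α : Fin L → ℝ := fun l => v l + ε/2 - ∑ j, μIn l j * bIn l j with hα
    set lam : ℝ := ∑ σ, μO σ with hlam
    set r : Fin L → ℝ := fun l => ∑ σ, μO σ * sgn σ l with hr
    set η : ℝ := (V + ε/2 - ∑ σ, μO σ * bOut σ) + ε/2 with hη
    have fact1 : ∀ l, ∑ j, μIn l j * bIn l j
        = ∑ m, bu l m * uu l m - ∑ m, bl l m * ul l m := by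
      intro l
      rw [Fintype.sum_sum_type]
      simp only [hbIn, Sum.elim_inl, Sum.elim_inr, mul_neg, Finset.sum_neg_distrib,
        hbu, hbl]
      ring
    have fact2 : ∀ l k, ∑ j, μIn l j * gIn l j k
        = ∑ m, (bu l m - bl l m) * f l m k := by
      intro l k
      rw [Fintype.sum_sum_type]
      simp only [hgIn, Sum.elim_inl, Sum.elim_inr, mul_neg, Finset.sum_neg_distrib,
        hbu, hbl]
      rw [← sub_eq_add_neg, ← Finset.sum_sub_distrib]
      exact Finset.sum_congr rfl fun m _ => by ring
    have hdl : ∀ l, α l + ∑ m, bu l m * uu l m - ∑ m, bl l m * ul l m = v l + ε/2 := by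
      intro l
      rw [hα]
      simp only [fact1 l]
      ring
    have hrabs : ∀ l, |r l| ≤ lam := by
      intro l
      rw [hr, hlam]
      refine (Finset.abs_sum_le_sum_abs _ _).trans (Finset.sum_le_sum fun σ _ => ?_)
      rw [abs_mul, abs_of_nonneg (hμO0 σ)]
      have : |sgn σ l| = 1 := by
        rcases Bool.eq_false_or_eq_true (σ l) with hb | hb <;>
          simp [hsgn, hb]
      rw [this, mul_one]
    have hvr : ∀ l, v l - (V + ε/2 - ∑ σ, μO σ * bOut σ) ≤ r l := by
      intro l
      have := hμOk l
      rw [hr]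
      linarith
    have hlam0 : 0 ≤ lam := Finset.sum_nonneg fun σ _ => hμO0 σ
    refine ⟨η, lam, hlam0, r, α, bl, bu, fun l => ?_, ?_⟩
    · refine ⟨fun m => ⟨hμIn0 l (Sum.inr m), hμIn0 l (Sum.inl m)⟩, ?_, ?_, ?_, ?_⟩
      · rw [hdl l, hη]
        have := hvr l
        have := hrabs l
        linarith
      · rw [hdl l, hη]
        have h1 := hvr l
        have h2 := (abs_le.mp (hrabs l)).2
        linarith
      · have := (abs_le.mp (hrabs l)).1
        linarith
      · intro k
        have := hμInk l k
        rw [fact2 l k] at this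
        rw [hα]
        linarith
    · -- value computation
      have swap : ∑ σ, μO σ * (∑ l, sgn σ l * pHat l) = ∑ l, pHat l * r l := by
        calc ∑ σ, μO σ * (∑ l, sgn σ l * pHat l)
            = ∑ σ, ∑ l, μO σ * (sgn σ l * pHat l) :=
              Finset.sum_congr rfl fun σ _ => Finset.mul_sum _ _ _
          _ = ∑ l, ∑ σ, μO σ * (sgn σ l * pHat l) := Finset.sum_comm
          _ = ∑ l, pHat l * r l := Finset.sum_congr rfl fun l _ => by
              rw [hr, Finset.mul_sum]
              exact Finset.sum_congr rfl fun σ _ => by ring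
      have hbOutsum : ∑ σ, μO σ * bOut σ = ρ * lam + ∑ l, pHat l * r l := by
        simp only [hbOut, mul_add]
        rw [Finset.sum_add_distrib, swap]
        have : ∑ σ, μO σ * ρ = ρ * lam := by
          rw [hlam, Finset.mul_sum]
          exact Finset.sum_congr rfl fun σ _ => mul_comm _ _
        linarith
      rw [hη]
      rw [hbOutsum]
      ring
  -- weak duality
  have hweak : ∀ x ∈ S1, ∀ y ∈ S2, x ≤ y := by
    rintro x ⟨p, hp0, hp1, hpρ, q, hq, rfl⟩ y ⟨η, lam, hlam, r, α, bl, bu, hcon, rfl⟩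
    have step1 : ∀ l, ∑ k, q l k * h l k
        ≤ α l + ∑ m, bu l m * uu l m - ∑ m, bl l m * ul l m := by
      intro l
      obtain ⟨hq0, hq1, hqm⟩ := hq l
      have a1 : ∑ k, q l k * h l k
          ≤ ∑ k, q l k * (α l + ∑ m, (bu l m - bl l m) * f l m k) :=
        Finset.sum_le_sum fun k _ =>
          mul_le_mul_of_nonneg_left ((hcon l).2.2.2.2 k) (hq0 k)
      have a2 : ∑ k, q l k * (α l + ∑ m, (bu l m - bl l m) * f l m k)
          = α l + ∑ m, (bu l m - bl l m) * (∑ k, q l k * f l m k) := by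
        simp only [mul_add, Finset.sum_add_distrib, ← Finset.sum_mul, hq1, one_mul]
        congr 1
        calc ∑ k, q l k * ∑ m, (bu l m - bl l m) * f l m k
            = ∑ k, ∑ m, q l k * ((bu l m - bl l m) * f l m k) :=
              Finset.sum_congr rfl fun k _ => Finset.mul_sum _ _ _
          _ = ∑ m, ∑ k, q l k * ((bu l m - bl l m) * f l m k) := Finset.sum_comm
          _ = ∑ m, (bu l m - bl l m) * ∑ k, q l k * f l m k :=
              Finset.sum_congr rfl fun m _ => by
                rw [Finset.mul_sum]
                exact Finset.sum_congr rfl fun k _ => by ring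
      have a3 : ∑ m, (bu l m - bl l m) * (∑ k, q l k * f l m k)
          ≤ ∑ m, (bu l m * uu l m - bl l m * ul l m) := by
        refine Finset.sum_le_sum fun m _ => ?_
        have h1 := mul_le_mul_of_nonneg_left ((hqm m).2) ((hcon l).1 m).2
        have h2 := mul_le_mul_of_nonneg_left ((hqm m).1) ((hcon l).1 m).1
        nlinarith [h1, h2]
      rw [Finset.sum_sub_distrib] at a3
      linarith
    have step2 : ∑ l, p l * (∑ k, q l k * h l k)
        ≤ ∑ l, p l * (α l + ∑ m, bu l m * uu l m - ∑ m, bl l m * ul l m) :=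
      Finset.sum_le_sum fun l _ => mul_le_mul_of_nonneg_left (step1 l) (hp0 l)
    set d : Fin L → ℝ := fun l => α l + ∑ m, bu l m * uu l m - ∑ m, bl l m * ul l m with hd
    set mn : Fin L → ℝ := fun l => min (r l) lam with hmn
    have b1 : ∀ l, d l - η ≤ mn l := fun l => le_min (hcon l).2.1 (hcon l).2.2.1
    have b2 : ∀ l, |mn l| ≤ lam := fun l => abs_le.mpr
      ⟨le_min (hcon l).2.2.2.1 (by linarith), min_le_right _ _⟩
    have c1 : ∑ l, p l * d l = ∑ l, p l * (d l - η) + η := by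
      simp only [mul_sub, Finset.sum_sub_distrib, ← Finset.sum_mul, hp1, one_mul]
      ring
    have c2 : ∑ l, p l * (d l - η) ≤ ∑ l, p l * mn l :=
      Finset.sum_le_sum fun l _ => mul_le_mul_of_nonneg_left (b1 l) (hp0 l)
    have c3 : ∑ l, p l * mn l = ∑ l, pHat l * mn l + ∑ l, (p l - pHat l) * mn l := by
      rw [← Finset.sum_add_distrib]
      exact Finset.sum_congr rfl fun l _ => by ring
    have c4 : ∑ l, pHat l * mn l ≤ ∑ l, pHat l * r l :=
      Finset.sum_le_sum fun l _ =>
        mul_le_mul_of_nonneg_left (min_le_left _ _) (hpHat0 l)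
    have c5 : ∑ l, (p l - pHat l) * mn l ≤ ρ * lam := by
      have e1 : ∀ l, (p l - pHat l) * mn l ≤ |p l - pHat l| * lam := by
        intro l
        calc (p l - pHat l) * mn l ≤ |(p l - pHat l) * mn l| := le_abs_self _
          _ = |p l - pHat l| * |mn l| := abs_mul _ _
          _ ≤ |p l - pHat l| * lam :=
              mul_le_mul_of_nonneg_left (b2 l) (abs_nonneg _)
      calc ∑ l, (p l - pHat l) * mn l ≤ ∑ l, |p l - pHat l| * lam :=
            Finset.sum_le_sum fun l _ => e1 l
        _ = (∑ l, |p l - pHat l|) * lam := (Finset.sum_mul _ _ _).symm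
        _ ≤ ρ * lam := mul_le_mul_of_nonneg_right hpρ hlam
    linarith
  -- assemble
  have hS1ne : S1.Nonempty := ⟨V, hS1Great.1⟩
  have hS2ne : S2.Nonempty := ⟨V + 1, hS2eps 1 one_pos⟩
  have hS2bdd : BddBelow S2 := ⟨V, fun y hy => hweak V hS1Great.1 y hy⟩
  refine ⟨hS1ne, ⟨V, fun x hx => hS1Great.2 hx⟩, hS2ne, hS2bdd, ?_⟩
  rw [hS1Great.csSup_eq]
  refine le_antisymm (le_csInf hS2ne fun y hy => hweak V hS1Great.1 y hy) ?_
  refine le_of_forall_pos_le_add fun ε hε => ?_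
  exact csInf_le hS2bdd (hS2eps ε hε)
end

section
/- Theorem 8 (nesting of the multimodal moment-based ambiguity set in its single-modal counterpart). Let Ω be a measurable space, L a positive natural number, and P : Fin L → Measure Ω a family of probability measures. Let f : Ω → ℝ be measurable and integrable with respect to each P l, and let ul, uu : Fin L → ℝ satisfy 0 ≤ ul l, 0 ≤ uu l, and ul l ≤ ∫ f ∂(P l) ≤ uu l for all l. Let ρ ≥ 0, let p̂ : Fin L → ℝ be a probability vector (p̂ l ≥ 0, ∑ l, p̂ l = 1), and let p : Fin L → ℝ be a probability vector with ∑ l, |p l - p̂ l| ≤ ρ. Then the mixture μ := ∑ l, (ENNReal.ofReal (p l)) • P l is a probability measure on Ω, f is μ-integrable, and ∑ l, (p̂ l - ρ) * ul l ≤ ∫ f ∂μ ≤ ∑ l, (p̂ l + ρ) * uu l. -/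
/-!
The mixture integral is the convex combination `∑ l, p l * ∫ f ∂P l` of the component moments.
A single term of the total variation is at most `ρ`, so `pHat l - ρ ≤ p l ≤ pHat l + ρ`, and the
bounds follow term by term because the moment bounds `ul l ≤ ∫ f ∂P l ≤ uu l` are nonnegative.
-/

open MeasureTheory
open scoped BigOperators ENNReal

lemma abs_sub_le_of_sum_abs_sub_le {ι : Type*} [Fintype ι] {p q : ι → ℝ} {ρ : ℝ}
    (h : ∑ i, |p i - q i| ≤ ρ) (i : ι) : |p i - q i| ≤ ρ :=
  (Finset.single_le_sum (fun j _ => abs_nonneg (p j - q j)) (Finset.mem_univ i)).trans h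

section Mixture

variable {Ω ι : Type*} [MeasurableSpace Ω] [Fintype ι] (P : ι → Measure Ω) (w : ι → ℝ)

lemma isProbabilityMeasure_sum_ofReal_smul [∀ i, IsProbabilityMeasure (P i)]
    (hw0 : ∀ i, 0 ≤ w i) (hw1 : ∑ i, w i = 1) :
    IsProbabilityMeasure (∑ i, ENNReal.ofReal (w i) • P i) := by
  constructor
  simp only [Measure.finsetSum_apply, Measure.smul_apply, measure_univ, smul_eq_mul, mul_one]
  rw [← ENNReal.ofReal_sum_of_nonneg fun i _ => hw0 i, hw1, ENNReal.ofReal_one]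

variable {P} {f : Ω → ℝ}

lemma integrable_sum_ofReal_smul (hf : ∀ i, Integrable f (P i)) :
    Integrable f (∑ i, ENNReal.ofReal (w i) • P i) :=
  integrable_finsetSum_measure.mpr fun i _ => (hf i).smul_measure ENNReal.ofReal_ne_top

lemma integral_sum_ofReal_smul (hf : ∀ i, Integrable f (P i)) (hw0 : ∀ i, 0 ≤ w i) :
    ∫ ω, f ω ∂(∑ i, ENNReal.ofReal (w i) • P i) = ∑ i, w i * ∫ ω, f ω ∂(P i) := by
  rw [integral_finsetSum_measure fun i _ => (hf i).smul_measure ENNReal.ofReal_ne_top]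
  refine Finset.sum_congr rfl fun i _ => ?_
  rw [integral_smul_measure, ENNReal.toReal_ofReal (hw0 i), smul_eq_mul]

end Mixture

lemma sub_mul_le_mul_of_abs_sub_le {p q ρ a m : ℝ} (hpq : |p - q| ≤ ρ) (hp : 0 ≤ p)
    (ha : 0 ≤ a) (ham : a ≤ m) : (q - ρ) * a ≤ p * m :=
  calc (q - ρ) * a ≤ p * a := by gcongr; linarith [(abs_le.mp hpq).1]
    _ ≤ p * m := by gcongr

lemma mul_le_add_mul_of_abs_sub_le {p q ρ m b : ℝ} (hpq : |p - q| ≤ ρ) (hp : 0 ≤ p)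
    (hb : 0 ≤ b) (hmb : m ≤ b) : p * m ≤ (q + ρ) * b :=
  calc p * m ≤ p * b := by gcongr
    _ ≤ (q + ρ) * b := by gcongr; linarith [(abs_le.mp hpq).2]

theorem multimodal_moment_nesting_general
    {Ω : Type*} [MeasurableSpace Ω] (L : ℕ)
    (P : Fin L → Measure Ω) (hP : ∀ l, IsProbabilityMeasure (P l))
    (f : Ω → ℝ) (hint : ∀ l, Integrable f (P l))
    (ul uu : Fin L → ℝ) (hul : ∀ l, 0 ≤ ul l) (huu : ∀ l, 0 ≤ uu l)
    (hmom : ∀ l, ul l ≤ ∫ ω, f ω ∂(P l) ∧ ∫ ω, f ω ∂(P l) ≤ uu l)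
    (ρ : ℝ)
    (pHat : Fin L → ℝ)
    (p : Fin L → ℝ) (hp0 : ∀ l, 0 ≤ p l) (hp1 : ∑ l, p l = 1)
    (hvd : ∑ l, |p l - pHat l| ≤ ρ) :
    IsProbabilityMeasure (∑ l, ENNReal.ofReal (p l) • P l) ∧
    Integrable f (∑ l, ENNReal.ofReal (p l) • P l) ∧
    ∑ l, (pHat l - ρ) * ul l ≤ ∫ ω, f ω ∂(∑ l, ENNReal.ofReal (p l) • P l) ∧
    ∫ ω, f ω ∂(∑ l, ENNReal.ofReal (p l) • P l) ≤ ∑ l, (pHat l + ρ) * uu l := by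
  have hdev := abs_sub_le_of_sum_abs_sub_le hvd
  refine ⟨isProbabilityMeasure_sum_ofReal_smul P p hp0 hp1, integrable_sum_ofReal_smul p hint,
    ?_, ?_⟩ <;> rw [integral_sum_ofReal_smul p hint hp0] <;>
    refine Finset.sum_le_sum fun l _ => ?_
  · exact sub_mul_le_mul_of_abs_sub_le (hdev l) (hp0 l) (hul l) (hmom l).1
  · exact mul_le_add_mul_of_abs_sub_le (hdev l) (hp0 l) (huu l) (hmom l).2

/-- Theorem 8 (nesting of the multimodal moment-based ambiguity set in its
single-modal counterpart). -/
theorem multimodal_moment_nesting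
    {Ω : Type*} [MeasurableSpace Ω] (L : ℕ) (hL : 0 < L)
    (P : Fin L → Measure Ω) (hP : ∀ l, IsProbabilityMeasure (P l))
    (f : Ω → ℝ) (hf : Measurable f) (hint : ∀ l, Integrable f (P l))
    (ul uu : Fin L → ℝ) (hul : ∀ l, 0 ≤ ul l) (huu : ∀ l, 0 ≤ uu l)
    (hmom : ∀ l, ul l ≤ ∫ ω, f ω ∂(P l) ∧ ∫ ω, f ω ∂(P l) ≤ uu l)
    (ρ : ℝ) (hρ : 0 ≤ ρ)
    (pHat : Fin L → ℝ) (hpHat0 : ∀ l, 0 ≤ pHat l) (hpHat1 : ∑ l, pHat l = 1)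
    (p : Fin L → ℝ) (hp0 : ∀ l, 0 ≤ p l) (hp1 : ∑ l, p l = 1)
    (hvd : ∑ l, |p l - pHat l| ≤ ρ) :
    IsProbabilityMeasure (∑ l, ENNReal.ofReal (p l) • P l) ∧
    Integrable f (∑ l, ENNReal.ofReal (p l) • P l) ∧
    ∑ l, (pHat l - ρ) * ul l ≤ ∫ ω, f ω ∂(∑ l, ENNReal.ofReal (p l) • P l) ∧
    ∫ ω, f ω ∂(∑ l, ENNReal.ofReal (p l) • P l) ≤ ∑ l, (pHat l + ρ) * uu l :=
  multimodal_moment_nesting_general L P hP f hint ul uu hul huu hmom ρ pHat p hp0 hp1 hvd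
end

section
/- Theorem 8 (value comparison between the multimodal and single-modal moment-based DRO models). Let Ω be a measurable space, L, M positive natural numbers, f : Fin M → Ω → ℝ bounded measurable moment basis functions, and Y a nonempty type of first-stage decisions with cost c : Y → ℝ. For each y : Y let p̂ y : Fin L → ℝ be a probability vector, let ul y, uu y : Fin L → Fin M → ℝ be nonnegative moment bounds, let ρ ≥ 0, and let h : Y → Ω → ℝ be bounded measurable. Define Θ_M y as the set of measures ∑ l, (ENNReal.ofReal (p l)) • P l where p is a probability vector with ∑ l, |p l - p̂ y l| ≤ ρ and each P l is a probability measure on Ω with ul y l m ≤ ∫ f m ∂(P l) ≤ uu y l m for all m; define Θ'_M y as the set of probability measures P on Ω with ∑ l, (p̂ y l - ρ) * ul y l m ≤ ∫ f m ∂P ≤ ∑ l, (p̂ y l + ρ) * uu y l m for all m. Then, in EReal, ⨅ (y : Y), ( ((c y : ℝ) : EReal) + ⨆ (P ∈ Θ_M y), ((∫ h y ∂P : ℝ) : EReal) ) ≤ ⨅ (y : Y), ( ((c y : ℝ) : EReal) + ⨆ (P ∈ Θ'_M y), ((∫ h y ∂P : ℝ) : EReal) ). -/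
open MeasureTheory
open scoped BigOperators ENNReal

lemma integrable_of_bdd' {Ω : Type*} [MeasurableSpace Ω] (μ : Measure Ω)
    [IsFiniteMeasure μ] {g : Ω → ℝ} (hg : Measurable g) {C : ℝ}
    (hC : ∀ ω, |g ω| ≤ C) : Integrable g μ := by
  refine ⟨hg.aestronglyMeasurable, ?_⟩
  exact HasFiniteIntegral.of_bounded (C := C) (Filter.Eventually.of_forall hC)

/-- Theorem 8 (value comparison between the multimodal and single-modal
moment-based DRO models). -/
theorem multimodal_vs_singlemodal_moment_value
    {Ω : Type*} [MeasurableSpace Ω] (L M : ℕ) (hL : 0 < L) (hM : 0 < M)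
    (f : Fin M → Ω → ℝ) (hfMeas : ∀ m, Measurable (f m))
    (hfBdd : ∀ m, ∃ Cb : ℝ, ∀ ω, |f m ω| ≤ Cb)
    (Y : Type*) [Nonempty Y] (c : Y → ℝ)
    (pHat : Y → Fin L → ℝ)
    (hpHat0 : ∀ y l, 0 ≤ pHat y l) (hpHat1 : ∀ y, ∑ l, pHat y l = 1)
    (ul uu : Y → Fin L → Fin M → ℝ)
    (hul : ∀ y l m, 0 ≤ ul y l m) (huu : ∀ y l m, 0 ≤ uu y l m)
    (ρ : ℝ) (hρ : 0 ≤ ρ)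
    (h : Y → Ω → ℝ) (hhMeas : ∀ y, Measurable (h y))
    (hhBdd : ∀ y, ∃ Cb : ℝ, ∀ ω, |h y ω| ≤ Cb) :
    let ΘM : Y → Set (Measure Ω) := fun y =>
      { μ | ∃ p : Fin L → ℝ, (∀ l, 0 ≤ p l) ∧ (∑ l, p l = 1) ∧
          (∑ l, |p l - pHat y l| ≤ ρ) ∧
          ∃ P : Fin L → Measure Ω, (∀ l, IsProbabilityMeasure (P l)) ∧
            (∀ l m, ul y l m ≤ ∫ ω, f m ω ∂(P l) ∧ ∫ ω, f m ω ∂(P l) ≤ uu y l m) ∧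
            μ = ∑ l, ENNReal.ofReal (p l) • P l }
    let ΘM' : Y → Set (Measure Ω) := fun y =>
      { P | IsProbabilityMeasure P ∧
          ∀ m, ∑ l, (pHat y l - ρ) * ul y l m ≤ ∫ ω, f m ω ∂P ∧
            ∫ ω, f m ω ∂P ≤ ∑ l, (pHat y l + ρ) * uu y l m }
    (⨅ (y : Y), (((c y : ℝ) : EReal)
        + ⨆ (P : Measure Ω) (_ : P ∈ ΘM y), ((∫ ω, h y ω ∂P : ℝ) : EReal)))
      ≤ ⨅ (y : Y), (((c y : ℝ) : EReal)
        + ⨆ (P : Measure Ω) (_ : P ∈ ΘM' y), ((∫ ω, h y ω ∂P : ℝ) : EReal)) := by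
  intro ΘM ΘM'
  have hsubset : ∀ y, ΘM y ⊆ ΘM' y := by
    intro y μ hμ
    obtain ⟨p, hp0, hp1, hpρ, P, hPprob, hPm, rfl⟩ := hμ
    have hlb : ∀ l, |p l - pHat y l| ≤ ρ := fun l =>
      le_trans (Finset.single_le_sum (f := fun i => |p i - pHat y i|)
        (fun i _ => abs_nonneg _) (Finset.mem_univ l)) hpρ
    have hprob : IsProbabilityMeasure (∑ l, ENNReal.ofReal (p l) • P l) := by
      constructor
      have : ∀ l : Fin L, (P l) Set.univ = 1 := fun l => (hPprob l).measure_univ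
      simp only [Measure.finset_sum_apply, Measure.smul_apply, this, smul_eq_mul, mul_one]
      rw [← ENNReal.ofReal_sum_of_nonneg (fun l _ => hp0 l), hp1]
      exact ENNReal.ofReal_one
    refine ⟨hprob, fun m => ?_⟩
    have hint : ∀ l : Fin L, Integrable (f m) (ENNReal.ofReal (p l) • P l) := by
      intro l
      obtain ⟨C, hC⟩ := hfBdd m
      haveI := hPprob l
      haveI : IsFiniteMeasure (ENNReal.ofReal (p l) • P l) := by
        constructor
        simp only [Measure.smul_apply, smul_eq_mul]
        exact ENNReal.mul_lt_top ENNReal.ofReal_lt_top (measure_lt_top _ _)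
      exact integrable_of_bdd' _ (hfMeas m) hC
    have hI : ∫ ω, f m ω ∂(∑ l, ENNReal.ofReal (p l) • P l)
        = ∑ l, p l * ∫ ω, f m ω ∂(P l) := by
      rw [integral_finset_sum_measure (fun l _ => hint l)]
      refine Finset.sum_congr rfl fun l _ => ?_
      rw [integral_smul_measure, ENNReal.toReal_ofReal (hp0 l), smul_eq_mul]
    rw [hI]
    constructor
    · refine Finset.sum_le_sum fun l _ => ?_
      have h1 := (abs_le.mp (hlb l)).1
      have h2 := (hPm l m).1
      have h3 := hul y l m
      nlinarith [hp0 l, mul_nonneg (hp0 l) (sub_nonneg.mpr h2),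
        mul_nonneg (sub_nonneg.mpr (by linarith : pHat y l - ρ ≤ p l)) h3]
    · refine Finset.sum_le_sum fun l _ => ?_
      have h1 := (abs_le.mp (hlb l)).2
      have h2 := (hPm l m).2
      have h3 := huu y l m
      have h4 : ul y l m ≤ ∫ ω, f m ω ∂(P l) := (hPm l m).1
      nlinarith [hp0 l, mul_nonneg (hp0 l) (sub_nonneg.mpr h2),
        mul_nonneg (sub_nonneg.mpr (by linarith : p l ≤ pHat y l + ρ)) h3]
  refine iInf_mono fun y => add_le_add_right ?_ _
  exact iSup_le_iSup_of_subset (hsubset y)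
end

section
/- Theorem 9 (nesting of the multimodal Wasserstein ambiguity set in its single-modal counterpart, transport-cost form). Let Ω be a complete separable metric space equipped with its Borel σ-algebra, and for probability measures μ, ν on Ω define the transport cost Wc(μ,ν) := ⨅ { ∫⁻ a, edist a.1 a.2 ∂Π | Π : Measure (Ω × Ω), IsProbabilityMeasure Π, Π.map Prod.fst = μ, Π.map Prod.snd = ν } ∈ ℝ≥0∞. Let Ξ ⊆ Ω be a measurable set, L a positive natural number, and P, P̂ : Fin L → Measure Ω families of probability measures with P l Ξᶜ = 0 and P̂ l Ξᶜ = 0 for all l. Let ε : Fin L → ℝ≥0∞ satisfy Wc (P l) (P̂ l) ≤ ε l for all l. Let ρ ≥ 0, let p̂ : Fin L → ℝ be a probability vector, and let p : Fin L → ℝ be a probability vector with ∑ l, |p l - p̂ l| ≤ ρ. Then Wc (∑ l, (ENNReal.ofReal (p l)) • P l) (∑ l, (ENNReal.ofReal (p̂ l)) • P̂ l) ≤ ∑ l, (ENNReal.ofReal (p̂ l)) * ε l + (ENNReal.ofReal ρ) * EMetric.diam Ξ. -/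
open MeasureTheory
open scoped BigOperators ENNReal

private lemma map_finset_sum_meas {α β : Type*} [MeasurableSpace α] [MeasurableSpace β]
    {f : α → β} (hf : Measurable f) {ι : Type*} (s : Finset ι) (μ : ι → Measure α) :
    Measure.map f (∑ i ∈ s, μ i) = ∑ i ∈ s, Measure.map f (μ i) := by
  classical
  induction s using Finset.induction with
  | empty => simp
  | @insert a s h ih =>
      rw [Finset.sum_insert h, Finset.sum_insert h, Measure.map_add _ _ hf, ih]

/-- Theorem 9 (nesting of the multimodal Wasserstein ambiguity set in its
single-modal counterpart, transport-cost form). -/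
theorem multimodal_wasserstein_nesting
    {Ω : Type*} [MetricSpace Ω] [CompleteSpace Ω]
    [TopologicalSpace.SeparableSpace Ω] [MeasurableSpace Ω] [BorelSpace Ω]
    (Ξ : Set Ω) (hΞ : MeasurableSet Ξ)
    (L : ℕ) (hL : 0 < L)
    (P PHat : Fin L → Measure Ω)
    (hP : ∀ l, IsProbabilityMeasure (P l))
    (hPHat : ∀ l, IsProbabilityMeasure (PHat l))
    (hPsupp : ∀ l, P l Ξᶜ = 0) (hPHatsupp : ∀ l, PHat l Ξᶜ = 0)
    (ε : Fin L → ℝ≥0∞) (ρ : ℝ) (hρ : 0 ≤ ρ)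
    (pHat : Fin L → ℝ) (hpHat0 : ∀ l, 0 ≤ pHat l) (hpHat1 : ∑ l, pHat l = 1)
    (p : Fin L → ℝ) (hp0 : ∀ l, 0 ≤ p l) (hp1 : ∑ l, p l = 1)
    (hvd : ∑ l, |p l - pHat l| ≤ ρ) :
    let Wc : Measure Ω → Measure Ω → ℝ≥0∞ := fun μ ν =>
      sInf { c | ∃ π : Measure (Ω × Ω), IsProbabilityMeasure π ∧
        π.map Prod.fst = μ ∧ π.map Prod.snd = ν ∧
        c = ∫⁻ a, edist a.1 a.2 ∂π }
    (∀ l, Wc (P l) (PHat l) ≤ ε l) →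
    Wc (∑ l, ENNReal.ofReal (p l) • P l) (∑ l, ENNReal.ofReal (pHat l) • PHat l)
      ≤ ∑ l, ENNReal.ofReal (pHat l) * ε l + ENNReal.ofReal ρ * EMetric.diam Ξ := by
  intro Wc hWc
  classical
  -- real-valued decomposition
  set q : Fin L → ℝ := fun l => min (p l) (pHat l) with hqdef
  have hq0 : ∀ l, 0 ≤ q l := fun l => le_min (hp0 l) (hpHat0 l)
  have ha0 : ∀ l, 0 ≤ p l - q l := fun l => sub_nonneg.mpr (min_le_left _ _)
  have hb0 : ∀ l, 0 ≤ pHat l - q l := fun l => sub_nonneg.mpr (min_le_right _ _)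
  set m : Fin L → ℝ≥0∞ := fun l => ENNReal.ofReal (q l) with hmdef
  set a : Fin L → ℝ≥0∞ := fun l => ENNReal.ofReal (p l - q l) with hadef
  set b : Fin L → ℝ≥0∞ := fun l => ENNReal.ofReal (pHat l - q l) with hbdef
  set sR : ℝ := ∑ l, (p l - q l) with hsRdef
  set σ : ℝ≥0∞ := ENNReal.ofReal sR with hσdef
  have hsR0 : 0 ≤ sR := Finset.sum_nonneg fun l _ => ha0 l
  have hsb : ∑ l, (pHat l - q l) = sR := by
    rw [hsRdef, Finset.sum_sub_distrib, Finset.sum_sub_distrib, hp1, hpHat1]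
  have hσa : ∑ l, a l = σ := by
    rw [hσdef, hsRdef, ENNReal.ofReal_sum_of_nonneg fun l _ => ha0 l]
  have hσb : ∑ l, b l = σ := by
    rw [hσdef, ← hsb, ENNReal.ofReal_sum_of_nonneg fun l _ => hb0 l]
  have hma : ∀ l, m l + a l = ENNReal.ofReal (p l) := fun l => by
    rw [hmdef, hadef, ← ENNReal.ofReal_add (hq0 l) (ha0 l)]; ring_nf
  have hmb : ∀ l, m l + b l = ENNReal.ofReal (pHat l) := fun l => by
    rw [hmdef, hbdef, ← ENNReal.ofReal_add (hq0 l) (hb0 l)]; ring_nf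
  have hσρ : σ ≤ ENNReal.ofReal ρ := by
    apply ENNReal.ofReal_le_ofReal
    refine le_trans (Finset.sum_le_sum fun l _ => ?_) hvd
    rcases le_total (p l) (pHat l) with h | h
    · simp [hqdef, min_eq_left h]
    · rw [hqdef]; simp [min_eq_right h, abs_of_nonneg (sub_nonneg.mpr h)]
  have hσtop : σ ≠ ⊤ := ENNReal.ofReal_ne_top
  have hmle : ∀ l, m l ≤ ENNReal.ofReal (pHat l) := fun l =>
    ENNReal.ofReal_le_ofReal (min_le_right _ _)
  have hmsum : ∑ l, m l ≤ 1 := by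
    calc ∑ l, m l ≤ ∑ l, ENNReal.ofReal (pHat l) := Finset.sum_le_sum fun l _ => hmle l
    _ = ENNReal.ofReal (∑ l, pHat l) :=
        (ENNReal.ofReal_sum_of_nonneg fun l _ => hpHat0 l).symm
    _ = 1 := by rw [hpHat1, ENNReal.ofReal_one]
  -- the surplus measures
  set μa : Measure Ω := ∑ l, a l • P l with hμadef
  set νb : Measure Ω := ∑ l, b l • PHat l with hνbdef
  have hμa_univ : μa Set.univ = σ := by
    rw [hμadef, Measure.finset_sum_apply]
    simp only [Measure.smul_apply, smul_eq_mul, measure_univ, mul_one]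
    exact hσa
  have hνb_univ : νb Set.univ = σ := by
    rw [hνbdef, Measure.finset_sum_apply]
    simp only [Measure.smul_apply, smul_eq_mul, measure_univ, mul_one]
    exact hσb
  haveI : IsFiniteMeasure μa := ⟨by rw [hμa_univ]; exact hσtop.lt_top⟩
  haveI : IsFiniteMeasure νb := ⟨by rw [hνb_univ]; exact hσtop.lt_top⟩
  have hμaΞ : μa Ξᶜ = 0 := by
    rw [hμadef, Measure.finset_sum_apply]
    simp [Measure.smul_apply, hPsupp]
  have hνbΞ : νb Ξᶜ = 0 := by
    rw [hνbdef, Measure.finset_sum_apply]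
    simp [Measure.smul_apply, hPHatsupp]
  -- cost bound for the product coupling of surplus measures
  have hedist_meas : Measurable (fun x : Ω × Ω => edist x.1 x.2) :=
    measurable_fst.edist measurable_snd
  have hprodnull : (μa.prod νb) (Ξ ×ˢ Ξ)ᶜ = 0 := by
    rw [Set.compl_prod_eq_union]
    refine le_antisymm (le_trans (measure_union_le _ _) ?_) zero_le
    rw [Measure.prod_prod, Measure.prod_prod, hμaΞ, hνbΞ]
    simp
  have hprodcost : ∫⁻ x, edist x.1 x.2 ∂(μa.prod νb) ≤ EMetric.diam Ξ * (σ * σ) := by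
    have hK : MeasurableSet (Ξ ×ˢ Ξ) := hΞ.prod hΞ
    rw [← lintegral_add_compl (fun x : Ω × Ω => edist x.1 x.2) hK]
    have h2 : ∫⁻ x in (Ξ ×ˢ Ξ)ᶜ, edist x.1 x.2 ∂(μa.prod νb) = 0 := by
      rw [setLIntegral_measure_zero _ _ hprodnull]
    rw [h2, add_zero]
    calc ∫⁻ x in Ξ ×ˢ Ξ, edist x.1 x.2 ∂(μa.prod νb)
        ≤ ∫⁻ _ in Ξ ×ˢ Ξ, EMetric.diam Ξ ∂(μa.prod νb) := by
          refine setLIntegral_mono measurable_const fun x hx => ?_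
          exact EMetric.edist_le_diam_of_mem hx.1 hx.2
      _ = EMetric.diam Ξ * (μa.prod νb) (Ξ ×ˢ Ξ) := setLIntegral_const _ _
      _ ≤ EMetric.diam Ξ * (σ * σ) := by
          rw [Measure.prod_prod]
          refine mul_le_mul_right (mul_le_mul' ?_ ?_) _
          · rw [← hμa_univ]; exact measure_mono (Set.subset_univ _)
          · rw [← hνb_univ]; exact measure_mono (Set.subset_univ _)
  -- main estimate
  apply ENNReal.le_of_forall_pos_le_add
  intro δ hδ hfin
  have hterm : ∀ l, ENNReal.ofReal (pHat l) * ε l < ⊤ := by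
    have : ∑ l, ENNReal.ofReal (pHat l) * ε l < ⊤ :=
      lt_of_le_of_lt le_add_self (by rwa [add_comm] at hfin)
    exact fun l => ENNReal.sum_lt_top.mp this l (Finset.mem_univ l)
  -- choose near-optimal couplings
  have hchoice : ∀ l, ∃ π : Measure (Ω × Ω), IsProbabilityMeasure π ∧
      π.map Prod.fst = P l ∧ π.map Prod.snd = PHat l ∧
      m l * ∫⁻ x, edist x.1 x.2 ∂π ≤ m l * ε l + m l * δ := by
    intro l
    haveI := hP l; haveI := hPHat l
    by_cases hm : m l = 0
    · refine ⟨(P l).prod (PHat l), inferInstance, ?_, ?_, by simp [hm]⟩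
      · rw [Measure.map_fst_prod, measure_univ, one_smul]
      · rw [Measure.map_snd_prod, measure_univ, one_smul]
    · have hph : ENNReal.ofReal (pHat l) ≠ 0 := by
        intro h0
        exact hm (le_antisymm (h0 ▸ hmle l) zero_le)
      have hεl : ε l ≠ ⊤ := by
        intro h
        exact (hterm l).ne (by rw [h, ENNReal.mul_top hph])
      have hlt : Wc (P l) (PHat l) < ε l + δ :=
        lt_of_le_of_lt (hWc l) (ENNReal.lt_add_right hεl (by exact_mod_cast hδ.ne'))
      obtain ⟨c, hcmem, hclt⟩ := sInf_lt_iff.mp hlt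
      obtain ⟨π, hπ1, hπ2, hπ3, rfl⟩ := hcmem
      refine ⟨π, hπ1, hπ2, hπ3, ?_⟩
      calc m l * ∫⁻ x, edist x.1 x.2 ∂π ≤ m l * (ε l + δ) := mul_le_mul_right hclt.le _
        _ = m l * ε l + m l * δ := mul_add _ _ _
  choose π hπprob hπfst hπsnd hπcost using hchoice
  -- the composite coupling
  set Pc : Measure (Ω × Ω) := (∑ l, m l • π l) + σ⁻¹ • (μa.prod νb) with hPcdef
  have hkey : ∀ (μ : Measure Ω), μ Set.univ = σ → (σ⁻¹ * σ) • μ = μ := by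
    intro μ hμ
    by_cases hσ : σ = 0
    · have : μ = 0 := by
        ext s hs
        simp [le_antisymm ((measure_mono (Set.subset_univ s)).trans (hμ.le.trans hσ.le)) zero_le]
      simp [this]
    · rw [ENNReal.inv_mul_cancel hσ hσtop, one_smul]
  have hmargfst : Pc.map Prod.fst = ∑ l, ENNReal.ofReal (p l) • P l := by
    rw [hPcdef, Measure.map_add _ _ measurable_fst, map_finset_sum_meas measurable_fst,
      Measure.map_smul, Measure.map_fst_prod, hνb_univ, smul_smul, hkey μa hμa_univ]
    have : ∀ l ∈ Finset.univ, Measure.map Prod.fst (m l • π l) = m l • P l := fun l _ => by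
      rw [Measure.map_smul, hπfst]
    rw [Finset.sum_congr rfl this, hμadef, ← Finset.sum_add_distrib]
    congr 1
    ext l
    rw [← add_smul, hma]
  have hmargsnd : Pc.map Prod.snd = ∑ l, ENNReal.ofReal (pHat l) • PHat l := by
    rw [hPcdef, Measure.map_add _ _ measurable_snd, map_finset_sum_meas measurable_snd,
      Measure.map_smul, Measure.map_snd_prod, hμa_univ, smul_smul, hkey νb hνb_univ]
    have : ∀ l ∈ Finset.univ, Measure.map Prod.snd (m l • π l) = m l • PHat l := fun l _ => by
      rw [Measure.map_smul, hπsnd]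
    rw [Finset.sum_congr rfl this, hνbdef, ← Finset.sum_add_distrib]
    congr 1
    ext l
    rw [← add_smul, hmb]
  have hPcprob : IsProbabilityMeasure Pc := by
    constructor
    have h1 : Pc.map Prod.fst Set.univ = Pc Set.univ := by
      rw [Measure.map_apply measurable_fst MeasurableSet.univ]; rfl
    rw [← h1, hmargfst, Measure.finset_sum_apply]
    simp only [Measure.smul_apply, smul_eq_mul]
    have : ∀ l ∈ Finset.univ, ENNReal.ofReal (p l) * (P l) Set.univ
        = ENNReal.ofReal (p l) := fun l _ => by
      haveI := hP l; rw [measure_univ, mul_one]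
    rw [Finset.sum_congr rfl this, ← ENNReal.ofReal_sum_of_nonneg fun l _ => hp0 l, hp1,
      ENNReal.ofReal_one]
  -- conclude
  have hWcle : Wc (∑ l, ENNReal.ofReal (p l) • P l) (∑ l, ENNReal.ofReal (pHat l) • PHat l)
      ≤ ∫⁻ x, edist x.1 x.2 ∂Pc :=
    sInf_le ⟨Pc, hPcprob, hmargfst, hmargsnd, rfl⟩
  refine hWcle.trans ?_
  have hcostPc : ∫⁻ x, edist x.1 x.2 ∂Pc
      = ∑ l, m l * ∫⁻ x, edist x.1 x.2 ∂(π l)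
        + σ⁻¹ * ∫⁻ x, edist x.1 x.2 ∂(μa.prod νb) := by
    rw [hPcdef, lintegral_add_measure, lintegral_finset_sum_measure, lintegral_smul_measure]
    congr 1
    exact Finset.sum_congr rfl fun l _ => lintegral_smul_measure _ _
  rw [hcostPc]
  have hsurpl : σ⁻¹ * ∫⁻ x, edist x.1 x.2 ∂(μa.prod νb)
      ≤ ENNReal.ofReal ρ * EMetric.diam Ξ := by
    refine le_trans (mul_le_mul_right hprodcost _) ?_
    by_cases hσ : σ = 0
    · simp [hσ]
    · calc σ⁻¹ * (EMetric.diam Ξ * (σ * σ)) = σ⁻¹ * σ * (σ * EMetric.diam Ξ) := by ring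
        _ = σ * EMetric.diam Ξ := by rw [ENNReal.inv_mul_cancel hσ hσtop, one_mul]
        _ ≤ ENNReal.ofReal ρ * EMetric.diam Ξ := mul_le_mul_left hσρ _
  have hmain : ∑ l, m l * ∫⁻ x, edist x.1 x.2 ∂(π l)
      ≤ ∑ l, ENNReal.ofReal (pHat l) * ε l + δ := by
    calc ∑ l, m l * ∫⁻ x, edist x.1 x.2 ∂(π l)
        ≤ ∑ l, (m l * ε l + m l * δ) := Finset.sum_le_sum fun l _ => hπcost l
      _ = ∑ l, m l * ε l + (∑ l, m l) * δ := by
          rw [Finset.sum_add_distrib, Finset.sum_mul]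
      _ ≤ ∑ l, ENNReal.ofReal (pHat l) * ε l + δ := by
          refine add_le_add (Finset.sum_le_sum fun l _ => mul_le_mul_left (hmle l) _) ?_
          calc (∑ l, m l) * (δ : ℝ≥0∞) ≤ 1 * δ := mul_le_mul_left hmsum _
            _ = δ := one_mul _
  calc ∑ l, m l * ∫⁻ x, edist x.1 x.2 ∂(π l) + σ⁻¹ * ∫⁻ x, edist x.1 x.2 ∂(μa.prod νb)
      ≤ (∑ l, ENNReal.ofReal (pHat l) * ε l + δ) + ENNReal.ofReal ρ * EMetric.diam Ξ :=
        add_le_add hmain hsurpl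
    _ = ∑ l, ENNReal.ofReal (pHat l) * ε l + ENNReal.ofReal ρ * EMetric.diam Ξ + δ := by ring
end

section
/- Perturbation of mixture weights bounds transport cost by the diameter (step in the proof of Theorem 9). Let Ω be a complete separable metric space with its Borel σ-algebra, and for probability measures μ, ν on Ω define the transport cost Wc(μ,ν) := ⨅ { ∫⁻ a, edist a.1 a.2 ∂Π | Π : Measure (Ω × Ω), IsProbabilityMeasure Π, Π.map Prod.fst = μ, Π.map Prod.snd = ν } ∈ ℝ≥0∞. Let Ξ ⊆ Ω be measurable, L a positive natural number, and P : Fin L → Measure Ω probability measures with P l Ξᶜ = 0 for all l. Let ρ ≥ 0 and let p, p̂ : Fin L → ℝ be probability vectors with ∑ l, |p l - p̂ l| ≤ ρ. Then Wc (∑ l, (ENNReal.ofReal (p l)) • P l) (∑ l, (ENNReal.ofReal (p̂ l)) • P l) ≤ (ENNReal.ofReal ρ) * EMetric.diam Ξ. -/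
open MeasureTheory
open scoped BigOperators ENNReal

/-- Perturbation of mixture weights bounds transport cost by the diameter
(step in the proof of Theorem 9). -/
theorem mixture_weight_perturbation_transport_bound
    {Ω : Type*} [MetricSpace Ω] [CompleteSpace Ω]
    [TopologicalSpace.SeparableSpace Ω] [MeasurableSpace Ω] [BorelSpace Ω]
    (Ξ : Set Ω) (hΞ : MeasurableSet Ξ)
    (L : ℕ) (hL : 0 < L)
    (P : Fin L → Measure Ω) (hP : ∀ l, IsProbabilityMeasure (P l))
    (hPsupp : ∀ l, P l Ξᶜ = 0)
    (ρ : ℝ) (hρ : 0 ≤ ρ)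
    (p pHat : Fin L → ℝ)
    (hp0 : ∀ l, 0 ≤ p l) (hp1 : ∑ l, p l = 1)
    (hpHat0 : ∀ l, 0 ≤ pHat l) (hpHat1 : ∑ l, pHat l = 1)
    (hvd : ∑ l, |p l - pHat l| ≤ ρ) :
    let Wc : Measure Ω → Measure Ω → ℝ≥0∞ := fun μ ν =>
      sInf { c | ∃ π : Measure (Ω × Ω), IsProbabilityMeasure π ∧
        π.map Prod.fst = μ ∧ π.map Prod.snd = ν ∧
        c = ∫⁻ a, edist a.1 a.2 ∂π }
    Wc (∑ l, ENNReal.ofReal (p l) • P l) (∑ l, ENNReal.ofReal (pHat l) • P l)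
      ≤ ENNReal.ofReal ρ * EMetric.diam Ξ := by
  classical
  intro Wc
  -- notation
  set m : Fin L → ℝ := fun l => min (p l) (pHat l) with hm
  set a : Fin L → ℝ := fun l => p l - m l with ha
  set b : Fin L → ℝ := fun l => pHat l - m l with hb
  have ha0 : ∀ l, 0 ≤ a l := fun l => sub_nonneg.2 (min_le_left _ _)
  have hb0 : ∀ l, 0 ≤ b l := fun l => sub_nonneg.2 (min_le_right _ _)
  have hm0 : ∀ l, 0 ≤ m l := fun l => le_min (hp0 l) (hpHat0 l)
  have hma : ∀ l, m l + a l = p l := fun l => by simp [ha]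
  have hmb : ∀ l, m l + b l = pHat l := fun l => by simp [hb]
  set t : ℝ := ∑ l, a l with ht
  have hsum_mt : ∑ l, m l + t = 1 := by
    rw [ht, ← Finset.sum_add_distrib]
    simp only [hma]; exact hp1
  have hsum_mb : ∑ l, m l + ∑ l, b l = 1 := by
    rw [← Finset.sum_add_distrib]
    simp only [hmb]; exact hpHat1
  have hbt : ∑ l, b l = t := by linarith
  have ht0 : 0 ≤ t := Finset.sum_nonneg fun l _ => ha0 l
  have htρ : t ≤ ρ := by
    refine le_trans (Finset.sum_le_sum fun l _ => ?_) hvd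
    rcases le_total (p l) (pHat l) with h | h
    · simpa [ha, hm, min_eq_left h] using abs_nonneg (p l - pHat l)
    · simp only [ha, hm, min_eq_right h]
      exact le_abs_self _
  -- measures
  set ν0 : Measure Ω := ∑ l, ENNReal.ofReal (m l) • P l with hν0
  set R1 : Measure Ω := ∑ l, ENNReal.ofReal (a l) • P l with hR1
  set R2 : Measure Ω := ∑ l, ENNReal.ofReal (b l) • P l with hR2
  have hμ_split : (∑ l, ENNReal.ofReal (p l) • P l) = ν0 + R1 := by
    rw [hν0, hR1, ← Finset.sum_add_distrib]
    refine Finset.sum_congr rfl fun l _ => ?_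
    rw [← add_smul, ← ENNReal.ofReal_add (hm0 l) (ha0 l), hma l]
  have hν_split : (∑ l, ENNReal.ofReal (pHat l) • P l) = ν0 + R2 := by
    rw [hν0, hR2, ← Finset.sum_add_distrib]
    refine Finset.sum_congr rfl fun l _ => ?_
    rw [← add_smul, ← ENNReal.ofReal_add (hm0 l) (hb0 l), hmb l]
  have hν0univ : ν0 Set.univ = ENNReal.ofReal (∑ l, m l) := by
    rw [hν0]
    simp only [Measure.finset_sum_apply, Measure.smul_apply, smul_eq_mul,
      measure_univ, mul_one]
    exact (ENNReal.ofReal_sum_of_nonneg fun l _ => hm0 l).symm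
  have hR1univ : R1 Set.univ = ENNReal.ofReal t := by
    rw [hR1, ht]
    simp only [Measure.finset_sum_apply, Measure.smul_apply, smul_eq_mul,
      measure_univ, mul_one]
    exact (ENNReal.ofReal_sum_of_nonneg fun l _ => ha0 l).symm
  have hR2univ : R2 Set.univ = ENNReal.ofReal t := by
    rw [hR2, ← hbt]
    simp only [Measure.finset_sum_apply, Measure.smul_apply, smul_eq_mul,
      measure_univ, mul_one]
    exact (ENNReal.ofReal_sum_of_nonneg fun l _ => hb0 l).symm
  have hR1n : R1 Ξᶜ = 0 := by
    rw [hR1]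
    simp only [Measure.finset_sum_apply, Measure.smul_apply, smul_eq_mul]
    exact Finset.sum_eq_zero fun l _ => by rw [hPsupp l, mul_zero]
  have hR2n : R2 Ξᶜ = 0 := by
    rw [hR2]
    simp only [Measure.finset_sum_apply, Measure.smul_apply, smul_eq_mul]
    exact Finset.sum_eq_zero fun l _ => by rw [hPsupp l, mul_zero]
  haveI : IsFiniteMeasure R1 := ⟨by rw [hR1univ]; exact ENNReal.ofReal_lt_top⟩
  haveI : IsFiniteMeasure R2 := ⟨by rw [hR2univ]; exact ENNReal.ofReal_lt_top⟩
  -- diagonal map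
  set Δ : Ω → Ω × Ω := fun x => (x, x) with hΔdef
  have hΔ : Measurable Δ := measurable_id.prodMk measurable_id
  have hedist : Measurable fun q : Ω × Ω => edist q.1 q.2 :=
    continuous_edist.measurable
  by_cases htz : t = 0
  · -- p = pHat case: diagonal coupling
    have haz : ∀ l, a l = 0 := by
      intro l
      have := (Finset.sum_eq_zero_iff_of_nonneg (fun l (_ : l ∈ Finset.univ) => ha0 l)).1
        (by rw [← ht]; exact htz) l (Finset.mem_univ l)
      exact this
    have hbz : ∀ l, b l = 0 := by
      intro l
      have hb' : ∑ l, b l = 0 := by rw [hbt]; exact htz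
      exact (Finset.sum_eq_zero_iff_of_nonneg (fun l (_ : l ∈ Finset.univ) => hb0 l)).1
        hb' l (Finset.mem_univ l)
    have hppHat : p = pHat := by
      funext l
      have h1 : p l = m l := by have := haz l; simp [ha] at this; linarith
      have h2 : pHat l = m l := by have := hbz l; simp [hb] at this; linarith
      rw [h1, h2]
    set μ : Measure Ω := ∑ l, ENNReal.ofReal (p l) • P l with hμdef
    have hμuniv : μ Set.univ = 1 := by
      rw [hμdef]
      simp only [Measure.finset_sum_apply, Measure.smul_apply, smul_eq_mul,
        measure_univ, mul_one]
      rw [← ENNReal.ofReal_sum_of_nonneg fun l _ => hp0 l, hp1, ENNReal.ofReal_one]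
    haveI hμprob : IsProbabilityMeasure μ := ⟨hμuniv⟩
    set π : Measure (Ω × Ω) := μ.map Δ with hπdef
    have hcost : (∫⁻ q, edist q.1 q.2 ∂π) = 0 := by
      rw [hπdef, lintegral_map hedist hΔ]
      simp [hΔdef]
    have hmem : (∫⁻ q, edist q.1 q.2 ∂π) ∈
        { c | ∃ π : Measure (Ω × Ω), IsProbabilityMeasure π ∧
          π.map Prod.fst = (∑ l, ENNReal.ofReal (p l) • P l) ∧
          π.map Prod.snd = (∑ l, ENNReal.ofReal (pHat l) • P l) ∧
          c = ∫⁻ a, edist a.1 a.2 ∂π } := by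
      refine ⟨π, ?_, ?_, ?_, rfl⟩
      · exact Measure.isProbabilityMeasure_map hΔ.aemeasurable
      · rw [hπdef, Measure.map_map measurable_fst hΔ]
        have : (Prod.fst ∘ Δ) = id := rfl
        rw [this, Measure.map_id]
      · rw [hπdef, Measure.map_map measurable_snd hΔ]
        have : (Prod.snd ∘ Δ) = id := rfl
        rw [this, Measure.map_id, ← hppHat]
    refine le_trans (sInf_le hmem) ?_
    rw [hcost]
    exact zero_le
  · -- main case: t > 0
    set T : ℝ≥0∞ := ENNReal.ofReal t with hT
    have hT0 : T ≠ 0 := by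
      rw [hT]
      simpa [ENNReal.ofReal_eq_zero] using lt_of_le_of_ne ht0 (Ne.symm htz)
    have hTtop : T ≠ ∞ := ENNReal.ofReal_ne_top
    set π : Measure (Ω × Ω) := ν0.map Δ + T⁻¹ • (R1.prod R2) with hπdef
    have hproduniv : (R1.prod R2) Set.univ = T * T := by
      rw [← Set.univ_prod_univ, Measure.prod_prod, hR1univ, hR2univ, hT]
    -- marginals
    have hfst : π.map Prod.fst = ν0 + R1 := by
      rw [hπdef, Measure.map_add _ _ measurable_fst, Measure.map_map measurable_fst hΔ,
        Measure.map_smul, Measure.map_fst_prod, hR2univ, smul_smul,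
        ENNReal.inv_mul_cancel hT0 hTtop, one_smul]
      have : (Prod.fst ∘ Δ) = id := rfl
      rw [this, Measure.map_id]
    have hsnd : π.map Prod.snd = ν0 + R2 := by
      rw [hπdef, Measure.map_add _ _ measurable_snd, Measure.map_map measurable_snd hΔ,
        Measure.map_smul, Measure.map_snd_prod, hR1univ, smul_smul,
        ENNReal.inv_mul_cancel hT0 hTtop, one_smul]
      have : (Prod.snd ∘ Δ) = id := rfl
      rw [this, Measure.map_id]
    have hπprob : IsProbabilityMeasure π := by
      constructor
      rw [hπdef]
      simp only [Measure.coe_add, Pi.add_apply, Measure.smul_apply, smul_eq_mul]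
      rw [Measure.map_apply hΔ MeasurableSet.univ]
      have h1 : Δ ⁻¹' Set.univ = Set.univ := rfl
      rw [h1, hν0univ, hproduniv, ← mul_assoc, ENNReal.inv_mul_cancel hT0 hTtop,
        one_mul, hT, ← ENNReal.ofReal_add (Finset.sum_nonneg fun l _ => hm0 l) ht0,
        hsum_mt, ENNReal.ofReal_one]
    -- cost bound
    have hnullprod : (R1.prod R2) ((Ξ ×ˢ Ξ)ᶜ) = 0 := by
      have hsub : (Ξ ×ˢ Ξ)ᶜ ⊆ (Ξᶜ ×ˢ (Set.univ : Set Ω)) ∪ ((Set.univ : Set Ω) ×ˢ Ξᶜ) := by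
        intro q hq
        simp only [Set.mem_compl_iff, Set.mem_prod, Set.mem_union, Set.mem_univ,
          and_true, true_and, not_and_or] at *
        tauto
      refine measure_mono_null hsub (measure_union_null ?_ ?_)
      · rw [Measure.prod_prod, hR1n, zero_mul]
      · rw [Measure.prod_prod, hR2n, mul_zero]
    have hae : ∀ᵐ q ∂(R1.prod R2), edist q.1 q.2 ≤ EMetric.diam Ξ := by
      rw [Filter.eventually_iff, mem_ae_iff]
      refine measure_mono_null ?_ hnullprod
      intro q hq
      simp only [Set.mem_compl_iff, Set.mem_setOf_eq, not_le] at hq ⊢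
      intro hmem
      exact absurd (EMetric.edist_le_diam_of_mem hmem.1 hmem.2) (not_le.2 hq)
    have hcost_prod : (∫⁻ q, edist q.1 q.2 ∂(R1.prod R2)) ≤ EMetric.diam Ξ * (T * T) := by
      calc (∫⁻ q, edist q.1 q.2 ∂(R1.prod R2))
          ≤ ∫⁻ _, EMetric.diam Ξ ∂(R1.prod R2) := lintegral_mono_ae hae
        _ = EMetric.diam Ξ * (T * T) := by rw [lintegral_const, hproduniv]
    have hcost : (∫⁻ q, edist q.1 q.2 ∂π) ≤ ENNReal.ofReal ρ * EMetric.diam Ξ := by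
      rw [hπdef, lintegral_add_measure, lintegral_smul_measure,
        lintegral_map hedist hΔ]
      simp only [hΔdef, edist_self, lintegral_zero, zero_add]
      calc T⁻¹ * ∫⁻ q, edist q.1 q.2 ∂(R1.prod R2)
          ≤ T⁻¹ * (EMetric.diam Ξ * (T * T)) := mul_le_mul_right hcost_prod _
        _ = EMetric.diam Ξ * ((T⁻¹ * T) * T) := by ring
        _ = EMetric.diam Ξ * T := by
            rw [ENNReal.inv_mul_cancel hT0 hTtop, one_mul]
        _ ≤ EMetric.diam Ξ * ENNReal.ofReal ρ := by
            exact mul_le_mul_right (ENNReal.ofReal_le_ofReal htρ) _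
        _ = ENNReal.ofReal ρ * EMetric.diam Ξ := mul_comm _ _
    have hmem : (∫⁻ q, edist q.1 q.2 ∂π) ∈
        { c | ∃ π : Measure (Ω × Ω), IsProbabilityMeasure π ∧
          π.map Prod.fst = (∑ l, ENNReal.ofReal (p l) • P l) ∧
          π.map Prod.snd = (∑ l, ENNReal.ofReal (pHat l) • P l) ∧
          c = ∫⁻ a, edist a.1 a.2 ∂π } := by
      exact ⟨π, hπprob, by rw [hfst, hμ_split], by rw [hsnd, hν_split], rfl⟩
    exact le_trans (sInf_le hmem) hcost
end

section
/- Conjugate of the linear-programming value function (claim in the proof of Theorem 6). Let N, J, S be positive natural numbers, W0 : Matrix (Fin S) (Fin J) ℝ, R : Fin S → ℝ, Q : Matrix (Fin J) (Fin N) ℝ, q : Fin J → ℝ, and z : Fin N → ℝ. Let X := { x : Fin J → ℝ | ∀ s, R s ≤ (W0.mulVec x) s } and assume X is nonempty and compact. Then, in the extended reals, ⨆ (ξ : Fin N → ℝ), (((∑ n, z n * ξ n) + sInf { ∑ j, ((Q.mulVec ξ) j + q j) * x j | x ∈ X } : ℝ) : EReal) = sInf { ((∑ j, q j * x j : ℝ)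 : EReal) | x ∈ X ∧ Qᵀ.mulVec x = -z }, where the right-hand infimum is ⊤ when no x ∈ X satisfies Qᵀ.mulVec x = -z (Qᵀ denotes the transpose of Q). -/
/-!
Weak duality is the identity `(Qξ + q) ⬝ᵥ x = ξ ⬝ᵥ (Qᵀx) + q ⬝ᵥ x`. For the converse, take `α`
below the right-hand side. Then `(-z, α)` lies outside the closed convex set
`{(Qᵀx, q ⬝ᵥ x + s) | x ∈ X, s ≥ 0}` (closed because `X` is compact), so some functional
`(v, r) ↦ a ⬝ᵥ v + β r` strictly separates them, and upward closedness forces `β ≤ 0`.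
If `β < 0`, then `ξ = a / β` is a multiplier whose Lagrangian exceeds `α` on all of `X`. If
`β = 0`, a large multiple of `-a` works, because `q ⬝ᵥ x` is bounded below on the compact `X`.
-/

open Matrix Set
open scoped Pointwise

theorem StrongDual.apply_prod_eq {M : Type*} [AddCommGroup M] [Module ℝ M] [TopologicalSpace M]
    (Λ : StrongDual ℝ (M × ℝ)) (v : M) (r : ℝ) :
    Λ (v, r) = Λ (v, 0) + r * Λ (0, 1) := by
  rw [← smul_eq_mul, ← map_smul, ← map_add]
  simp

section Separation

variable {F : Type*} [AddCommGroup F] [Module ℝ F] [TopologicalSpace F] [T1Space F]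
  [IsTopologicalAddGroup F] [ContinuousSMul ℝ F] [LocallyConvexSpace ℝ F]

theorem exists_separating_dual_of_isCompact {C : Set (F × ℝ)} (hC : IsCompact C)
    (hCc : Convex ℝ C) {w : F} {α : ℝ} (h : ∀ p ∈ C, p.1 = w → α < p.2) :
    ∃ (ψ : StrongDual ℝ F) (β δ : ℝ), β ≤ 0 ∧ 0 < δ ∧
      ∀ p ∈ C, ψ (p.1 - w) + (p.2 - α) * β < -δ := by
  rcases C.eq_empty_or_nonempty with rfl | ⟨p₀, hp₀⟩
  · exact ⟨0, 0, 1, le_rfl, one_pos, by simp⟩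
  -- Separating from the upward closure of `C` rather than `C` itself is what makes `β ≤ 0`.
  set D := C + ({0} ×ˢ Ici 0 : Set (F × ℝ))
  have hwD : (w, α) ∉ D := by
    rintro ⟨⟨v, r⟩, hp, ⟨_, s⟩, ⟨rfl, hs⟩, hsum⟩
    simp only [Prod.mk_add_mk, add_zero, Prod.mk.injEq] at hsum
    linarith [h _ hp hsum.1, mem_Ici.1 hs]
  obtain ⟨Λ, u, hΛD, hΛw⟩ := geometric_hahn_banach_closed_point
    (hCc.add ((convex_singleton 0).prod (convex_Ici 0)))
    ((isClosed_singleton.prod isClosed_Ici).add_left_of_isCompact hC) hwD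
  set ψ : StrongDual ℝ F := Λ.comp (ContinuousLinearMap.inl ℝ F ℝ)
  set β := Λ (0, 1)
  set δ := Λ (w, α) - u
  have hsep : ∀ p ∈ C, ∀ s : ℝ, 0 ≤ s → ψ (p.1 - w) + (p.2 + s - α) * β < -δ := by
    rintro ⟨v, r⟩ hp s hs
    have hlt := hΛD (v, r + s) ⟨(v, r), hp, (0, s), ⟨rfl, hs⟩, by simp⟩
    have hsub : Λ (v, r + s) - Λ (w, α) = ψ (v - w) + (r + s - α) * β := by
      rw [← map_sub, Prod.mk_sub_mk, StrongDual.apply_prod_eq]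
      rfl
    linarith
  refine ⟨ψ, β, δ, ?_, by linarith, fun p hp => by simpa using hsep p hp 0 le_rfl⟩
  by_contra! hβ
  set a := ψ (p₀.1 - w) + (p₀.2 - α) * β
  have hlarge := hsep p₀ hp₀ ((|a| + δ) / β) (div_nonneg (by linarith [abs_nonneg a]) hβ.le)
  rw [add_sub_right_comm, add_mul, div_mul_cancel₀ _ hβ.ne'] at hlarge
  linarith [neg_abs_le a]

theorem exists_dual_lt_add_of_isCompact {C : Set (F × ℝ)} (hC : IsCompact C)
    (hCc : Convex ℝ C) {w : F} {α : ℝ} (h : ∀ p ∈ C, p.1 = w → α < p.2) :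
    ∃ φ : StrongDual ℝ F, ∀ p ∈ C, α < φ (p.1 - w) + p.2 := by
  obtain ⟨ψ, β, δ, hβ, hδ, hψ⟩ := exists_separating_dual_of_isCompact hC hCc h
  rcases hβ.lt_or_eq with hβ | rfl
  · refine ⟨β⁻¹ • ψ, fun p hp => ?_⟩
    have hpos := mul_pos_of_neg_of_neg (inv_lt_zero.2 hβ) ((hψ p hp).trans (neg_neg_of_pos hδ))
    rw [mul_add, mul_comm _ β, ← mul_assoc, inv_mul_cancel₀ hβ.ne, one_mul] at hpos
    rw [_root_.smul_apply, smul_eq_mul]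
    linarith
  · obtain ⟨m, hm⟩ := hC.bddBelow_image continuous_snd.continuousOn
    set t := (|α - m| + 1) / δ
    refine ⟨-t • ψ, fun p hp => ?_⟩
    have hψp : ψ (p.1 - w) < -δ := by simpa using hψ p hp
    have htδ : t * δ = |α - m| + 1 := div_mul_cancel₀ _ hδ.ne'
    have htψ := mul_lt_mul_of_pos_left (lt_neg.1 hψp) (by positivity : 0 < t)
    rw [_root_.smul_apply, smul_eq_mul]
    linarith [le_abs_self (α - m), hm ⟨p, hp, rfl⟩]

end Separation

section LinearProgramming

variable {m n : Type*} [Fintype m] [Fintype n]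

theorem mulVec_add_dotProduct {R : Type*} [CommSemiring R] (Q : Matrix m n R) (q : m → R)
    (ξ : n → R) (x : m → R) : (Q *ᵥ ξ + q) ⬝ᵥ x = ξ ⬝ᵥ (Qᵀ *ᵥ x) + q ⬝ᵥ x := by
  rw [add_dotProduct, dotProduct_comm, dotProduct_mulVec, mulVec_transpose, dotProduct_comm]

theorem bddBelow_setOf_dotProduct_of_isCompact {X : Set (m → ℝ)} (hX : IsCompact X)
    (a : m → ℝ) : BddBelow {c | ∃ x ∈ X, c = a ⬝ᵥ x} := by
  obtain ⟨b, hb⟩ := hX.bddBelow_image (continuous_const.dotProduct continuous_id).continuousOn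
  exact ⟨b, by rintro _ ⟨x, hx, rfl⟩; exact hb ⟨x, hx, rfl⟩⟩

theorem iSup_dotProduct_add_sInf_le_sInf {X : Set (m → ℝ)} (hX : IsCompact X)
    (Q : Matrix m n ℝ) (q : m → ℝ) (z : n → ℝ) :
    ⨆ ξ : n → ℝ, ((z ⬝ᵥ ξ + sInf {c | ∃ x ∈ X, c = (Q *ᵥ ξ + q) ⬝ᵥ x} : ℝ) : EReal) ≤
      sInf {c : EReal | ∃ x ∈ X, Qᵀ *ᵥ x = -z ∧ c = (q ⬝ᵥ x : ℝ)} := by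
  refine iSup_le fun ξ => le_sInf ?_
  rintro _ ⟨x, hx, hQx, rfl⟩
  have hle : sInf {c | ∃ x ∈ X, c = (Q *ᵥ ξ + q) ⬝ᵥ x} ≤ (Q *ᵥ ξ + q) ⬝ᵥ x :=
    csInf_le (bddBelow_setOf_dotProduct_of_isCompact hX _) ⟨x, hx, rfl⟩
  rw [mulVec_add_dotProduct, hQx, dotProduct_neg, dotProduct_comm] at hle
  exact EReal.coe_le_coe_iff.2 (by linarith)

theorem sInf_le_iSup_dotProduct_add_sInf {X : Set (m → ℝ)} (hne : X.Nonempty)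
    (hX : IsCompact X) (hXc : Convex ℝ X) (Q : Matrix m n ℝ) (q : m → ℝ) (z : n → ℝ) :
    sInf {c : EReal | ∃ x ∈ X, Qᵀ *ᵥ x = -z ∧ c = (q ⬝ᵥ x : ℝ)} ≤
      ⨆ ξ : n → ℝ, ((z ⬝ᵥ ξ + sInf {c | ∃ x ∈ X, c = (Q *ᵥ ξ + q) ⬝ᵥ x} : ℝ) : EReal) := by
  classical
  refine EReal.ge_of_forall_gt_iff_ge.1 fun α hα => ?_
  set L := Qᵀ.mulVecLin.prod (dotProductBilin ℝ ℝ q)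
  obtain ⟨φ, hφ⟩ := exists_dual_lt_add_of_isCompact (hX.image L.continuous_of_finiteDimensional)
    (hXc.linear_image L) (w := -z) (α := α) <| by
      rintro _ ⟨x, hx, rfl⟩ hQx
      exact EReal.coe_lt_coe_iff.1 (hα.trans_le (sInf_le ⟨x, hx, hQx, rfl⟩))
  set ξ := (dotProductEquiv ℝ n).symm φ.toLinearMap
  have hφξ (v : n → ℝ) : φ v = ξ ⬝ᵥ v :=
    (LinearMap.congr_fun ((dotProductEquiv ℝ n).apply_symm_apply φ.toLinearMap) v).symm
  refine le_iSup_of_le ξ (EReal.coe_le_coe_iff.2 ?_)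
  rw [← sub_le_iff_le_add']
  refine le_csInf ⟨_, hne.some, hne.some_mem, rfl⟩ ?_
  rintro _ ⟨x, hx, rfl⟩
  have hlt : α < φ (Qᵀ *ᵥ x - -z) + q ⬝ᵥ x := hφ _ ⟨x, hx, rfl⟩
  rw [hφξ, sub_neg_eq_add, dotProduct_add] at hlt
  rw [mulVec_add_dotProduct, dotProduct_comm z]
  linarith

end LinearProgramming

theorem lp_value_function_conjugate_general
    (N J S : ℕ)
    (W0 : Matrix (Fin S) (Fin J) ℝ) (R : Fin S → ℝ)
    (Q : Matrix (Fin J) (Fin N) ℝ) (q : Fin J → ℝ) (z : Fin N → ℝ)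
    (hXne : { x : Fin J → ℝ | ∀ s, R s ≤ W0.mulVec x s }.Nonempty)
    (hXcomp : IsCompact { x : Fin J → ℝ | ∀ s, R s ≤ W0.mulVec x s }) :
    let X : Set (Fin J → ℝ) := { x | ∀ s, R s ≤ W0.mulVec x s }
    (⨆ (ξ : Fin N → ℝ),
        ((((∑ n, z n * ξ n)
            + sInf { c : ℝ | ∃ x ∈ X, c = ∑ j, (Q.mulVec ξ j + q j) * x j } : ℝ)) : EReal))
      = sInf { c : EReal | ∃ x ∈ X, Qᵀ.mulVec x = -z ∧
          c = ((∑ j, q j * x j : ℝ) : EReal) } := by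
  intro X
  have hXc : Convex ℝ X := (convex_Ici R).linear_preimage W0.mulVecLin
  exact le_antisymm (iSup_dotProduct_add_sInf_le_sInf hXcomp Q q z)
    (sInf_le_iSup_dotProduct_add_sInf hXne hXcomp hXc Q q z)

/-- Conjugate of the linear-programming value function
(claim in the proof of Theorem 6). -/
theorem lp_value_function_conjugate
    (N J S : ℕ) (hN : 0 < N) (hJ : 0 < J) (hS : 0 < S)
    (W0 : Matrix (Fin S) (Fin J) ℝ) (R : Fin S → ℝ)
    (Q : Matrix (Fin J) (Fin N) ℝ) (q : Fin J → ℝ) (z : Fin N → ℝ)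
    (hXne : { x : Fin J → ℝ | ∀ s, R s ≤ W0.mulVec x s }.Nonempty)
    (hXcomp : IsCompact { x : Fin J → ℝ | ∀ s, R s ≤ W0.mulVec x s }) :
    let X : Set (Fin J → ℝ) := { x | ∀ s, R s ≤ W0.mulVec x s }
    (⨆ (ξ : Fin N → ℝ),
        ((((∑ n, z n * ξ n)
            + sInf { c : ℝ | ∃ x ∈ X, c = ∑ j, (Q.mulVec ξ j + q j) * x j } : ℝ)) : EReal))
      = sInf { c : EReal | ∃ x ∈ X, Qᵀ.mulVec x = -z ∧
          c = ((∑ j, q j * x j : ℝ) : EReal) } :=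
  lp_value_function_conjugate_general N J S W0 R Q q z hXne hXcomp
end
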